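/- arXiv:2605.29147 — 5 statements merged into one kernel-verified Lean document; each statement's English description precedes it below -/
import Mathlib

section
/- Let R be a commutative ring, r ≥ 2, λ ∈ R, and let J_r(λ) ∈ Mat_{r×r}(R) be the Jordan block with eigenvalue λ. Then the ideal I_{J_r(λ)} of R[z₁,…,z_r] equals H_r, the ideal generated by the 2×2 minors z_i z_{j+1} − z_j z_{i+1} (for 1 ≤ i < j ≤ r−1) of the 2×(r−1) matrix with rows (z₁,…,z_{r−1}) and (z₂,…,z_r), together with the monomials z_i z_r for 2 ≤ i ≤ r. -/
open MvPolynomial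

/-- The variable `z_{k+1}` (0-based index `k`) of `R[z₁,…,z_r]`, or `0` if `k ≥ r`. -/
noncomputable def Zv (R : Type*) [CommRing R] (r k : ℕ) : MvPolynomial (Fin r) R :=
  if h : k < r then X ⟨k, h⟩ else 0

/-- The ideal `I_M` of `R[z₁,…,z_r]` generated by `∑ₖ z_k (M_{jk} z_i − M_{ik} z_j)`
for all pairs `i < j`. -/
noncomputable def higgsIdeal {R : Type*} [CommRing R] {r : ℕ}
    (M : Matrix (Fin r) (Fin r) R) : Ideal (MvPolynomial (Fin r) R) :=
  Ideal.span { p | ∃ i j : Fin r, i < j ∧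
    p = ∑ k : Fin r, X k * (C (M j k) * X i - C (M i k) * X j) }

/-- The `r×r` Jordan block with eigenvalue `lam`. -/
def jordanBlock (R : Type*) [CommRing R] (r : ℕ) (lam : R) : Matrix (Fin r) (Fin r) R :=
  Matrix.of fun i j => if (i : ℕ) = (j : ℕ) then lam
    else if (j : ℕ) = (i : ℕ) + 1 then 1 else 0

/-- The ideal `H_r`: the `2×2` minors `z_i z_{j+1} − z_j z_{i+1}` (`1 ≤ i < j ≤ r−1`,
here written 0-based) of the matrix with rows `(z₁,…,z_{r−1})`, `(z₂,…,z_r)`,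
together with the monomials `z_i z_r` for `2 ≤ i ≤ r`. -/
noncomputable def Hideal (R : Type*) [CommRing R] (r : ℕ) : Ideal (MvPolynomial (Fin r) R) :=
  Ideal.span ({ p | ∃ a b : ℕ, a < b ∧ b + 1 < r ∧
      p = Zv R r a * Zv R r (b + 1) - Zv R r b * Zv R r (a + 1) } ∪
    { p | ∃ a : ℕ, 1 ≤ a ∧ a < r ∧ p = Zv R r a * Zv R r (r - 1) })


/-!
For any `M`, the generators of `I_M` are the `2×2` minors of the `2×r` matrix with rows `z` and
`M z`. For the Jordan block, `J z = λ z + (z₂,…,z_r,0)` and the `λ z` part is a row operation, so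
`I_J` is generated by the minors of the rows `z` and `(z₂,…,z_r,0)`. Those involving the last
column are `−z_{i+1} z_r`, the monomials of `H_r`; the others are the minors defining `H_r`.
-/

open scoped Matrix

section

variable {R : Type*} [CommRing R] {r : ℕ}

lemma sum_X_mul_sub_eq_minor (M : Matrix (Fin r) (Fin r) R) (i j : Fin r) :
    ∑ k : Fin r, X k * (C (M j k) * X i - C (M i k) * X j) =
      X i * (M.map C *ᵥ X) j - X j * (M.map C *ᵥ X) i := by
  simp only [Matrix.mulVec, dotProduct, Matrix.map_apply, Finset.mul_sum, ← Finset.sum_sub_distrib]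
  exact Finset.sum_congr rfl fun k _ => by ring

lemma Zv_val (i : Fin r) : Zv R r i = X i := dif_pos i.isLt

lemma Zv_of_le {k : ℕ} (h : r ≤ k) : Zv R r k = 0 := dif_neg (by omega)

lemma jordanBlock_map_C_mulVec_X (lam : R) (j : Fin r) :
    ((jordanBlock R r lam).map C *ᵥ X) j = C lam * X j + Zv R r (j + 1) := by
  have entry : ∀ k : Fin r, jordanBlock R r lam j k =
      (if j = k then lam else 0) + (if (k : ℕ) = j + 1 then 1 else 0) := by
    intro k
    simp only [jordanBlock, Matrix.of_apply, Fin.val_inj]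
    split_ifs <;> first | omega | simp_all
  simp only [Matrix.mulVec, dotProduct, Matrix.map_apply, entry, map_add, add_mul,
    Finset.sum_add_distrib, apply_ite C, map_zero, ite_mul, zero_mul, Finset.sum_ite_eq,
    Finset.mem_univ, if_true, map_one, one_mul]
  congr 1
  by_cases h : (j : ℕ) + 1 < r
  · rw [Zv, dif_pos h, Finset.sum_eq_single ⟨(j : ℕ) + 1, h⟩] <;> simp +contextual [Fin.ext_iff]
  · rw [Zv_of_le (not_lt.mp h)]
    exact Finset.sum_eq_zero fun k _ => if_neg (by omega)

lemma sum_X_mul_sub_jordanBlock (lam : R) (i j : Fin r) :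
    ∑ k : Fin r, X k * (C (jordanBlock R r lam j k) * X i - C (jordanBlock R r lam i k) * X j) =
      Zv R r i * Zv R r (j + 1) - Zv R r j * Zv R r (i + 1) := by
  rw [sum_X_mul_sub_eq_minor, jordanBlock_map_C_mulVec_X, jordanBlock_map_C_mulVec_X,
    Zv_val, Zv_val]
  ring

def shiftMinors (R : Type*) [CommRing R] (r : ℕ) : Set (MvPolynomial (Fin r) R) :=
  { p | ∃ a b : ℕ, a < b ∧ b < r ∧ p = Zv R r a * Zv R r (b + 1) - Zv R r b * Zv R r (a + 1) }

lemma higgsIdeal_jordanBlock_eq_span_shiftMinors (lam : R) :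
    higgsIdeal (jordanBlock R r lam) = Ideal.span (shiftMinors R r) := by
  rw [higgsIdeal]
  congr 1
  ext p
  simp only [Set.mem_ofPred_eq, sum_X_mul_sub_jordanBlock, shiftMinors]
  constructor
  · rintro ⟨i, j, hij, rfl⟩
    exact ⟨i, j, hij, j.isLt, rfl⟩
  · rintro ⟨a, b, hab, hb, rfl⟩
    exact ⟨⟨a, hab.trans hb⟩, ⟨b, hb⟩, hab, rfl⟩

lemma Hideal_eq_span_shiftMinors : Hideal R r = Ideal.span (shiftMinors R r) := by
  rw [Hideal]
  apply le_antisymm <;> rw [Ideal.span_le]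
  · rintro p (⟨a, b, hab, hb, rfl⟩ | ⟨a, ha, har, rfl⟩)
    · exact Ideal.subset_span ⟨a, b, hab, by omega, rfl⟩
    · have hminor : Zv R r (a - 1) * Zv R r (r - 1 + 1) - Zv R r (r - 1) * Zv R r (a - 1 + 1) =
          -(Zv R r a * Zv R r (r - 1)) := by
        rw [Zv_of_le (k := r - 1 + 1) (by omega), Nat.sub_add_cancel ha]
        ring
      rw [← neg_neg (Zv R r a * _), ← hminor]
      exact neg_mem (Ideal.subset_span ⟨a - 1, r - 1, by omega, by omega, rfl⟩)
  · rintro p ⟨a, b, hab, hb, rfl⟩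
    by_cases hb' : b + 1 < r
    · exact Ideal.subset_span (Or.inl ⟨a, b, hab, hb', rfl⟩)
    · obtain rfl : b = r - 1 := by omega
      rw [Zv_of_le (k := r - 1 + 1) (by omega), mul_zero, zero_sub, mul_comm]
      exact neg_mem (Ideal.subset_span (Or.inr ⟨a + 1, by omega, by omega, rfl⟩))

end

theorem stmt1_general {R : Type*} [CommRing R] {r : ℕ} (lam : R) :
    higgsIdeal (jordanBlock R r lam) = Hideal R r := by
  rw [higgsIdeal_jordanBlock_eq_span_shiftMinors, Hideal_eq_span_shiftMinors]

/-- Lemma 3.3: the Higgs Grassmannian ideal of a single Jordan block equals `H_r`. -/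
theorem stmt1 {R : Type*} [CommRing R] {r : ℕ} (hr : 2 ≤ r) (lam : R) :
    higgsIdeal (jordanBlock R r lam) = Hideal R r :=
  stmt1_general lam
end

section
/- Let r ≥ 2 and let H_r be the ideal of ℂ[z₁,…,z_r] generated by the 2×2 minors z_i z_{j+1} − z_j z_{i+1} (for 1 ≤ i < j ≤ r−1) of the 2×(r−1) matrix with rows (z₁,…,z_{r−1}) and (z₂,…,z_r), together with the monomials z_i z_r for 2 ≤ i ≤ r. Then: (a) the radical of H_r is the ideal (z₂,…,z_r); (b) the quotient ring ℂ[z₁,…,z_r]/(H_r + (z₁ − 1)) is isomorphic as a ℂ-algebra to ℂ[t]/(t^r); in particular it is a local ring of ℂ-dimension r. (Thus each fiber of the rank-1 Higgs Grassmannian of a single Jordan block is a curvilinear zero-dimensional scheme of degree r supported at a single point.) -/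
/-!
In the paper's 1-based indexing: modulo `H_r` the minors give `z_k² ≡ z_{k-1} z_{k+1}` and
the monomials give `z_r² ≡ 0`, so by downward induction on `k` every `z_k` with `k ≥ 2` lies
in `√H_r`; conversely `H_r` lies in the radical ideal `(z₂,…,z_r)`. On the chart `z₁ = 1` the
minors with `i = 1` read `z_{k+1} = z_k z₂`, so `z_k = z₂^(k-1)`, and the only relation left
is `z₂^r = z₂ z_r = 0`: the fiber is `ℂ[t]/(t^r)` with `t = z₂`, a local ring since its
maximal ideal `(t)` is nilpotent.
-/

open MvPolynomial

open scoped Polynomial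

section Generators

variable {R : Type*} [CommRing R] {r : ℕ}

lemma Zv_of_lt {k : ℕ} (h : k < r) : Zv R r k = X ⟨k, h⟩ := dif_pos h

lemma minor_mem_Hideal {a b : ℕ} (hab : a < b) (hb : b + 1 < r) :
    Zv R r a * Zv R r (b + 1) - Zv R r b * Zv R r (a + 1) ∈ Hideal R r :=
  Ideal.subset_span (Or.inl ⟨a, b, hab, hb, rfl⟩)

lemma mul_Zv_last_mem_Hideal {a : ℕ} (h1 : 1 ≤ a) (h2 : a < r) :
    Zv R r a * Zv R r (r - 1) ∈ Hideal R r :=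
  Ideal.subset_span (Or.inr ⟨a, h1, h2, rfl⟩)

end Generators

section Radical

variable (R : Type*) [CommRing R] (r : ℕ)

/-- The ideal `(z₂,…,z_r)` of the point `[1 : 0 : ⋯ : 0]`. -/
noncomputable abbrev pointIdeal : Ideal (MvPolynomial (Fin r) R) :=
  Ideal.span {p | ∃ k : ℕ, 1 ≤ k ∧ k < r ∧ p = Zv R r k}

noncomputable def killTail : MvPolynomial (Fin r) R →ₐ[R] MvPolynomial (Fin r) R :=
  aeval fun i => if (i : ℕ) = 0 then X i else 0

variable {R r}

lemma X_mem_pointIdeal {i : Fin r} (hi : (i : ℕ) ≠ 0) : X i ∈ pointIdeal R r :=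
  Ideal.subset_span ⟨i, Nat.one_le_iff_ne_zero.2 hi, i.isLt, (Zv_of_lt i.isLt).symm⟩

lemma sub_killTail_mem_pointIdeal (p : MvPolynomial (Fin r) R) :
    p - killTail R r p ∈ pointIdeal R r := by
  induction p using MvPolynomial.induction_on with
  | C a => simp
  | add p q hp hq =>
    rw [map_add, add_sub_add_comm]
    exact add_mem hp hq
  | mul_X p i hp =>
    by_cases hi : (i : ℕ) = 0
    · rw [map_mul, killTail, aeval_X, if_pos hi, ← sub_mul]
      exact Ideal.mul_mem_right _ _ hp
    · rw [map_mul, killTail, aeval_X, if_neg hi, mul_zero, sub_zero]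
      exact Ideal.mul_mem_left _ _ (X_mem_pointIdeal hi)

lemma pointIdeal_eq_ker_killTail : pointIdeal R r = RingHom.ker (killTail R r) := by
  refine le_antisymm (Ideal.span_le.2 ?_) fun p hp => ?_
  · rintro _ ⟨k, hk1, hk2, rfl⟩
    simp [Zv_of_lt hk2, killTail, show k ≠ 0 by omega]
  · simpa [RingHom.mem_ker.1 hp] using sub_killTail_mem_pointIdeal p

lemma pointIdeal_isRadical [IsReduced R] : (pointIdeal R r).IsRadical := by
  rintro p ⟨n, hn⟩
  rw [pointIdeal_eq_ker_killTail, RingHom.mem_ker, map_pow] at hn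
  rw [pointIdeal_eq_ker_killTail, RingHom.mem_ker]
  exact IsNilpotent.eq_zero ⟨n, hn⟩

lemma Hideal_le_pointIdeal : Hideal R r ≤ pointIdeal R r := by
  have mem {k : ℕ} (hk1 : 1 ≤ k) (hk2 : k < r) : Zv R r k ∈ pointIdeal R r :=
    Ideal.subset_span ⟨k, hk1, hk2, rfl⟩
  refine Ideal.span_le.2 ?_
  rintro _ (⟨a, b, hab, hb, rfl⟩ | ⟨a, h1, h2, rfl⟩)
  · exact sub_mem (Ideal.mul_mem_left _ _ (mem (by omega) hb))
      (Ideal.mul_mem_right _ _ (mem (by omega) (by omega)))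
  · exact Ideal.mul_mem_left _ _ (mem (by omega) (by omega))

lemma Zv_mem_radical_Hideal {k : ℕ} (hk : 1 ≤ k) : Zv R r k ∈ (Hideal R r).radical := by
  rcases lt_trichotomy (k + 1) r with hlt | heq | hgt
  · obtain ⟨j, rfl⟩ : ∃ j, k = j + 1 := ⟨k - 1, by omega⟩
    have hnext : Zv R r (j + 2) ∈ (Hideal R r).radical := Zv_mem_radical_Hideal (by omega)
    have hsq : Zv R r (j + 1) ^ 2 ∈ (Hideal R r).radical := by
      rw [sq, ← sub_sub_cancel (Zv R r j * Zv R r (j + 2)) (Zv R r (j + 1) * Zv R r (j + 1))]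
      exact sub_mem (Ideal.mul_mem_left _ _ hnext)
        (Ideal.le_radical (minor_mem_Hideal (R := R) (by omega) hlt))
    exact Ideal.radical_isRadical _ ⟨2, hsq⟩
  · exact ⟨2, by simpa [sq, show r - 1 = k by omega] using
      mul_Zv_last_mem_Hideal (R := R) hk (by omega : k < r)⟩
  · simp [Zv, show ¬k < r by omega]
termination_by r - k

theorem radical_Hideal [IsReduced R] : (Hideal R r).radical = pointIdeal R r :=
  le_antisymm (pointIdeal_isRadical.radical_le_iff.2 Hideal_le_pointIdeal)
    (Ideal.span_le.2 fun _ ⟨_, hk, _, hp⟩ => hp ▸ Zv_mem_radical_Hideal hk)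

end Radical

section Fiber

variable (R : Type*) [CommRing R] (r : ℕ)

noncomputable abbrev fiberIdeal : Ideal (MvPolynomial (Fin r) R) :=
  Hideal R r + Ideal.span {Zv R r 0 - 1}

noncomputable abbrev truncIdeal : Ideal R[X] := Ideal.span {Polynomial.X ^ r}

variable {R r}

local notation "mkF" => Ideal.Quotient.mk (fiberIdeal R r)

lemma Hideal_le_fiberIdeal : Hideal R r ≤ fiberIdeal R r := le_sup_left

lemma mk_Zv_zero : mkF (Zv R r 0) = 1 := by
  rw [← sub_eq_zero, ← map_one mkF, ← map_sub, Ideal.Quotient.eq_zero_iff_mem]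
  exact Ideal.mem_sup_right (Ideal.mem_span_singleton_self _)

lemma mk_Zv_eq_pow {k : ℕ} (hk : k < r) : mkF (Zv R r k) = mkF (Zv R r 1) ^ k := by
  induction k with
  | zero => exact mk_Zv_zero
  | succ k ih =>
    rcases Nat.eq_zero_or_pos k with rfl | hk0
    · rw [pow_one]
    have hminor := Ideal.Quotient.eq_zero_iff_mem.2
      (Hideal_le_fiberIdeal (minor_mem_Hideal (R := R) hk0 hk))
    rw [map_sub, map_mul, map_mul, mk_Zv_zero, one_mul, sub_eq_zero] at hminor
    rw [hminor, ih (by omega), pow_succ]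

lemma mk_Zv_one_pow_eq_zero (hr : 2 ≤ r) : mkF (Zv R r 1) ^ r = 0 := by
  have hlast := Ideal.Quotient.eq_zero_iff_mem.2
    (Hideal_le_fiberIdeal (mul_Zv_last_mem_Hideal (R := R) le_rfl (by omega : 1 < r)))
  rwa [map_mul, mk_Zv_eq_pow (k := r - 1) (by omega), ← pow_succ',
    Nat.sub_add_cancel (by omega)] at hlast

variable (R r)

noncomputable def fiberToTrunc (hr : 0 < r) :
    MvPolynomial (Fin r) R ⧸ fiberIdeal R r →ₐ[R] R[X] ⧸ truncIdeal R r :=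
  Ideal.Quotient.liftₐ _ (aeval fun i => Ideal.Quotient.mk _ Polynomial.X ^ (i : ℕ)) <| by
    have hZv {k : ℕ} (hk : k < r) : aeval (fun i : Fin r => Ideal.Quotient.mk (truncIdeal R r)
        Polynomial.X ^ (i : ℕ)) (Zv R r k) = Ideal.Quotient.mk _ Polynomial.X ^ k := by
      rw [Zv_of_lt hk, aeval_X]
    have htrunc : Ideal.Quotient.mk (truncIdeal R r) Polynomial.X ^ r = 0 := by
      rw [← map_pow, Ideal.Quotient.eq_zero_iff_mem]
      exact Ideal.mem_span_singleton_self _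
    suffices fiberIdeal R r ≤ RingHom.ker _ from fun p hp => this hp
    refine sup_le (Ideal.span_le.2 ?_) (Ideal.span_le.2 ?_)
    · rintro _ (⟨a, b, hab, hb, rfl⟩ | ⟨a, h1, h2, rfl⟩)
      · simp only [SetLike.mem_coe, RingHom.mem_ker, map_sub, map_mul]
        rw [hZv (k := a) (by omega), hZv hb, hZv (k := b) (by omega),
          hZv (k := a + 1) (by omega), ← pow_add, ← pow_add,
          show a + (b + 1) = b + (a + 1) by omega, sub_self]
      · simp only [SetLike.mem_coe, RingHom.mem_ker, map_mul]
        rw [hZv h2, hZv (k := r - 1) (by omega), ← pow_add,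
          show a + (r - 1) = r + (a - 1) by omega, pow_add, htrunc, zero_mul]
    · rintro _ rfl
      simp only [SetLike.mem_coe, RingHom.mem_ker, map_sub, map_one]
      rw [hZv hr, pow_zero, sub_self]

noncomputable def truncToFiber (hr : 2 ≤ r) :
    R[X] ⧸ truncIdeal R r →ₐ[R] MvPolynomial (Fin r) R ⧸ fiberIdeal R r :=
  Ideal.Quotient.liftₐ _ (Polynomial.aeval (mkF (Zv R r 1))) fun p hp => by
    obtain ⟨c, rfl⟩ := Ideal.mem_span_singleton'.1 hp
    rw [map_mul, map_pow, Polynomial.aeval_X, mk_Zv_one_pow_eq_zero hr, mul_zero]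

lemma fiberToTrunc_mk (hr : 0 < r) (p : MvPolynomial (Fin r) R) :
    fiberToTrunc R r hr (mkF p) =
      aeval (fun i : Fin r => Ideal.Quotient.mk _ Polynomial.X ^ (i : ℕ)) p :=
  rfl

lemma truncToFiber_mk (hr : 2 ≤ r) (p : R[X]) :
    truncToFiber R r hr (Ideal.Quotient.mk _ p) = Polynomial.aeval (mkF (Zv R r 1)) p :=
  rfl

noncomputable def fiberAlgEquivTrunc (hr : 2 ≤ r) :
    (MvPolynomial (Fin r) R ⧸ fiberIdeal R r) ≃ₐ[R] R[X] ⧸ truncIdeal R r :=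
  AlgEquiv.ofAlgHom (fiberToTrunc R r (by omega)) (truncToFiber R r hr)
    (by
      apply Ideal.Quotient.algHom_ext
      ext
      simp only [AlgHom.comp_apply, AlgHom.id_apply, Ideal.Quotient.mkₐ_eq_mk]
      rw [truncToFiber_mk, Polynomial.aeval_X, fiberToTrunc_mk, Zv_of_lt (by omega : 1 < r),
        aeval_X, pow_one])
    (by
      apply Ideal.Quotient.algHom_ext
      ext i
      simp only [AlgHom.comp_apply, AlgHom.id_apply, Ideal.Quotient.mkₐ_eq_mk]
      rw [fiberToTrunc_mk, aeval_X, map_pow, truncToFiber_mk, Polynomial.aeval_X,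
        ← mk_Zv_eq_pow i.isLt, Zv_of_lt i.isLt])

end Fiber

lemma isLocalRing_of_le_nilradical {A : Type*} [CommRing A] (m : Ideal A) [m.IsMaximal]
    (h : m ≤ nilradical A) : IsLocalRing A := by
  have : (nilradical A).IsMaximal := le_antisymm (nilradical_le_prime m) h ▸ ‹m.IsMaximal›
  exact IsLocalRing.of_isMaximal_nilradical A

lemma isLocalRing_truncated {K : Type*} [Field K] {n : ℕ} (hn : n ≠ 0) :
    IsLocalRing (K[X] ⧸ truncIdeal K n) := by
  let ε : K[X] ⧸ truncIdeal K n →+* K :=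
    Ideal.Quotient.lift _ (Polynomial.evalRingHom 0) fun p hp => by
      obtain ⟨c, rfl⟩ := Ideal.mem_span_singleton'.1 hp
      simp [hn]
  have : (RingHom.ker ε).IsMaximal :=
    RingHom.ker_isMaximal_of_surjective ε fun a =>
      ⟨Ideal.Quotient.mk _ (Polynomial.C a), by simp [ε]⟩
  refine isLocalRing_of_le_nilradical (RingHom.ker ε) fun a ha => ?_
  obtain ⟨p, rfl⟩ := Ideal.Quotient.mk_surjective a
  obtain ⟨q, rfl⟩ : Polynomial.X ∣ p := by
    simpa [Polynomial.X_dvd_iff, Polynomial.coeff_zero_eq_eval_zero, ε] using ha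
  refine mem_nilradical.2 ⟨n, ?_⟩
  rw [← map_pow, Ideal.Quotient.eq_zero_iff_mem, mul_pow]
  exact Ideal.mul_mem_right _ _ (Ideal.mem_span_singleton_self _)

/-- (a) `√H_r = (z₂,…,z_r)`; (b) `ℂ[z]/(H_r + (z₁ − 1)) ≅ ℂ[t]/(t^r)`, a local ring
of `ℂ`-dimension `r`. -/
theorem stmt2 (r : ℕ) (hr : 2 ≤ r) :
    (Hideal ℂ r).radical = Ideal.span { p | ∃ k : ℕ, 1 ≤ k ∧ k < r ∧ p = Zv ℂ r k } ∧
    Nonempty ((MvPolynomial (Fin r) ℂ ⧸ (Hideal ℂ r + Ideal.span {Zv ℂ r 0 - 1})) ≃ₐ[ℂ]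
      (Polynomial ℂ ⧸ Ideal.span {(Polynomial.X : Polynomial ℂ) ^ r})) ∧
    IsLocalRing (MvPolynomial (Fin r) ℂ ⧸ (Hideal ℂ r + Ideal.span {Zv ℂ r 0 - 1})) ∧
    Module.finrank ℂ (MvPolynomial (Fin r) ℂ ⧸ (Hideal ℂ r + Ideal.span {Zv ℂ r 0 - 1})) = r := by
  let e := fiberAlgEquivTrunc ℂ r hr
  have : IsLocalRing (ℂ[X] ⧸ truncIdeal ℂ r) := isLocalRing_truncated (by omega)
  refine ⟨radical_Hideal, ⟨e⟩, e.symm.toRingEquiv.isLocalRing, ?_⟩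
  rw [e.toLinearEquiv.finrank_eq, finrank_quotient_span_eq_natDegree, Polynomial.natDegree_X_pow]
end

section
/- Let s ≥ 1, let i₁ > i₂ > … > i_s ≥ 1 be integers, let m₁,…,m_s ≥ 1, set r = ∑_{v=1}^s m_v i_v, and let λ ∈ ℂ. Let 𝒜 be the family of consecutive intervals partitioning {1,…,r}: first m₁ intervals of length i₁, then m₂ intervals of length i₂, and so on, and let φ ∈ Mat_{r×r}(ℂ) be block diagonal with Jordan blocks J_{|A|}(λ) along the intervals A ∈ 𝒜. For each v = 1,…,s define: 𝒜_v = the family of intervals consisting of the first i_v elements of each A ∈ 𝒜 with |A| ≥ i_v; ℒ_v = {1,…,r} \ ⋃_{A'∈𝒜_v} A'; ℬ_v = ⋃_{A'∈𝒜_v} (A' \ {min A'}); 𝒞_v = {max A' : A' ∈ 𝒜_v}. Then the ideal I_φ of ℂ[z₁,…,z_r] satisfies I_φ = ⋂_{v=1}^s I_{V_v}, where I_{V_v} = (z_j : j ∈ ℒ_v) + (z_b z_c : b ∈ ℬ_v, c ∈ 𝒞_v) + I_{𝒜_v}, and I_{𝒜_v} is generated by the binomials z_a z_{b+1} − z_b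 z_{a+1} for all a, b such that {a, a+1} lies in some interval of 𝒜_v and {b, b+1} lies in some (possibly different or equal) interval of 𝒜_v. -/
open MvPolynomial

/-- The (0-based) starting indices of the consecutive intervals of lengths given by `L`. -/
def starts (L : List ℕ) : List ℕ := (List.range L.length).map fun t => (L.take t).sum

/-- The consecutive intervals of lengths given by `L`, encoded as (start, length) pairs. -/
def blocksOf (L : List ℕ) : List (ℕ × ℕ) := (starts L).zip L

/-- The block-diagonal matrix whose diagonal blocks are Jordan blocks with the single
eigenvalue `lam`, along the consecutive intervals of lengths given by `L`. -/
noncomputable def jordanBlocks (R : Type*) [CommRing R] (r : ℕ) (L : List ℕ) (lam : R) :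
    Matrix (Fin r) (Fin r) R :=
  Matrix.of fun a b =>
    if (a : ℕ) = (b : ℕ) then lam
    else if (b : ℕ) = (a : ℕ) + 1 ∧ (b : ℕ) ∉ starts L then 1 else 0

/-- The family `𝒜_v` attached to a size `k`: the intervals consisting of the first `k`
elements of each block of `L` of length `≥ k`. -/
def subFam (L : List ℕ) (k : ℕ) : List (ℕ × ℕ) :=
  (blocksOf L).filterMap fun q => if k ≤ q.2 then some (q.1, k) else none

/-- The ideal `I_{V} = (z_j : j ∈ ℒ) + (z_b z_c : b ∈ ℬ, c ∈ 𝒞) + I_𝒜` attached to a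
family `F` of disjoint intervals (all indices 0-based): `ℒ` = indices outside all
intervals, `ℬ` = non-minimal elements of intervals, `𝒞` = maxima of intervals, and
`I_𝒜` generated by `z_a z_{b+1} − z_b z_{a+1}` for `a, a+1` in a common interval of `F`
and `b, b+1` in a common interval of `F`. -/
noncomputable def famIdeal (r : ℕ) (F : List (ℕ × ℕ)) : Ideal (MvPolynomial (Fin r) ℂ) :=
  Ideal.span { p | ∃ j : ℕ, j < r ∧ (∀ q ∈ F, ¬ (q.1 ≤ j ∧ j < q.1 + q.2)) ∧ p = Zv ℂ r j } +
  Ideal.span { p | ∃ b c : ℕ, (∃ q ∈ F, q.1 < b ∧ b < q.1 + q.2) ∧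
      (∃ q ∈ F, c = q.1 + q.2 - 1) ∧ p = Zv ℂ r b * Zv ℂ r c } +
  Ideal.span { p | ∃ a b : ℕ, (∃ q ∈ F, q.1 ≤ a ∧ a + 1 < q.1 + q.2) ∧
      (∃ q ∈ F, q.1 ≤ b ∧ b + 1 < q.1 + q.2) ∧
      p = Zv ℂ r a * Zv ℂ r (b + 1) - Zv ℂ r b * Zv ℂ r (a + 1) }

namespace Stmt4Aux

/-! ### Block combinatorics on ℕ -/

def posL : List ℕ → ℕ → ℕ
  | [], j => j
  | a :: t, j => if j < a then j else posL t (j - a)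

def lenL : List ℕ → ℕ → ℕ
  | [], _ => 0
  | a :: t, j => if j < a then a else lenL t (j - a)

def stL : List ℕ → ℕ → ℕ
  | [], _ => 0
  | a :: t, j => if j < a then 0 else a + stL t (j - a)

lemma stL_le (L : List ℕ) (j : ℕ) : stL L j ≤ j := by
  induction L generalizing j with
  | nil => simp [stL]
  | cons a t ih =>
    simp only [stL]
    split
    · omega
    · have := ih (j - a); omega

lemma stL_add_posL (L : List ℕ) (j : ℕ) (hj : j < L.sum) : stL L j + posL L j = j := by
  induction L generalizing j with
  | nil => simp at hj
  | cons a t ih =>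
    simp only [stL, posL]
    split
    · omega
    · have := ih (j - a) (by simp at hj; omega); omega

lemma posL_lt_lenL (L : List ℕ) (j : ℕ) (hj : j < L.sum) : posL L j < lenL L j := by
  induction L generalizing j with
  | nil => simp at hj
  | cons a t ih =>
    simp only [posL, lenL]
    split
    · omega
    · exact ih (j - a) (by simp at hj; omega)

lemma stL_add_lenL_le (L : List ℕ) (j : ℕ) (hj : j < L.sum) : stL L j + lenL L j ≤ L.sum := by
  induction L generalizing j with
  | nil => simp at hj
  | cons a t ih =>
    simp only [stL, lenL]
    simp only [List.sum_cons] at hj ⊢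
    split
    · omega
    · have := ih (j - a) (by omega); omega

def IsBlock (L : List ℕ) (st ln : ℕ) : Prop :=
  ∃ t, t < L.length ∧ st = (L.take t).sum ∧ ln = L.getD t 0

lemma isBlock_of_lt (L : List ℕ) (j : ℕ) (hj : j < L.sum) : IsBlock L (stL L j) (lenL L j) := by
  induction L generalizing j with
  | nil => simp at hj
  | cons a t ih =>
    simp only [stL, lenL]
    by_cases h : j < a
    · rw [if_pos h, if_pos h]
      exact ⟨0, by simp, by simp, by simp⟩
    · rw [if_neg h, if_neg h]
      obtain ⟨u, hu, h1, h2⟩ := ih (j - a) (by simp at hj; omega)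
      exact ⟨u + 1, by simpa using hu, by simpa using h1, by simpa using h2⟩

lemma isBlock_determines_aux : ∀ (L : List ℕ) (t j : ℕ), t < L.length → (L.take t).sum ≤ j →
    j < (L.take t).sum + L.getD t 0 →
    stL L j = (L.take t).sum ∧ lenL L j = L.getD t 0 ∧ posL L j = j - (L.take t).sum
  | [], t, j, ht, _, _ => by simp at ht
  | a :: l, 0, j, ht, h1, h2 => by
      simp only [List.take_zero, List.sum_nil, List.getD_cons_zero] at h1 h2 ⊢
      simp [stL, lenL, posL, show j < a by omega]
  | a :: l, t+1, j, ht, h1, h2 => by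
      have hu : t < l.length := by simpa using ht
      simp only [List.take_succ_cons, List.sum_cons, List.getD_cons_succ] at h1 h2 ⊢
      have := isBlock_determines_aux l t (j - a) hu (by omega) (by omega)
      simp only [stL, lenL, posL, if_neg (show ¬ j < a by omega)]
      omega

lemma isBlock_determines (L : List ℕ) {st ln j : ℕ} (h : IsBlock L st ln)
    (h1 : st ≤ j) (h2 : j < st + ln) : stL L j = st ∧ lenL L j = ln ∧ posL L j = j - st := by
  obtain ⟨t, ht, rfl, rfl⟩ := h
  exact isBlock_determines_aux L t j ht h1 h2

lemma isBlock_st_add_len_le (L : List ℕ) {st ln : ℕ} (h : IsBlock L st ln) :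
    st + ln ≤ L.sum := by
  obtain ⟨t, ht, rfl, rfl⟩ := h
  have h1 : (L.take (t+1)).sum = (L.take t).sum + L.getD t 0 := by
    rw [List.sum_take_succ L t ht]; congr 1; exact (List.getD_eq_getElem L 0 ht).symm
  have h2 : (L.take (t+1)).sum + (L.drop (t+1)).sum = L.sum := by
    rw [← List.sum_append, List.take_append_drop]
  omega

lemma mem_starts_iff (L : List ℕ) (j : ℕ) :
    j ∈ starts L ↔ ∃ t, t < L.length ∧ j = (L.take t).sum := by
  simp only [starts, List.mem_map, List.mem_range]
  tauto

lemma stL_mem_starts (L : List ℕ) (j : ℕ) (hj : j < L.sum) : stL L j ∈ starts L := by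
  obtain ⟨t, ht, h1, _⟩ := isBlock_of_lt L j hj
  exact (mem_starts_iff L _).2 ⟨t, ht, h1⟩

lemma posL_eq_zero_of_mem_starts (L : List ℕ) (hpos : ∀ x ∈ L, 0 < x) (j : ℕ)
    (hj : j ∈ starts L) : posL L j = 0 ∧ j < L.sum := by
  obtain ⟨t, ht, rfl⟩ := (mem_starts_iff L j).1 hj
  have hb : IsBlock L ((L.take t).sum) (L.getD t 0) := ⟨t, ht, rfl, rfl⟩
  have hg : 0 < L.getD t 0 := by
    rw [List.getD_eq_getElem L 0 ht]; exact hpos _ (List.getElem_mem ht)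
  have := isBlock_determines L hb (le_refl _) (by omega)
  have hle := isBlock_st_add_len_le L hb
  exact ⟨by omega, by omega⟩

/-- key equivalence for the Jordan matrix superdiagonal -/
lemma succ_cond_iff (L : List ℕ) (hpos : ∀ x ∈ L, 0 < x) (j : ℕ) (hj : j < L.sum) :
    (j + 1 < L.sum ∧ j + 1 ∉ starts L) ↔ posL L j + 1 < lenL L j := by
  have hb := isBlock_of_lt L j hj
  have hsp := stL_add_posL L j hj
  have hpl := posL_lt_lenL L j hj
  have hle := isBlock_st_add_len_le L hb
  constructor
  · rintro ⟨h1, h2⟩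
    by_contra hc
    have hend : posL L j + 1 = lenL L j := by omega
    -- then j+1 = stL j + lenL j is a start or equals L.sum
    obtain ⟨t, ht, hst, hln⟩ := hb
    have hj1 : j + 1 = (L.take (t+1)).sum := by
      rw [List.sum_take_succ L t ht, ← List.getD_eq_getElem L 0 ht]; omega
    rcases Nat.lt_or_ge (t+1) L.length with h | h
    · exact h2 ((mem_starts_iff L _).2 ⟨t+1, h, hj1⟩)
    · have : (L.take (t+1)).sum = L.sum := by
        rw [List.take_of_length_le (by omega)]
      omega
  · intro h
    have hj1 : j + 1 < L.sum := by omega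
    have := isBlock_determines L hb (by omega) (by omega : j + 1 < stL L j + lenL L j)
    refine ⟨hj1, fun hc => ?_⟩
    have := posL_eq_zero_of_mem_starts L hpos _ hc
    omega

lemma succ_block (L : List ℕ) (j : ℕ) (hj : j < L.sum) (h : posL L j + 1 < lenL L j) :
    stL L (j+1) = stL L j ∧ lenL L (j+1) = lenL L j ∧ posL L (j+1) = posL L j + 1 ∧
      j + 1 < L.sum := by
  have hb := isBlock_of_lt L j hj
  have hsp := stL_add_posL L j hj
  have hle := isBlock_st_add_len_le L hb
  have := isBlock_determines L hb (by omega) (by omega : j + 1 < stL L j + lenL L j)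
  exact ⟨this.1, this.2.1, by omega, by omega⟩

lemma pred_block (L : List ℕ) (j : ℕ) (hj : j < L.sum) (h : 1 ≤ posL L j) :
    stL L (j-1) = stL L j ∧ lenL L (j-1) = lenL L j ∧ posL L (j-1) = posL L j - 1 := by
  have hb := isBlock_of_lt L j hj
  have hsp := stL_add_posL L j hj
  have hpl := posL_lt_lenL L j hj
  have := isBlock_determines L hb (by omega) (by omega : j - 1 < stL L j + lenL L j)
  exact ⟨this.1, this.2.1, by omega⟩

lemma stL_is_start (L : List ℕ) (j : ℕ) (hj : j < L.sum) :
    stL L (stL L j) = stL L j ∧ lenL L (stL L j) = lenL L j ∧ posL L (stL L j) = 0 := by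
  have hb := isBlock_of_lt L j hj
  have hsp := stL_add_posL L j hj
  have hpl := posL_lt_lenL L j hj
  have := isBlock_determines L hb (le_refl _) (by omega)
  exact ⟨this.1, this.2.1, by omega⟩

lemma lenL_mem (L : List ℕ) (j : ℕ) (hj : j < L.sum) : lenL L j ∈ L := by
  induction L generalizing j with
  | nil => simp at hj
  | cons a t ih =>
    simp only [lenL]
    split
    · simp
    · simp only [List.sum_cons] at hj
      exact List.mem_cons_of_mem _ (ih (j - a) (by omega))

/-! ### subFam characterization -/

lemma starts_length (L : List ℕ) : (starts L).length = L.length := by simp [starts]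

lemma starts_getElem (L : List ℕ) (t : ℕ) (ht : t < L.length) :
    (starts L)[t]'(by rw [starts_length]; exact ht) = (L.take t).sum := by
  simp [starts]

lemma mem_subFam_iff (L : List ℕ) (k : ℕ) (q : ℕ × ℕ) :
    q ∈ subFam L k ↔ ∃ st ln, IsBlock L st ln ∧ k ≤ ln ∧ q = (st, k) := by
  simp only [subFam, List.mem_filterMap, blocksOf]
  constructor
  · rintro ⟨⟨st, ln⟩, hmem, hq⟩
    rw [List.mem_iff_get] at hmem
    obtain ⟨⟨t, ht⟩, hget⟩ := hmem
    have htlen : t < L.length := by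
      rw [List.length_zip, starts_length] at ht; omega
    simp only [List.get_eq_getElem, List.getElem_zip] at hget
    have hst : st = (L.take t).sum := by
      rw [← starts_getElem L t htlen]; exact (congrArg Prod.fst hget).symm
    have hln : ln = L.getD t 0 := by
      rw [List.getD_eq_getElem L 0 htlen]; exact (congrArg Prod.snd hget).symm
    simp only at hq
    split_ifs at hq with hkl
    · cases hq
      exact ⟨st, ln, ⟨t, htlen, hst, hln⟩, hkl, rfl⟩
  · rintro ⟨st, ln, ⟨t, ht, hst, hln⟩, hk, rfl⟩
    refine ⟨(st, ln), ?_, by simp [hk]⟩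
    rw [List.mem_iff_get]
    refine ⟨⟨t, by rw [List.length_zip, starts_length]; omega⟩, ?_⟩
    simp only [List.get_eq_getElem, List.getElem_zip]
    rw [starts_getElem L t ht]
    have h2 : L[t] = ln := by rw [hln, List.getD_eq_getElem L 0 ht]
    rw [h2, hst]

lemma region_iff (L : List ℕ) (k : ℕ) (j : ℕ) :
    (∃ q ∈ subFam L k, q.1 ≤ j ∧ j < q.1 + q.2) ↔
      (j < L.sum ∧ k ≤ lenL L j ∧ posL L j < k) := by
  constructor
  · rintro ⟨q, hq, h1, h2⟩
    obtain ⟨st, ln, hb, hk, rfl⟩ := (mem_subFam_iff L k q).1 hq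
    simp only at h1 h2
    have hd := isBlock_determines L hb h1 (by omega)
    have hle := isBlock_st_add_len_le L hb
    exact ⟨by omega, by omega, by omega⟩
  · rintro ⟨h1, h2, h3⟩
    have hb := isBlock_of_lt L j h1
    have hsp := stL_add_posL L j h1
    refine ⟨(stL L j, k), (mem_subFam_iff L k _).2 ⟨stL L j, lenL L j, hb, h2, rfl⟩, ?_⟩
    show stL L j ≤ j ∧ j < stL L j + k
    omega

lemma nonmin_iff (L : List ℕ) (k : ℕ) (b : ℕ) :
    (∃ q ∈ subFam L k, q.1 < b ∧ b < q.1 + q.2) ↔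
      (b < L.sum ∧ k ≤ lenL L b ∧ 1 ≤ posL L b ∧ posL L b < k) := by
  constructor
  · rintro ⟨q, hq, h1, h2⟩
    obtain ⟨st, ln, hb, hk, rfl⟩ := (mem_subFam_iff L k q).1 hq
    simp only at h1 h2
    have hd := isBlock_determines L hb (show st ≤ b by omega) (show b < st + ln by omega)
    have hle := isBlock_st_add_len_le L hb
    exact ⟨by omega, by omega, by omega, by omega⟩
  · rintro ⟨h1, h2, h3, h4⟩
    have hb := isBlock_of_lt L b h1
    have hsp := stL_add_posL L b h1
    refine ⟨(stL L b, k), (mem_subFam_iff L k _).2 ⟨stL L b, lenL L b, hb, h2, rfl⟩, ?_⟩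
    show stL L b < b ∧ b < stL L b + k
    omega

lemma cmax_iff (L : List ℕ) (k : ℕ) (hk : 1 ≤ k) (c : ℕ) :
    (∃ q ∈ subFam L k, c = q.1 + q.2 - 1) ↔
      (c < L.sum ∧ k ≤ lenL L c ∧ posL L c = k - 1) := by
  constructor
  · rintro ⟨q, hq, h1⟩
    obtain ⟨st, ln, hb, hkk, rfl⟩ := (mem_subFam_iff L k q).1 hq
    simp only at h1
    have hc1 : st ≤ c := by omega
    have hc2 : c < st + ln := by omega
    have hd := isBlock_determines L hb hc1 hc2
    have hle := isBlock_st_add_len_le L hb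
    exact ⟨by omega, by omega, by omega⟩
  · rintro ⟨h1, h2, h3⟩
    have hb := isBlock_of_lt L c h1
    have hsp := stL_add_posL L c h1
    refine ⟨(stL L c, k), (mem_subFam_iff L k _).2 ⟨stL L c, lenL L c, hb, h2, rfl⟩, ?_⟩
    show c = stL L c + k - 1
    omega

end Stmt4Aux

namespace Stmt4Aux

open Finsupp

variable {r : ℕ}

def sv (L : List ℕ) (a : Fin r) : Fin r := ⟨stL L a, lt_of_le_of_lt (stL_le L a) a.2⟩

def deg (d : Fin r →₀ ℕ) : ℕ := d.sum fun _ n => n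

def wt (L : List ℕ) (d : Fin r →₀ ℕ) : ℕ := d.sum fun a n => n * posL L (a : ℕ)

noncomputable def flat (L : List ℕ) (d : Fin r →₀ ℕ) : Fin r →₀ ℕ :=
  Finsupp.mapDomain (sv L) d

def shiftV (a : Fin r) (p : ℕ) : Fin r := if h : (a : ℕ) + p < r then ⟨(a : ℕ) + p, h⟩ else a

noncomputable def canon (f : Fin r →₀ ℕ) (w : ℕ) : Fin r →₀ ℕ :=
  match f.support.min with
  | Option.none => f
  | Option.some a => f - Finsupp.single a 1 + Finsupp.single (shiftV a w) 1

noncomputable def minlen (L : List ℕ) (d : Fin r →₀ ℕ) : ℕ :=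
  (((flat L d).support.image fun a : Fin r => lenL L (a : ℕ)).min).getD 0

lemma deg_add (x y : Fin r →₀ ℕ) : deg (x + y) = deg x + deg y :=
  Finsupp.sum_add_index' (fun _ => rfl) (fun _ _ _ => rfl)

lemma deg_single (a : Fin r) (n : ℕ) : deg (Finsupp.single a n) = n :=
  Finsupp.sum_single_index rfl

lemma wt_add (L : List ℕ) (x y : Fin r →₀ ℕ) : wt L (x + y) = wt L x + wt L y :=
  Finsupp.sum_add_index' (fun _ => zero_mul _) (fun a b₁ b₂ => add_mul b₁ b₂ _)

lemma wt_single (L : List ℕ) (a : Fin r) (n : ℕ) :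
    wt L (Finsupp.single a n) = n * posL L (a : ℕ) :=
  Finsupp.sum_single_index (zero_mul _)

lemma flat_add (L : List ℕ) (x y : Fin r →₀ ℕ) : flat L (x + y) = flat L x + flat L y :=
  Finsupp.mapDomain_add

lemma flat_single (L : List ℕ) (a : Fin r) (n : ℕ) :
    flat L (Finsupp.single a n) = Finsupp.single (sv L a) n :=
  Finsupp.mapDomain_single

lemma deg_flat (L : List ℕ) (d : Fin r →₀ ℕ) : deg (flat L d) = deg d := by
  unfold deg flat
  rw [Finsupp.sum_mapDomain_index (fun _ => rfl) (fun _ _ _ => rfl)]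

lemma flat_apply (L : List ℕ) (d : Fin r →₀ ℕ) (b : Fin r) :
    flat L d b = ∑ a ∈ d.support, if sv L a = b then d a else 0 := by
  classical
  have h : flat L d = ∑ a ∈ d.support, Finsupp.single (sv L a) (d a) := rfl
  rw [h, Finsupp.finset_sum_apply]
  exact Finset.sum_congr rfl fun a _ => Finsupp.single_apply

lemma mem_flat_support (L : List ℕ) (d : Fin r →₀ ℕ) (b : Fin r) :
    b ∈ (flat L d).support ↔ ∃ a ∈ d.support, sv L a = b := by
  rw [Finsupp.mem_support_iff, flat_apply]
  constructor
  · intro h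
    by_contra hc
    push_neg at hc
    exact h (Finset.sum_eq_zero fun a ha => by
      rw [if_neg (hc a ha)])
  · rintro ⟨a, ha, rfl⟩
    intro h
    rw [Finset.sum_eq_zero_iff] at h
    have := h a ha
    rw [if_pos rfl] at this
    exact (Finsupp.mem_support_iff.1 ha) this

lemma supp_add (x y : Fin r →₀ ℕ) : (x + y).support = x.support ∪ y.support := by
  ext a
  simp only [Finsupp.mem_support_iff, Finset.mem_union, Finsupp.add_apply]
  omega

section WithSum

variable (r) (L : List ℕ)

lemma fin_lt_sum (hsum : L.sum = r) (a : Fin r) : (a : ℕ) < L.sum := by rw [hsum]; exact a.2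

lemma sv_spec (hsum : L.sum = r) (a : Fin r) :
    stL L ((sv L a : Fin r) : ℕ) = stL L (a : ℕ) ∧
    lenL L ((sv L a : Fin r) : ℕ) = lenL L (a : ℕ) ∧
    posL L ((sv L a : Fin r) : ℕ) = 0 := by
  have := stL_is_start L (a : ℕ) (fin_lt_sum r L hsum a)
  exact this

lemma sv_succ (hsum : L.sum = r) (a : Fin r) (b : Fin r) (hb : (b : ℕ) = (a : ℕ) + 1)
    (h : posL L (a : ℕ) + 1 < lenL L (a : ℕ)) : sv L b = sv L a := by
  have := succ_block L (a : ℕ) (fin_lt_sum r L hsum a) h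
  apply Fin.ext
  show stL L (b : ℕ) = stL L (a : ℕ)
  rw [hb]; exact this.1

lemma sv_pred (hsum : L.sum = r) (a : Fin r) (b : Fin r) (hb : (b : ℕ) = (a : ℕ) - 1)
    (h : 1 ≤ posL L (a : ℕ)) : sv L b = sv L a := by
  have := pred_block L (a : ℕ) (fin_lt_sum r L hsum a) h
  apply Fin.ext
  show stL L (b : ℕ) = stL L (a : ℕ)
  rw [hb]; exact this.1

end WithSum

/-! ### The generators of the Higgs ideal -/

noncomputable def Ev (L : List ℕ) (r : ℕ) (a : Fin r) : MvPolynomial (Fin r) ℂ :=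
  if posL L (a : ℕ) + 1 < lenL L (a : ℕ) then Zv ℂ r ((a : ℕ) + 1) else 0

section Gen

variable (r : ℕ) (L : List ℕ)

lemma jordan_apply (lam : ℂ) (j k : Fin r) :
    (jordanBlocks ℂ r L lam) j k =
      if (j : ℕ) = (k : ℕ) then lam
      else if (k : ℕ) = (j : ℕ) + 1 ∧ (k : ℕ) ∉ starts L then 1 else 0 := rfl

lemma sum_row (lam : ℂ) (hsum : L.sum = r) (hpos : ∀ x ∈ L, 0 < x) (j : Fin r) :
    ∑ k : Fin r, C ((jordanBlocks ℂ r L lam) j k) * X k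
      = C lam * X j + Ev L r j := by
  have hsplit : ∀ k : Fin r,
      C ((jordanBlocks ℂ r L lam) j k) * X k
        = (if k = j then C lam * X k else 0)
          + (if ((k : ℕ) = (j : ℕ) + 1 ∧ (k : ℕ) ∉ starts L) then (X k : MvPolynomial (Fin r) ℂ) else 0) := by
    intro k
    rw [jordan_apply r L lam]
    by_cases h1 : (j : ℕ) = (k : ℕ)
    · have : k = j := Fin.ext h1.symm
      subst this
      rw [if_pos rfl, if_pos rfl, if_neg (by omega), add_zero]
    · rw [if_neg h1, if_neg (fun h : k = j => h1 (by rw [h]))]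
      by_cases h2 : ((k : ℕ) = (j : ℕ) + 1 ∧ (k : ℕ) ∉ starts L)
      · rw [if_pos h2, if_pos h2, map_one, one_mul, zero_add]
      · rw [if_neg h2, if_neg h2, map_zero, zero_mul, zero_add]
  rw [Finset.sum_congr rfl (fun k _ => hsplit k), Finset.sum_add_distrib]
  congr 1
  · simp
  · by_cases h : posL L (j : ℕ) + 1 < lenL L (j : ℕ)
    · have hcond := (succ_cond_iff L hpos (j : ℕ) (fin_lt_sum r L hsum j)).2 h
      have hs := hsum
      have hjr : (j : ℕ) + 1 < r := by
        have := fin_lt_sum r L hsum j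
        omega
      have heq : ∀ k : Fin r, ((k : ℕ) = (j : ℕ) + 1 ∧ (k : ℕ) ∉ starts L) ↔ k = (⟨(j : ℕ) + 1, hjr⟩ : Fin r) := by
        intro k
        constructor
        · rintro ⟨h1, _⟩; exact Fin.ext h1
        · rintro rfl; exact ⟨rfl, hcond.2⟩
      rw [Finset.sum_congr rfl (fun k _ => by rw [if_congr (heq k) rfl rfl])]
      rw [Finset.sum_ite_eq' Finset.univ _ (fun k => (X k : MvPolynomial (Fin r) ℂ)), if_pos (Finset.mem_univ _)]
      unfold Ev Zv
      rw [if_pos h, dif_pos hjr]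
    · have : ∀ k : Fin r, ¬ ((k : ℕ) = (j : ℕ) + 1 ∧ (k : ℕ) ∉ starts L) := by
        intro k ⟨h1, h2⟩
        have hk : (j : ℕ) + 1 < L.sum := by rw [hsum]; omega
        exact h ((succ_cond_iff L hpos (j : ℕ) (fin_lt_sum r L hsum j)).1 ⟨hk, by rwa [← h1]⟩)
      rw [Finset.sum_congr rfl (fun k _ => by rw [if_neg (this k)])]
      unfold Ev
      rw [if_neg h]
      simp

lemma genEq (lam : ℂ) (hsum : L.sum = r) (hpos : ∀ x ∈ L, 0 < x) (i j : Fin r) :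
    ∑ k : Fin r, X k * (C ((jordanBlocks ℂ r L lam) j k) * X i - C ((jordanBlocks ℂ r L lam) i k) * X j)
      = Ev L r j * X i - Ev L r i * X j := by
  have h1 : ∑ k : Fin r, X k * (C ((jordanBlocks ℂ r L lam) j k) * X i - C ((jordanBlocks ℂ r L lam) i k) * X j)
      = (∑ k : Fin r, C ((jordanBlocks ℂ r L lam) j k) * X k) * X i
        - (∑ k : Fin r, C ((jordanBlocks ℂ r L lam) i k) * X k) * X j := by
    rw [Finset.sum_mul, Finset.sum_mul, ← Finset.sum_sub_distrib]
    exact Finset.sum_congr rfl fun k _ => by ring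
  rw [h1, sum_row r L lam hsum hpos, sum_row r L lam hsum hpos]
  ring

lemma genMem (lam : ℂ) (hsum : L.sum = r) (hpos : ∀ x ∈ L, 0 < x) (i j : Fin r) (hij : i ≠ j) :
    Ev L r j * X i - Ev L r i * X j ∈ higgsIdeal (jordanBlocks ℂ r L lam) := by
  rcases lt_or_gt_of_ne hij with h | h
  · exact Ideal.subset_span ⟨i, j, h, (genEq r L lam hsum hpos i j).symm⟩
  · have hm := Ideal.subset_span (α := MvPolynomial (Fin r) ℂ)
      (s := { p | ∃ i' j' : Fin r, i' < j' ∧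
        p = ∑ k : Fin r, X k * (C ((jordanBlocks ℂ r L lam) j' k) * X i' - C ((jordanBlocks ℂ r L lam) i' k) * X j') })
      ⟨j, i, h, rfl⟩
    rw [genEq r L lam hsum hpos j i] at hm
    have : Ev L r j * X i - Ev L r i * X j = -(Ev L r i * X j - Ev L r j * X i) := by ring
    rw [this]
    exact neg_mem hm

end Gen

end Stmt4Aux

namespace Stmt4Aux

open scoped Classical

variable {r : ℕ}

noncomputable def NF (L : List ℕ) (d : Fin r →₀ ℕ) : MvPolynomial (Fin r) ℂ :=
  if deg d ≤ 1 then monomial d 1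
  else if wt L d < minlen L d then monomial (canon (flat L d) (wt L d)) 1
  else 0

def inReg (L : List ℕ) (k : ℕ) (j : ℕ) : Prop := k ≤ lenL L j ∧ posL L j < k

noncomputable def NFv (L : List ℕ) (k : ℕ) (d : Fin r →₀ ℕ) : MvPolynomial (Fin r) ℂ :=
  if ∀ a ∈ d.support, inReg L k (a : ℕ) then
    if deg d ≤ 1 then monomial d 1
    else if wt L d < k then monomial (canon (flat L d) (wt L d)) 1
    else 0
  else 0

noncomputable def PhiG (g : (Fin r →₀ ℕ) → MvPolynomial (Fin r) ℂ) (p : MvPolynomial (Fin r) ℂ) :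
    MvPolynomial (Fin r) ℂ :=
  (AddMonoidAlgebra.coeff p).sum fun d c => c • g d

lemma PhiG_add (g : (Fin r →₀ ℕ) → MvPolynomial (Fin r) ℂ) (p q : MvPolynomial (Fin r) ℂ) :
    PhiG g (p + q) = PhiG g p + PhiG g q := by
  unfold PhiG
  rw [AddMonoidAlgebra.coeff_add]
  exact Finsupp.sum_add_index' (fun _ => zero_smul _ _) (fun _ b c => add_smul b c _)

lemma PhiG_monomial (g : (Fin r →₀ ℕ) → MvPolynomial (Fin r) ℂ) (d : Fin r →₀ ℕ) (c : ℂ) :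
    PhiG g (monomial d c) = c • g d := by
  unfold PhiG
  rw [← single_eq_monomial, AddMonoidAlgebra.coeff_single]
  exact Finsupp.sum_single_index (zero_smul _ _)

lemma coeff_PhiG (g : (Fin r →₀ ℕ) → MvPolynomial (Fin r) ℂ) (p : MvPolynomial (Fin r) ℂ)
    (e : Fin r →₀ ℕ) :
    coeff e (PhiG g p) = (AddMonoidAlgebra.coeff p).sum fun d c => c * coeff e (g d) := by
  unfold PhiG
  rw [Finsupp.sum, Finsupp.sum, coeff_sum]
  exact Finset.sum_congr rfl fun d _ => by rw [coeff_smul]; rfl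

noncomputable def Phi (L : List ℕ) (p : MvPolynomial (Fin r) ℂ) : MvPolynomial (Fin r) ℂ :=
  PhiG (NF L) p

noncomputable def Phiv (L : List ℕ) (k : ℕ) (p : MvPolynomial (Fin r) ℂ) :
    MvPolynomial (Fin r) ℂ :=
  PhiG (NFv L k) p

lemma NF_congr (L : List ℕ) (d d' : Fin r →₀ ℕ) (hdeg : deg d = deg d')
    (hwt : wt L d = wt L d') (hflat : flat L d = flat L d') (h2 : 2 ≤ deg d) :
    NF L d = NF L d' := by
  unfold NF minlen canon
  rw [hwt, hflat, if_neg (by omega), if_neg (by omega : ¬ deg d' ≤ 1)]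

lemma minlen_le (L : List ℕ) (d : Fin r →₀ ℕ) (hsum : L.sum = r) {a : Fin r}
    (ha : a ∈ d.support) : minlen L d ≤ lenL L (a : ℕ) := by
  have hb : sv L a ∈ (flat L d).support := (mem_flat_support L d _).2 ⟨a, ha, rfl⟩
  have hmem : lenL L ((sv L a : Fin r) : ℕ) ∈ ((flat L d).support.image fun x : Fin r => lenL L (x : ℕ)) :=
    Finset.mem_image.2 ⟨sv L a, hb, rfl⟩
  have hle := Finset.min_le hmem
  have hspec := sv_spec r L hsum a
  unfold minlen
  rcases hmin : ((flat L d).support.image fun x : Fin r => lenL L (x : ℕ)).min with _ | m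
  · rw [hmin] at hle
    exact absurd hle (WithTop.not_top_le_coe _)
  · rw [hmin] at hle
    have : m ≤ lenL L ((sv L a : Fin r) : ℕ) := WithTop.coe_le_coe.1 hle
    rw [hspec.2.1] at this
    simpa using this

lemma NF_zero_of_wt (L : List ℕ) (hsum : L.sum = r) (d : Fin r →₀ ℕ) (h2 : 2 ≤ deg d)
    (h : ∃ a ∈ d.support, lenL L (a : ℕ) ≤ wt L d) : NF L d = 0 := by
  obtain ⟨a, ha, hle⟩ := h
  have := minlen_le L d hsum ha
  unfold NF
  rw [if_neg (by omega), if_neg (by omega)]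

lemma NFv_zero_of_out (L : List ℕ) (k : ℕ) (d : Fin r →₀ ℕ)
    (h : ∃ a ∈ d.support, ¬ inReg L k (a : ℕ)) : NFv L k d = 0 := by
  obtain ⟨a, ha, hreg⟩ := h
  unfold NFv
  rw [if_neg (fun hc => hreg (hc a ha))]

lemma NFv_zero_of_wt (L : List ℕ) (k : ℕ) (d : Fin r →₀ ℕ) (h2 : 2 ≤ deg d)
    (h : k ≤ wt L d) : NFv L k d = 0 := by
  unfold NFv
  by_cases hreg : ∀ a ∈ d.support, inReg L k (a : ℕ)
  · rw [if_pos hreg, if_neg (by omega), if_neg (by omega)]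
  · rw [if_neg hreg]

lemma NFv_congr (L : List ℕ) (k : ℕ) (d d' : Fin r →₀ ℕ) (hdeg : deg d = deg d')
    (hwt : wt L d = wt L d') (hflat : flat L d = flat L d') (h2 : 2 ≤ deg d)
    (hreg : (∀ a ∈ d.support, inReg L k (a : ℕ)) ↔ (∀ a ∈ d'.support, inReg L k (a : ℕ))) :
    NFv L k d = NFv L k d' := by
  unfold NFv canon
  by_cases h : ∀ a ∈ d.support, inReg L k (a : ℕ)
  · rw [if_pos h, if_pos (hreg.1 h), hwt, hflat, if_neg (by omega), if_neg (by omega : ¬ deg d' ≤ 1)]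
  · rw [if_neg h, if_neg (fun hc => h (hreg.2 hc))]

end Stmt4Aux

namespace Stmt4Aux

variable {r : ℕ}

lemma deg_supp_nonempty (d : Fin r →₀ ℕ) (h : 0 < deg d) : d.support.Nonempty := by
  rcases Finset.eq_empty_or_nonempty d.support with he | hne
  · have : d = 0 := Finsupp.support_eq_empty.1 he
    rw [this] at h
    simp [deg, Finsupp.sum_zero_index] at h
  · exact hne

lemma wt_eq_sum (L : List ℕ) (d : Fin r →₀ ℕ) :
    wt L d = ∑ a ∈ d.support, d a * posL L (a : ℕ) := rfl

lemma pos_le_wt (L : List ℕ) (d : Fin r →₀ ℕ) {a : Fin r} (ha : a ∈ d.support) :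
    posL L (a : ℕ) ≤ wt L d := by
  have h1 : d a * posL L (a : ℕ) ≤ wt L d := by
    rw [wt_eq_sum]
    exact Finset.single_le_sum (f := fun b : Fin r => d b * posL L (b : ℕ))
      (fun _ _ => Nat.zero_le _) ha
  have h2 : 1 ≤ d a := Nat.one_le_iff_ne_zero.2 (Finsupp.mem_support_iff.1 ha)
  calc posL L (a : ℕ) = 1 * posL L (a : ℕ) := (one_mul _).symm
    _ ≤ d a * posL L (a : ℕ) := Nat.mul_le_mul_right _ h2
    _ ≤ wt L d := h1

lemma donor_exists (L : List ℕ) (d : Fin r →₀ ℕ) (c : Fin r)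
    (hwt : posL L (c : ℕ) < wt L d) :
    ∃ y ∈ d.support, 1 ≤ posL L (y : ℕ) ∧ (y ≠ c ∨ 2 ≤ d y) := by
  by_contra hc
  push_neg at hc
  have hb : wt L d ≤ posL L (c : ℕ) := by
    rw [wt_eq_sum]
    calc ∑ a ∈ d.support, d a * posL L (a : ℕ)
        ≤ ∑ a ∈ d.support, (if a = c then posL L (c : ℕ) else 0) := by
          refine Finset.sum_le_sum fun a ha => ?_
          by_cases hpa : 1 ≤ posL L (a : ℕ)
          · obtain ⟨rfl, hda⟩ := hc a ha hpa
            rw [if_pos rfl]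
            have : d a ≤ 1 := by omega
            calc d a * posL L (a : ℕ) ≤ 1 * posL L (a : ℕ) := Nat.mul_le_mul_right _ this
              _ = posL L (a : ℕ) := one_mul _
          · have : posL L (a : ℕ) = 0 := by omega
            rw [this, Nat.mul_zero]
            exact Nat.zero_le _
    _ ≤ posL L (c : ℕ) := by
          rw [Finset.sum_ite_eq' d.support c fun _ => posL L (c : ℕ)]
          split <;> omega
  omega

def mpB (L : List ℕ) (σ : Fin r) (d : Fin r →₀ ℕ) : ℕ :=
  (d.support.filter fun b => sv L b = σ).sup fun b : Fin r => posL L (b : ℕ)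

lemma mpB_ub (L : List ℕ) (σ : Fin r) (d : Fin r →₀ ℕ) {a : Fin r} (ha : a ∈ d.support)
    (hsv : sv L a = σ) : posL L (a : ℕ) ≤ mpB L σ d := by
  have hmem : a ∈ d.support.filter fun b => sv L b = σ := Finset.mem_filter.2 ⟨ha, hsv⟩
  exact Finset.le_sup (f := fun b : Fin r => posL L (b : ℕ)) hmem

lemma mpB_attained (L : List ℕ) (σ : Fin r) (d : Fin r →₀ ℕ)
    (hσ : σ ∈ (flat L d).support) :
    ∃ a ∈ d.support, sv L a = σ ∧ posL L (a : ℕ) = mpB L σ d := by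
  obtain ⟨a, ha, hsv⟩ := (mem_flat_support L d σ).1 hσ
  have hmem : a ∈ d.support.filter fun b => sv L b = σ := Finset.mem_filter.2 ⟨ha, hsv⟩
  have hne : (d.support.filter fun b => sv L b = σ).Nonempty := ⟨a, hmem⟩
  obtain ⟨b, hb, hsup⟩ := Finset.exists_mem_eq_sup _ hne fun b : Fin r => posL L (b : ℕ)
  obtain ⟨hb1, hb2⟩ := Finset.mem_filter.1 hb
  exact ⟨b, hb1, hb2, hsup.symm⟩

lemma mpB_eq_of (L : List ℕ) (σ : Fin r) (d : Fin r →₀ ℕ) (m : ℕ)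
    (h1 : ∃ a ∈ d.support, sv L a = σ ∧ posL L (a : ℕ) = m)
    (h2 : ∀ a ∈ d.support, sv L a = σ → posL L (a : ℕ) ≤ m) : mpB L σ d = m := by
  obtain ⟨a, ha, hsv, hpa⟩ := h1
  refine le_antisymm (Finset.sup_le fun b hb => ?_) ?_
  · obtain ⟨hb1, hb2⟩ := Finset.mem_filter.1 hb
    exact h2 b hb1 hb2
  · rw [← hpa]
    exact mpB_ub L σ d ha hsv

lemma minlen_attained (L : List ℕ) (d : Fin r →₀ ℕ) (h2 : 2 ≤ deg d) :
    ∃ b ∈ (flat L d).support, lenL L ((b : Fin r) : ℕ) = minlen L d := by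
  have hne : (flat L d).support.Nonempty := by
    apply deg_supp_nonempty
    rw [deg_flat]
    omega
  have hne2 : ((flat L d).support.image fun a : Fin r => lenL L (a : ℕ)).Nonempty :=
    hne.image _
  obtain ⟨m, hm⟩ := Finset.min_of_nonempty hne2
  have hmem := Finset.mem_of_min hm
  obtain ⟨b, hb, hlb⟩ := Finset.mem_image.1 hmem
  refine ⟨b, hb, ?_⟩
  unfold minlen
  rw [hm, hlb]
  rfl

section MoveSec

variable (r) (L : List ℕ) (lam : ℂ)

lemma Ev_eq_X (hsum : L.sum = r) (a b : Fin r) (hb : (b : ℕ) = (a : ℕ) + 1)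
    (h : posL L (a : ℕ) + 1 < lenL L (a : ℕ)) : Ev L r a = X b := by
  unfold Ev Zv
  rw [if_pos h, dif_pos (show (a : ℕ) + 1 < r by have := b.2; omega)]
  congr 1
  exact Fin.ext (by simp [hb])

lemma mono_mul_XX (d₀ : Fin r →₀ ℕ) (a b : Fin r) :
    monomial d₀ (1 : ℂ) * (X a * X b)
      = monomial (d₀ + Finsupp.single a 1 + Finsupp.single b 1) 1 := by
  have hX : ∀ c : Fin r, (X c : MvPolynomial (Fin r) ℂ) = monomial (Finsupp.single c 1) 1 :=
    fun c => rfl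
  rw [hX, hX, monomial_mul, monomial_mul]
  norm_num [add_assoc]

lemma move (hsum : L.sum = r) (hpos : ∀ x ∈ L, 0 < x) (d₀ : Fin r →₀ ℕ) (x y x' y' : Fin r)
    (hx : 1 ≤ posL L (x : ℕ)) (hy : posL L (y : ℕ) + 1 < lenL L (y : ℕ))
    (hx' : (x' : ℕ) = (x : ℕ) - 1) (hy' : (y' : ℕ) = (y : ℕ) + 1) :
    monomial (d₀ + Finsupp.single x 1 + Finsupp.single y 1) (1 : ℂ)
      - monomial (d₀ + Finsupp.single x' 1 + Finsupp.single y' 1) 1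
      ∈ higgsIdeal (jordanBlocks ℂ r L lam) := by
  have hxval : 1 ≤ (x : ℕ) := by
    have := stL_add_posL L (x : ℕ) (fin_lt_sum r L hsum x)
    omega
  by_cases hcase : y = x'
  · have hyx : y' = x := Fin.ext (by omega)
    have : d₀ + Finsupp.single x 1 + Finsupp.single y 1
        = d₀ + Finsupp.single x' 1 + Finsupp.single y' 1 := by
      rw [hyx, ← hcase, add_right_comm]
    rw [this, sub_self]
    exact zero_mem _
  · have hpred := pred_block L (x : ℕ) (fin_lt_sum r L hsum x) hx
    have hplt := posL_lt_lenL L (x : ℕ) (fin_lt_sum r L hsum x)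
    have hEx : Ev L r x' = X x := by
      refine Ev_eq_X r L hsum x' x (by omega) ?_
      rw [hx']
      omega
    have hEy : Ev L r y = X y' := Ev_eq_X r L hsum y y' hy' hy
    have hg := genMem r L lam hsum hpos y x' (fun h => hcase h)
    rw [hEx, hEy] at hg
    have hm := Ideal.mul_mem_left _ (monomial d₀ (1 : ℂ)) hg
    have hexp : monomial d₀ (1 : ℂ) * (X x * X y - X y' * X x')
        = monomial (d₀ + Finsupp.single x 1 + Finsupp.single y 1) (1 : ℂ)
          - monomial (d₀ + Finsupp.single x' 1 + Finsupp.single y' 1) 1 := by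
      rw [mul_sub, mono_mul_XX, mono_mul_XX]
      rw [add_right_comm d₀ (Finsupp.single y' 1) (Finsupp.single x' 1)]
    rw [← hexp]
    exact hm

end MoveSec

end Stmt4Aux

namespace Stmt4Aux

variable {r : ℕ}

section ResSec

variable (r) (L : List ℕ) (lam : ℂ)

lemma res (hsum : L.sum = r) (hpos : ∀ x ∈ L, 0 < x) :
    ∀ (n : ℕ) (d : Fin r →₀ ℕ) (σ : Fin r), 2 ≤ deg d → σ ∈ (flat L d).support →
    min (wt L d) (lenL L (σ : ℕ) - 1) - mpB L σ d ≤ n →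
    ∃ d', (monomial d (1 : ℂ) - monomial d' 1 ∈ higgsIdeal (jordanBlocks ℂ r L lam)) ∧
      flat L d' = flat L d ∧ wt L d' = wt L d ∧ deg d' = deg d ∧
      mpB L σ d' = min (wt L d) (lenL L (σ : ℕ) - 1) := by
  intro n
  induction n with
  | zero =>
    intro d σ hdeg hσ hn
    obtain ⟨t, ht, hsvt, hpt⟩ := mpB_attained L σ d hσ
    have hlen : lenL L ((t : Fin r) : ℕ) = lenL L (σ : ℕ) := by
      rw [← hsvt]; exact ((sv_spec r L hsum t).2.1).symm
    have hplt := posL_lt_lenL L (t : ℕ) (fin_lt_sum r L hsum t)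
    have hwle := pos_le_wt L d ht
    have hMmin : mpB L σ d = min (wt L d) (lenL L (σ : ℕ) - 1) := by omega
    exact ⟨d, by rw [sub_self]; exact zero_mem _, rfl, rfl, rfl, hMmin⟩
  | succ n ih =>
    intro d σ hdeg hσ hn
    obtain ⟨t, ht, hsvt, hpt⟩ := mpB_attained L σ d hσ
    have hlen : lenL L ((t : Fin r) : ℕ) = lenL L (σ : ℕ) := by
      rw [← hsvt]; exact ((sv_spec r L hsum t).2.1).symm
    have hplt := posL_lt_lenL L (t : ℕ) (fin_lt_sum r L hsum t)
    have hwle := pos_le_wt L d ht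
    by_cases hM : mpB L σ d = min (wt L d) (lenL L (σ : ℕ) - 1)
    · exact ⟨d, by rw [sub_self]; exact zero_mem _, rfl, rfl, rfl, hM⟩
    have hMle : mpB L σ d ≤ min (wt L d) (lenL L (σ : ℕ) - 1) := by omega
    have hMlt : mpB L σ d < min (wt L d) (lenL L (σ : ℕ) - 1) := by omega
    have hrecv : posL L (t : ℕ) + 1 < lenL L (t : ℕ) := by omega
    obtain ⟨y, hy, hpy, hcl⟩ := donor_exists L d t (by omega)
    have hd1 : 1 ≤ d y := Nat.one_le_iff_ne_zero.2 (Finsupp.mem_support_iff.1 hy)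
    have hd2 : 1 ≤ d t := Nat.one_le_iff_ne_zero.2 (Finsupp.mem_support_iff.1 ht)
    have hle : Finsupp.single y 1 + Finsupp.single t 1 ≤ d := by
      rw [Finsupp.le_def]
      intro a
      rw [Finsupp.add_apply, Finsupp.single_apply, Finsupp.single_apply]
      by_cases hya : y = a <;> by_cases hta : t = a
      · subst hya
        have h3 : 2 ≤ d y := by
          rcases hcl with h | h
          · exact absurd hta.symm h
          · exact h
        rw [if_pos rfl, if_pos hta]
        omega
      · subst hya
        rw [if_pos rfl, if_neg hta]
        omega
      · subst hta
        rw [if_neg hya, if_pos rfl]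
        omega
      · rw [if_neg hya, if_neg hta]
        exact Nat.zero_le _
    set d₀ := d - Finsupp.single y 1 - Finsupp.single t 1 with hd₀
    have hkey : d = d₀ + Finsupp.single y 1 + Finsupp.single t 1 := by
      rw [hd₀, tsub_tsub, add_assoc, tsub_add_cancel_of_le hle]
    have hyval : 1 ≤ (y : ℕ) := by
      have := stL_add_posL L (y : ℕ) (fin_lt_sum r L hsum y)
      omega
    have hs := hsum
    have htval : (t : ℕ) + 1 < r := by
      have h1 := stL_add_posL L (t : ℕ) (fin_lt_sum r L hsum t)
      have h2 := stL_add_lenL_le L (t : ℕ) (fin_lt_sum r L hsum t)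
      omega
    set y' : Fin r := ⟨(y : ℕ) - 1, by omega⟩ with hy'def
    set t' : Fin r := ⟨(t : ℕ) + 1, htval⟩ with ht'def
    have hpredy := pred_block L (y : ℕ) (fin_lt_sum r L hsum y) hpy
    have hsucct := succ_block L (t : ℕ) (fin_lt_sum r L hsum t) hrecv
    have e1 : posL L ((y' : Fin r) : ℕ) = posL L (y : ℕ) - 1 := hpredy.2.2
    have e2 : posL L ((t' : Fin r) : ℕ) = posL L (t : ℕ) + 1 := hsucct.2.2.1
    set d' := d₀ + Finsupp.single y' 1 + Finsupp.single t' 1 with hd'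
    have hmove := move r L lam hsum hpos d₀ y t y' t' hpy hrecv rfl rfl
    rw [← hkey] at hmove
    have hsv_y' : sv L y' = sv L y := sv_pred r L hsum y y' rfl hpy
    have hsv_t' : sv L t' = sv L t := sv_succ r L hsum t t' rfl hrecv
    have hflat' : flat L d' = flat L d := by
      rw [hd']
      conv_rhs => rw [hkey]
      rw [flat_add, flat_add, flat_add, flat_add, flat_single, flat_single, flat_single,
        flat_single, hsv_y', hsv_t']
    have hwt' : wt L d' = wt L d := by
      rw [hd']
      conv_rhs => rw [hkey]
      rw [wt_add, wt_add, wt_add, wt_add, wt_single, wt_single, wt_single, wt_single, e1, e2]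
      omega
    have hdeg' : deg d' = deg d := by
      rw [hd']
      conv_rhs => rw [hkey]
      rw [deg_add, deg_add, deg_add, deg_add, deg_single, deg_single, deg_single, deg_single]
    have hdeg2' : 2 ≤ deg d' := by omega
    have hσ' : σ ∈ (flat L d').support := by rw [hflat']; exact hσ
    have hub' : ∀ a ∈ d'.support, sv L a = σ → posL L (a : ℕ) ≤ mpB L σ d + 1 := by
      intro a ha hsva
      have happ : d' a ≠ 0 := Finsupp.mem_support_iff.1 ha
      by_cases hat : a = t'
      · rw [hat]
        omega
      by_cases hay : a = y'
      · rw [hay] at hsva ⊢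
        have hyb : posL L (y : ℕ) ≤ mpB L σ d :=
          mpB_ub L σ d hy (by rw [← hsv_y']; exact hsva)
        omega
      · have hd₀a : d₀ a ≠ 0 := by
          rw [hd'] at happ
          rw [Finsupp.add_apply, Finsupp.add_apply, Finsupp.single_apply, Finsupp.single_apply,
            if_neg (fun h => hay h.symm), if_neg (fun h => hat h.symm)] at happ
          simpa using happ
        have hda : a ∈ d.support := by
          rw [Finsupp.mem_support_iff]
          have : d₀ a ≤ d a := by
            rw [hd₀, Finsupp.tsub_apply, Finsupp.tsub_apply]
            omega
          omega
        have := mpB_ub L σ d hda hsva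
        omega
    have hwit' : ∃ a ∈ d'.support, sv L a = σ ∧ posL L (a : ℕ) = mpB L σ d + 1 := by
      refine ⟨t', ?_, by rw [hsv_t']; exact hsvt, by omega⟩
      rw [Finsupp.mem_support_iff, hd', Finsupp.add_apply, Finsupp.add_apply,
        Finsupp.single_eq_same]
      omega
    have hmp' : mpB L σ d' = mpB L σ d + 1 := mpB_eq_of L σ d' _ hwit' hub'
    obtain ⟨d'', hmem'', hflat'', hwt'', hdeg'', hmp''⟩ :=
      ih d' σ hdeg2' hσ' (by rw [hwt', hmp']; omega)
    refine ⟨d'', ?_, by rw [hflat'', hflat'], by rw [hwt'', hwt'], by rw [hdeg'', hdeg'], ?_⟩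
    · have hsplit : monomial d (1 : ℂ) - monomial d'' 1
          = (monomial d 1 - monomial d' 1) + (monomial d' 1 - monomial d'' 1) := by ring
      rw [hsplit]
      exact add_mem hmove hmem''
    · rw [hmp'', hwt']

end ResSec

end Stmt4Aux

namespace Stmt4Aux

variable {r : ℕ}

lemma split_le (d : Fin r →₀ ℕ) (y t : Fin r) (hd1 : 1 ≤ d y) (hd2 : 1 ≤ d t)
    (hcl : y ≠ t ∨ 2 ≤ d y) : Finsupp.single y 1 + Finsupp.single t 1 ≤ d := by
  rw [Finsupp.le_def]
  intro a
  rw [Finsupp.add_apply, Finsupp.single_apply, Finsupp.single_apply]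
  by_cases hya : y = a <;> by_cases hta : t = a
  · subst hya
    have h3 : 2 ≤ d y := by
      rcases hcl with h | h
      · exact absurd hta.symm h
      · exact h
    rw [if_pos rfl, if_pos hta]
    omega
  · subst hya
    rw [if_pos rfl, if_neg hta]
    omega
  · subst hta
    rw [if_neg hya, if_pos rfl]
    omega
  · rw [if_neg hya, if_neg hta]
    exact Nat.zero_le _

lemma split_eq (d : Fin r →₀ ℕ) (y t : Fin r) (hd1 : 1 ≤ d y) (hd2 : 1 ≤ d t)
    (hcl : y ≠ t ∨ 2 ≤ d y) :
    d = (d - Finsupp.single y 1 - Finsupp.single t 1) + Finsupp.single y 1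
      + Finsupp.single t 1 := by
  rw [tsub_tsub, add_assoc, tsub_add_cancel_of_le (split_le d y t hd1 hd2 hcl)]

lemma canon_eq_of_min (f : Fin r →₀ ℕ) (w : ℕ) {a : Fin r} (h : f.support.min = some a) :
    canon f w = f - Finsupp.single a 1 + Finsupp.single (shiftV a w) 1 := by
  unfold canon
  rw [h]

lemma sv_eq_self (L : List ℕ) (hsum : L.sum = r) (a : Fin r) (h : posL L (a : ℕ) = 0) :
    sv L a = a := by
  have := stL_add_posL L (a : ℕ) (fin_lt_sum r L hsum a)
  exact Fin.ext (by show stL L (a : ℕ) = (a : ℕ); omega)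

lemma flat_eq_self (L : List ℕ) (hsum : L.sum = r) (d : Fin r →₀ ℕ)
    (h : ∀ a ∈ d.support, posL L (a : ℕ) = 0) : flat L d = d := by
  unfold flat
  rw [Finsupp.mapDomain_congr (g := id) (fun x hx => sv_eq_self L hsum x (h x hx)),
    Finsupp.mapDomain_id]

lemma pos_zero_of_wt_zero (L : List ℕ) (d : Fin r →₀ ℕ) (h : wt L d = 0) :
    ∀ a ∈ d.support, posL L (a : ℕ) = 0 := by
  intro a ha
  rw [wt_eq_sum] at h
  have := (Finset.sum_eq_zero_iff.1 h) a ha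
  have hda : d a ≠ 0 := Finsupp.mem_support_iff.1 ha
  have : d a * posL L (a : ℕ) = 0 := this
  rcases Nat.mul_eq_zero.1 this with h' | h'
  · exact absurd h' hda
  · exact h'

lemma minlen_le' (L : List ℕ) (d : Fin r →₀ ℕ) {b : Fin r}
    (hb : b ∈ (flat L d).support) : minlen L d ≤ lenL L (b : ℕ) := by
  have hmem : lenL L (b : ℕ) ∈ ((flat L d).support.image fun x : Fin r => lenL L (x : ℕ)) :=
    Finset.mem_image.2 ⟨b, hb, rfl⟩
  have hle := Finset.min_le hmem
  unfold minlen
  rcases hmin : ((flat L d).support.image fun x : Fin r => lenL L (x : ℕ)).min with _ | m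
  · rw [hmin] at hle
    exact absurd hle (WithTop.not_top_le_coe _)
  · rw [hmin] at hle
    simpa using WithTop.coe_le_coe.1 hle

end Stmt4Aux

namespace Stmt4Aux

variable {r : ℕ}

section DeadLive

variable (r) (L : List ℕ) (lam : ℂ)

lemma dead (hsum : L.sum = r) (hpos : ∀ x ∈ L, 0 < x) (d : Fin r →₀ ℕ)
    (h2 : 2 ≤ deg d) (hwt : minlen L d ≤ wt L d) :
    monomial d (1 : ℂ) ∈ higgsIdeal (jordanBlocks ℂ r L lam) := by
  obtain ⟨σ, hσ, hlenσ⟩ := minlen_attained L d h2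
  obtain ⟨d', hmem, hflat', hwt', hdeg', hmp'⟩ :=
    res r L lam hsum hpos (min (wt L d) (lenL L (σ : ℕ) - 1)) d σ h2 hσ (by omega)
  have hl1 : 0 < lenL L (σ : ℕ) := by
    have := posL_lt_lenL L (σ : ℕ) (fin_lt_sum r L hsum σ)
    omega
  have hminval : min (wt L d) (lenL L (σ : ℕ) - 1) = lenL L (σ : ℕ) - 1 := by omega
  obtain ⟨c, hc, hsvc, hpc⟩ := mpB_attained L σ d' (by rw [hflat']; exact hσ)
  have hlenc : lenL L ((c : Fin r) : ℕ) = lenL L (σ : ℕ) := by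
    rw [← hsvc]; exact ((sv_spec r L hsum c).2.1).symm
  rw [hmp', hminval] at hpc
  have hpcend : posL L (c : ℕ) + 1 = lenL L (c : ℕ) := by omega
  have hwtd' : posL L (c : ℕ) < wt L d' := by rw [hwt']; omega
  obtain ⟨b, hb, hpb, hclb⟩ := donor_exists L d' c hwtd'
  have hbval : 1 ≤ (b : ℕ) := by
    have := stL_add_posL L (b : ℕ) (fin_lt_sum r L hsum b)
    omega
  set b' : Fin r := ⟨(b : ℕ) - 1, by omega⟩ with hb'def
  have hb'val : ((b' : Fin r) : ℕ) = (b : ℕ) - 1 := rfl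
  have hpredb := pred_block L (b : ℕ) (fin_lt_sum r L hsum b) hpb
  have hpltb := posL_lt_lenL L (b : ℕ) (fin_lt_sum r L hsum b)
  have e1 : posL L ((b' : Fin r) : ℕ) = posL L (b : ℕ) - 1 := hpredb.2.2
  have e2 : lenL L ((b' : Fin r) : ℕ) = lenL L (b : ℕ) := hpredb.2.1
  have hne : c ≠ b' := by
    intro h
    rw [h] at hpcend
    omega
  have hEb : Ev L r b' = X b := Ev_eq_X r L hsum b' b (by omega) (by omega)
  have hEc : Ev L r c = 0 := by unfold Ev; rw [if_neg (by omega)]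
  have hg := genMem r L lam hsum hpos c b' hne
  rw [hEb, hEc] at hg
  have hXX : (X b * X c : MvPolynomial (Fin r) ℂ) ∈ higgsIdeal (jordanBlocks ℂ r L lam) := by
    have heq : (X b * X c : MvPolynomial (Fin r) ℂ) = X b * X c - 0 * X b' := by ring
    rw [heq]
    exact hg
  have hd1 : 1 ≤ d' b := Nat.one_le_iff_ne_zero.2 (Finsupp.mem_support_iff.1 hb)
  have hd2 : 1 ≤ d' c := Nat.one_le_iff_ne_zero.2 (Finsupp.mem_support_iff.1 hc)
  have hkey := split_eq d' b c hd1 hd2 hclb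
  have hmemd' : monomial d' (1 : ℂ) ∈ higgsIdeal (jordanBlocks ℂ r L lam) := by
    rw [hkey, ← mono_mul_XX]
    exact Ideal.mul_mem_left _ _ hXX
  have hfin : monomial d (1 : ℂ) = (monomial d 1 - monomial d' 1) + monomial d' 1 := by ring
  rw [hfin]
  exact add_mem hmem hmemd'

lemma live (hsum : L.sum = r) (hpos : ∀ x ∈ L, 0 < x) (d : Fin r →₀ ℕ)
    (h2 : 2 ≤ deg d) (hwt : wt L d < minlen L d) :
    monomial d (1 : ℂ) - monomial (canon (flat L d) (wt L d)) 1
      ∈ higgsIdeal (jordanBlocks ℂ r L lam) := by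
  have hne : (flat L d).support.Nonempty := deg_supp_nonempty _ (by rw [deg_flat]; omega)
  obtain ⟨a₀, ha₀⟩ := Finset.min_of_nonempty hne
  have ha₀mem := Finset.mem_of_min ha₀
  have hlena₀ : minlen L d ≤ lenL L ((a₀ : Fin r) : ℕ) := minlen_le' L d ha₀mem
  obtain ⟨d', hmem, hflat', hwt', hdeg', hmp'⟩ :=
    res r L lam hsum hpos (min (wt L d) (lenL L (a₀ : ℕ) - 1)) d a₀ h2 ha₀mem (by omega)
  have hminval : min (wt L d) (lenL L (a₀ : ℕ) - 1) = wt L d := by omega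
  rw [hminval] at hmp'
  have hcanon_eq := canon_eq_of_min (flat L d) (wt L d) ha₀
  suffices hcanon : d' = canon (flat L d) (wt L d) by
    rw [← hcanon]; exact hmem
  obtain ⟨c, hc, hsvc, hpc⟩ := mpB_attained L a₀ d' (by rw [hflat']; exact ha₀mem)
  rw [hmp'] at hpc
  have hstc : stL L ((c : Fin r) : ℕ) = ((a₀ : Fin r) : ℕ) := by
    have := congrArg (fun z : Fin r => (z : ℕ)) hsvc
    exact this
  have hcsum := stL_add_posL L (c : ℕ) (fin_lt_sum r L hsum c)
  have hcval : (c : ℕ) = (a₀ : ℕ) + wt L d := by omega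
  have hshift : shiftV a₀ (wt L d) = c := by
    unfold shiftV
    rw [dif_pos (by rw [← hcval]; exact c.2)]
    exact Fin.ext (by simp [hcval])
  have hd'c : 1 ≤ d' c := Nat.one_le_iff_ne_zero.2 (Finsupp.mem_support_iff.1 hc)
  by_cases hw0 : wt L d = 0
  · -- all positions of d' are zero, so d' = flat d' = flat d; canon also equals flat d
    have hz := pos_zero_of_wt_zero L d' (by rw [hwt', hw0])
    have hfe : flat L d' = d' := flat_eq_self L hsum d' hz
    have hd'val : d' = flat L d := by rw [← hfe, hflat']
    have hca₀ : c = a₀ := Fin.ext (by omega)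
    rw [hcanon_eq, hshift, hd'val, hca₀]
    have hcm : 1 ≤ flat L d a₀ := by
      rw [← hd'val, ← hca₀]
      exact hd'c
    apply Finsupp.ext
    intro a
    rw [Finsupp.add_apply, Finsupp.tsub_apply, Finsupp.single_apply]
    by_cases hca : a₀ = a
    · subst hca; rw [if_pos rfl]; omega
    · rw [if_neg hca]; omega
  · -- wt ≥ 1 : d' c = 1 and all other supports at position 0
    have hwsum : wt L d' = ∑ a ∈ d'.support, d' a * posL L (a : ℕ) := wt_eq_sum L d'
    have hwtval : wt L d' = wt L d := hwt'
    have hbound : d' c * posL L (c : ℕ) ≤ wt L d' := by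
      rw [hwsum]
      exact Finset.single_le_sum (f := fun a : Fin r => d' a * posL L (a : ℕ))
        (fun _ _ => Nat.zero_le _) hc
    have hd'c1 : d' c = 1 := by
      rw [hpc, hwtval] at hbound
      have h1 : d' c * wt L d ≤ 1 * wt L d := by rw [one_mul]; exact hbound
      have h2' : d' c ≤ 1 := Nat.le_of_mul_le_mul_right h1 (by omega)
      omega
    have hsplit : d' c * posL L (c : ℕ) + ∑ a ∈ d'.support.erase c, d' a * posL L (a : ℕ)
        = ∑ a ∈ d'.support, d' a * posL L (a : ℕ) :=
      Finset.add_sum_erase _ (fun a : Fin r => d' a * posL L (a : ℕ)) hc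
    have herase : ∑ a ∈ d'.support.erase c, d' a * posL L (a : ℕ) = 0 := by
      rw [hd'c1, hpc, one_mul, ← hwsum, hwtval] at hsplit
      omega
    have hzero : ∀ a ∈ d'.support, a ≠ c → posL L (a : ℕ) = 0 := by
      intro a ha hac
      have hmem : a ∈ d'.support.erase c := Finset.mem_erase.2 ⟨hac, ha⟩
      have := (Finset.sum_eq_zero_iff.1 herase) a hmem
      have hda : d' a ≠ 0 := Finsupp.mem_support_iff.1 ha
      rcases Nat.mul_eq_zero.1 this with h' | h'
      · exact absurd h' hda
      · exact h'
    -- d'' := d' - single c 1 is flat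
    set d'' := d' - Finsupp.single c 1 with hd''
    have hkey : d' = d'' + Finsupp.single c 1 := by
      rw [hd'']
      exact (tsub_add_cancel_of_le (by
        rw [Finsupp.le_def]
        intro a
        rw [Finsupp.single_apply]
        by_cases hca : c = a
        · subst hca; rw [if_pos rfl]; omega
        · rw [if_neg hca]; exact Nat.zero_le _)).symm
    have hd''zero : ∀ a ∈ d''.support, posL L (a : ℕ) = 0 := by
      intro a ha
      have h1 : d'' a ≠ 0 := Finsupp.mem_support_iff.1 ha
      have h2' : d'' a = d' a - Finsupp.single c 1 a := by rw [hd'', Finsupp.tsub_apply]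
      by_cases hca : a = c
      · subst hca
        rw [Finsupp.single_eq_same, hd'c1] at h2'
        omega
      · apply hzero a _ hca
        rw [Finsupp.mem_support_iff]
        rw [Finsupp.single_apply, if_neg (fun h => hca h.symm)] at h2'
        omega
    have hfd'' : flat L d'' = d'' := flat_eq_self L hsum d'' hd''zero
    have hflatd' : flat L d' = d'' + Finsupp.single a₀ 1 := by
      rw [hkey, flat_add, flat_single, hfd'', hsvc]
    have hd''val : d'' = flat L d - Finsupp.single a₀ 1 := by
      have h1 : d'' + Finsupp.single a₀ 1 = flat L d := by rw [← hflatd', hflat']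
      rw [← h1, add_tsub_cancel_right]
    rw [hcanon_eq, hshift, ← hd''val, hkey]

lemma reach (hsum : L.sum = r) (hpos : ∀ x ∈ L, 0 < x) (d : Fin r →₀ ℕ) :
    monomial d (1 : ℂ) - NF L d ∈ higgsIdeal (jordanBlocks ℂ r L lam) := by
  unfold NF
  by_cases h1 : deg d ≤ 1
  · rw [if_pos h1, sub_self]
    exact zero_mem _
  · rw [if_neg h1]
    by_cases h2 : wt L d < minlen L d
    · rw [if_pos h2]
      exact live r L lam hsum hpos d (by omega) h2
    · rw [if_neg h2, sub_zero]
      exact dead r L lam hsum hpos d (by omega) (by omega)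

end DeadLive

end Stmt4Aux

namespace Stmt4Aux

variable {r : ℕ}

lemma PhiG_zero (g : (Fin r →₀ ℕ) → MvPolynomial (Fin r) ℂ) : PhiG g 0 = 0 :=
  Finsupp.sum_zero_index

lemma PhiG_csmul (g : (Fin r →₀ ℕ) → MvPolynomial (Fin r) ℂ) (c : ℂ)
    (p : MvPolynomial (Fin r) ℂ) : PhiG g (c • p) = c • PhiG g p := by
  unfold PhiG
  rw [AddMonoidAlgebra.coeff_smul, Finsupp.sum_smul_index (fun d => zero_smul ℂ (g d)), Finsupp.smul_sum]
  exact Finsupp.sum_congr fun d _ => mul_smul c _ (g d)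

lemma PhiG_neg (g : (Fin r →₀ ℕ) → MvPolynomial (Fin r) ℂ) (p : MvPolynomial (Fin r) ℂ) :
    PhiG g (-p) = - PhiG g p := by
  have h1 : -p = (-1 : ℂ) • p := by rw [neg_one_smul]
  rw [h1, PhiG_csmul, neg_one_smul]

lemma PhiG_sub (g : (Fin r →₀ ℕ) → MvPolynomial (Fin r) ℂ) (p q : MvPolynomial (Fin r) ℂ) :
    PhiG g (p - q) = PhiG g p - PhiG g q := by
  have h1 : p - q = p + (-1 : ℂ) • q := by
    rw [neg_one_smul]
    ring
  rw [h1, PhiG_add, PhiG_csmul, neg_one_smul]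
  ring

lemma phiG_mul_zero_of_monomial (g : (Fin r →₀ ℕ) → MvPolynomial (Fin r) ℂ)
    (x : MvPolynomial (Fin r) ℂ)
    (h : ∀ d : Fin r →₀ ℕ, PhiG g (monomial d 1 * x) = 0) (q : MvPolynomial (Fin r) ℂ) :
    PhiG g (q * x) = 0 := by
  induction q using MvPolynomial.induction_on' with
  | monomial u a =>
    have h1 : (monomial u a : MvPolynomial (Fin r) ℂ) = a • monomial u 1 := by
      rw [smul_monomial, smul_eq_mul, mul_one]
    rw [h1, smul_mul_assoc, PhiG_csmul, h u, smul_zero]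
  | add p q hp hq =>
    rw [add_mul, PhiG_add, hp, hq, add_zero]

lemma phiG_span_zero (g : (Fin r →₀ ℕ) → MvPolynomial (Fin r) ℂ)
    (S : Set (MvPolynomial (Fin r) ℂ))
    (hS : ∀ s ∈ S, ∀ q, PhiG g (q * s) = 0) :
    ∀ p ∈ Ideal.span S, PhiG g p = 0 := by
  have hT : ∀ p ∈ Ideal.span S, ∀ q, PhiG g (q * p) = 0 := by
    intro p hp
    refine Submodule.span_induction ?_ ?_ ?_ ?_ hp
    · exact hS
    · intro q
      rw [mul_zero, PhiG_zero]
    · intro x y _ _ hx hy q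
      rw [mul_add, PhiG_add, hx, hy, add_zero]
    · intro c x _ hx q
      rw [smul_eq_mul, ← mul_assoc, hx]
  intro p hp
  have := hT p hp 1
  rwa [one_mul] at this

/-- weight of a monomial exponent plus two singles -/
lemma wt_add2 (L : List ℕ) (d : Fin r →₀ ℕ) (u v : Fin r) :
    wt L (d + Finsupp.single u 1 + Finsupp.single v 1)
      = wt L d + posL L (u : ℕ) + posL L (v : ℕ) := by
  rw [wt_add, wt_add, wt_single, wt_single, one_mul, one_mul]

lemma deg_add2 (d : Fin r →₀ ℕ) (u v : Fin r) :
    deg (d + Finsupp.single u 1 + Finsupp.single v 1) = deg d + 2 := by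
  rw [deg_add, deg_add, deg_single, deg_single]

lemma mem_supp_add2 (d : Fin r →₀ ℕ) (u v : Fin r) :
    v ∈ (d + Finsupp.single u 1 + Finsupp.single v 1).support := by
  rw [Finsupp.mem_support_iff, Finsupp.add_apply, Finsupp.add_apply, Finsupp.single_eq_same]
  omega

lemma supp_add2_sub (d : Fin r →₀ ℕ) (u v : Fin r) {a : Fin r}
    (ha : a ∈ (d + Finsupp.single u 1 + Finsupp.single v 1).support) :
    a ∈ d.support ∨ a = u ∨ a = v := by
  have h := Finsupp.mem_support_iff.1 ha
  rw [Finsupp.add_apply, Finsupp.add_apply, Finsupp.single_apply, Finsupp.single_apply] at h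
  by_cases h1 : a ∈ d.support
  · exact Or.inl h1
  · rw [Finsupp.notMem_support_iff] at h1
    rw [h1] at h
    by_cases h2 : u = a
    · exact Or.inr (Or.inl h2.symm)
    · by_cases h3 : v = a
      · exact Or.inr (Or.inr h3.symm)
      · rw [if_neg h2, if_neg h3] at h
        omega

section Kills

variable (r) (L : List ℕ) (lam : ℂ)

/-- Φ kills each generator times a monomial. -/
lemma phi_gen_mono_zero (hsum : L.sum = r) (hpos : ∀ x ∈ L, 0 < x) (i j : Fin r)
    (d : Fin r →₀ ℕ) :
    PhiG (NF L) (monomial d 1 * (Ev L r j * X i - Ev L r i * X j)) = 0 := by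
  have hplti := posL_lt_lenL L (i : ℕ) (fin_lt_sum r L hsum i)
  have hpltj := posL_lt_lenL L (j : ℕ) (fin_lt_sum r L hsum j)
  by_cases hi : posL L (i : ℕ) + 1 < lenL L (i : ℕ) <;>
    by_cases hj : posL L (j : ℕ) + 1 < lenL L (j : ℕ)
  · -- both alive : binomial relation
    have hir : (i : ℕ) + 1 < r := by
      have h1 := stL_add_posL L (i : ℕ) (fin_lt_sum r L hsum i)
      have h2 := stL_add_lenL_le L (i : ℕ) (fin_lt_sum r L hsum i)
      omega
    have hjr : (j : ℕ) + 1 < r := by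
      have h1 := stL_add_posL L (j : ℕ) (fin_lt_sum r L hsum j)
      have h2 := stL_add_lenL_le L (j : ℕ) (fin_lt_sum r L hsum j)
      omega
    set i' : Fin r := ⟨(i : ℕ) + 1, hir⟩ with hi'def
    set j' : Fin r := ⟨(j : ℕ) + 1, hjr⟩ with hj'def
    have hEi : Ev L r i = X i' := Ev_eq_X r L hsum i i' rfl hi
    have hEj : Ev L r j = X j' := Ev_eq_X r L hsum j j' rfl hj
    rw [hEi, hEj, mul_sub, mono_mul_XX, mono_mul_XX, PhiG_sub, PhiG_monomial, PhiG_monomial,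
      one_smul, one_smul]
    have hsucci := succ_block L (i : ℕ) (fin_lt_sum r L hsum i) hi
    have hsuccj := succ_block L (j : ℕ) (fin_lt_sum r L hsum j) hj
    have hNF : NF L (d + Finsupp.single j' 1 + Finsupp.single i 1)
        = NF L (d + Finsupp.single i' 1 + Finsupp.single j 1) := by
      apply NF_congr
      · rw [deg_add2, deg_add2]
      · rw [wt_add2, wt_add2]
        have e1 : posL L ((j' : Fin r) : ℕ) = posL L (j : ℕ) + 1 := hsuccj.2.2.1
        have e2 : posL L ((i' : Fin r) : ℕ) = posL L (i : ℕ) + 1 := hsucci.2.2.1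
        omega
      · rw [flat_add, flat_add, flat_add, flat_add, flat_single, flat_single, flat_single,
          flat_single]
        rw [sv_succ r L hsum j j' rfl hj, sv_succ r L hsum i i' rfl hi, add_right_comm]
      · rw [deg_add2]
        omega
    rw [hNF, sub_self]
  · -- j at end : Ev j = 0, term X i' * X j must die
    have hir : (i : ℕ) + 1 < r := by
      have h1 := stL_add_posL L (i : ℕ) (fin_lt_sum r L hsum i)
      have h2 := stL_add_lenL_le L (i : ℕ) (fin_lt_sum r L hsum i)
      omega
    set i' : Fin r := ⟨(i : ℕ) + 1, hir⟩ with hi'def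
    have hEi : Ev L r i = X i' := Ev_eq_X r L hsum i i' rfl hi
    have hEj : Ev L r j = 0 := by unfold Ev; rw [if_neg hj]
    rw [hEi, hEj, zero_mul, zero_sub, mul_neg, mono_mul_XX, PhiG_neg, PhiG_monomial, one_smul,
      neg_eq_zero]
    have hsucci := succ_block L (i : ℕ) (fin_lt_sum r L hsum i) hi
    apply NF_zero_of_wt L hsum _ (by rw [deg_add2]; omega)
    refine ⟨j, mem_supp_add2 d i' j, ?_⟩
    rw [wt_add2]
    have e2 : posL L ((i' : Fin r) : ℕ) = posL L (i : ℕ) + 1 := hsucci.2.2.1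
    omega
  · -- i at end
    have hjr : (j : ℕ) + 1 < r := by
      have h1 := stL_add_posL L (j : ℕ) (fin_lt_sum r L hsum j)
      have h2 := stL_add_lenL_le L (j : ℕ) (fin_lt_sum r L hsum j)
      omega
    set j' : Fin r := ⟨(j : ℕ) + 1, hjr⟩ with hj'def
    have hEj : Ev L r j = X j' := Ev_eq_X r L hsum j j' rfl hj
    have hEi : Ev L r i = 0 := by unfold Ev; rw [if_neg hi]
    rw [hEi, hEj, zero_mul, sub_zero, mono_mul_XX, PhiG_monomial, one_smul]
    have hsuccj := succ_block L (j : ℕ) (fin_lt_sum r L hsum j) hj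
    apply NF_zero_of_wt L hsum _ (by rw [deg_add2]; omega)
    refine ⟨i, mem_supp_add2 d j' i, ?_⟩
    rw [wt_add2]
    have e2 : posL L ((j' : Fin r) : ℕ) = posL L (j : ℕ) + 1 := hsuccj.2.2.1
    omega
  · have hEi : Ev L r i = 0 := by unfold Ev; rw [if_neg hi]
    have hEj : Ev L r j = 0 := by unfold Ev; rw [if_neg hj]
    rw [hEi, hEj, zero_mul, zero_mul, sub_zero, mul_zero, PhiG_zero]

lemma phi_kills (hsum : L.sum = r) (hpos : ∀ x ∈ L, 0 < x) (p : MvPolynomial (Fin r) ℂ)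
    (hp : p ∈ higgsIdeal (jordanBlocks ℂ r L lam)) : PhiG (NF L) p = 0 := by
  refine phiG_span_zero (NF L) _ ?_ p hp
  rintro s ⟨i, j, hij, rfl⟩ q
  apply phiG_mul_zero_of_monomial
  intro d
  rw [genEq r L lam hsum hpos i j]
  exact phi_gen_mono_zero r L hsum hpos i j d

end Kills

end Stmt4Aux

namespace Stmt4Aux

variable {r : ℕ}

lemma pairmem_iff (L : List ℕ) (k : ℕ) (a : ℕ) :
    (∃ q ∈ subFam L k, q.1 ≤ a ∧ a + 1 < q.1 + q.2) ↔
      (a < L.sum ∧ k ≤ lenL L a ∧ posL L a + 1 < k) := by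
  constructor
  · rintro ⟨q, hq, h1, h2⟩
    obtain ⟨st, ln, hb, hk, rfl⟩ := (mem_subFam_iff L k q).1 hq
    simp only at h1 h2
    have hd := isBlock_determines L hb h1 (by omega)
    have hle := isBlock_st_add_len_le L hb
    exact ⟨by omega, by omega, by omega⟩
  · rintro ⟨h1, h2, h3⟩
    have hb := isBlock_of_lt L a h1
    have hsp := stL_add_posL L a h1
    refine ⟨(stL L a, k), (mem_subFam_iff L k _).2 ⟨stL L a, lenL L a, hb, h2, rfl⟩, ?_⟩
    show stL L a ≤ a ∧ a + 1 < stL L a + k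
    omega

lemma mono_mul_X (d : Fin r →₀ ℕ) (a : Fin r) :
    monomial d (1 : ℂ) * X a = monomial (d + Finsupp.single a 1) 1 := by
  have hX : (X a : MvPolynomial (Fin r) ℂ) = monomial (Finsupp.single a 1) 1 := rfl
  rw [hX, monomial_mul, one_mul]

lemma mem_supp_add1 (d : Fin r →₀ ℕ) (a : Fin r) :
    a ∈ (d + Finsupp.single a 1).support := by
  rw [Finsupp.mem_support_iff, Finsupp.add_apply, Finsupp.single_eq_same]
  omega

lemma mem_supp_mono (d e : Fin r →₀ ℕ) {a : Fin r} (ha : a ∈ d.support) :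
    a ∈ (d + e).support := by
  rw [Finsupp.mem_support_iff, Finsupp.add_apply]
  have := Finsupp.mem_support_iff.1 ha
  omega

lemma region_add_iff (L : List ℕ) (k : ℕ) (d : Fin r →₀ ℕ) (u v : Fin r)
    (hu : inReg L k (u : ℕ)) (hv : inReg L k (v : ℕ)) :
    (∀ x : Fin r, x ∈ (d + Finsupp.single u 1 + Finsupp.single v 1).support → inReg L k (x : ℕ)) ↔
      (∀ x : Fin r, x ∈ d.support → inReg L k (x : ℕ)) := by
  constructor
  · intro h x hx
    exact h x (mem_supp_mono _ _ (mem_supp_mono _ _ hx))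
  · intro h x hx
    rcases supp_add2_sub d u v hx with h1 | h1 | h1
    · exact h x h1
    · rw [h1]; exact hu
    · rw [h1]; exact hv

section KillsV

variable (r) (L : List ℕ) (k : ℕ)

lemma phiv_kill1 (hsum : L.sum = r) :
    ∀ p ∈ Ideal.span { p : MvPolynomial (Fin r) ℂ | ∃ j : ℕ, j < r ∧
      (∀ q ∈ subFam L k, ¬ (q.1 ≤ j ∧ j < q.1 + q.2)) ∧ p = Zv ℂ r j },
      PhiG (NFv L k) p = 0 := by
  refine phiG_span_zero _ _ ?_
  rintro s ⟨j, hjr, hout, rfl⟩ q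
  apply phiG_mul_zero_of_monomial
  intro d
  unfold Zv
  rw [dif_pos hjr, mono_mul_X, PhiG_monomial, one_smul]
  apply NFv_zero_of_out
  refine ⟨⟨j, hjr⟩, mem_supp_add1 d _, ?_⟩
  intro hreg
  have hjs : j < L.sum := by omega
  obtain ⟨q', hq', hq2⟩ := (region_iff L k j).2 ⟨hjs, hreg.1, hreg.2⟩
  exact hout q' hq' hq2

lemma phiv_kill2 (hsum : L.sum = r) (hk : 1 ≤ k) :
    ∀ p ∈ Ideal.span { p : MvPolynomial (Fin r) ℂ | ∃ b c : ℕ,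
      (∃ q ∈ subFam L k, q.1 < b ∧ b < q.1 + q.2) ∧
      (∃ q ∈ subFam L k, c = q.1 + q.2 - 1) ∧ p = Zv ℂ r b * Zv ℂ r c },
      PhiG (NFv L k) p = 0 := by
  refine phiG_span_zero _ _ ?_
  rintro s ⟨b, c, hb, hc, rfl⟩ q
  apply phiG_mul_zero_of_monomial
  intro d
  obtain ⟨hb1, hb2, hb3, hb4⟩ := (nonmin_iff L k b).1 hb
  obtain ⟨hc1, hc2, hc3⟩ := (cmax_iff L k hk c).1 hc
  have hbr : b < r := by omega
  have hcr : c < r := by omega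
  unfold Zv
  rw [dif_pos hbr, dif_pos hcr, ← mul_assoc, mono_mul_X, mono_mul_X, PhiG_monomial, one_smul]
  apply NFv_zero_of_wt L k _ (by rw [deg_add2]; omega)
  rw [wt_add2]
  show k ≤ wt L d + posL L b + posL L c
  omega

lemma phiv_kill3 (hsum : L.sum = r) (hpos : ∀ x ∈ L, 0 < x) :
    ∀ p ∈ Ideal.span { p : MvPolynomial (Fin r) ℂ | ∃ a b : ℕ,
      (∃ q ∈ subFam L k, q.1 ≤ a ∧ a + 1 < q.1 + q.2) ∧
      (∃ q ∈ subFam L k, q.1 ≤ b ∧ b + 1 < q.1 + q.2) ∧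
      p = Zv ℂ r a * Zv ℂ r (b + 1) - Zv ℂ r b * Zv ℂ r (a + 1) },
      PhiG (NFv L k) p = 0 := by
  refine phiG_span_zero _ _ ?_
  rintro s ⟨a, b, ha, hb, rfl⟩ q
  apply phiG_mul_zero_of_monomial
  intro d
  obtain ⟨ha1, ha2, ha3⟩ := (pairmem_iff L k a).1 ha
  obtain ⟨hb1, hb2, hb3⟩ := (pairmem_iff L k b).1 hb
  have hsucca := succ_block L a ha1 (by omega)
  have hsuccb := succ_block L b hb1 (by omega)
  have har : a < r := by omega
  have ha'r : a + 1 < r := by omega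
  have hbr : b < r := by omega
  have hb'r : b + 1 < r := by omega
  unfold Zv
  rw [dif_pos har, dif_pos ha'r, dif_pos hbr, dif_pos hb'r]
  rw [mul_sub, ← mul_assoc, ← mul_assoc, mono_mul_X, mono_mul_X, mono_mul_X, mono_mul_X,
    PhiG_sub, PhiG_monomial, PhiG_monomial, one_smul, one_smul]
  have hA : inReg L k a := ⟨ha2, by omega⟩
  have hB : inReg L k b := ⟨hb2, by omega⟩
  have hA' : inReg L k (a + 1) := by
    constructor
    · show k ≤ lenL L (a + 1)
      rw [hsucca.2.1]
      exact ha2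
    · show posL L (a + 1) < k
      rw [hsucca.2.2.1]
      omega
  have hB' : inReg L k (b + 1) := by
    constructor
    · show k ≤ lenL L (b + 1)
      rw [hsuccb.2.1]
      exact hb2
    · show posL L (b + 1) < k
      rw [hsuccb.2.2.1]
      omega
  have hcongr : NFv L k (d + Finsupp.single (⟨a, har⟩ : Fin r) 1 + Finsupp.single (⟨b + 1, hb'r⟩ : Fin r) 1)
      = NFv L k (d + Finsupp.single (⟨b, hbr⟩ : Fin r) 1 + Finsupp.single (⟨a + 1, ha'r⟩ : Fin r) 1) := by
    apply NFv_congr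
    · rw [deg_add2, deg_add2]
    · rw [wt_add2, wt_add2]
      show wt L d + posL L a + posL L (b + 1) = wt L d + posL L b + posL L (a + 1)
      rw [hsucca.2.2.1, hsuccb.2.2.1]
      omega
    · rw [flat_add, flat_add, flat_add, flat_add, flat_single, flat_single, flat_single,
        flat_single]
      rw [sv_succ r L hsum ⟨b, hbr⟩ ⟨b + 1, hb'r⟩ rfl (show posL L b + 1 < lenL L b by omega),
        sv_succ r L hsum ⟨a, har⟩ ⟨a + 1, ha'r⟩ rfl (show posL L a + 1 < lenL L a by omega),
        add_right_comm]
    · rw [deg_add2]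
      omega
    · exact (region_add_iff L k d _ _ hA hB').trans (region_add_iff L k d _ _ hB hA').symm
  rw [hcongr, sub_self]

end KillsV

end Stmt4Aux

namespace Stmt4Aux

variable {r : ℕ}

lemma Zv_eq_X (j : Fin r) : Zv ℂ r (j : ℕ) = X j := by
  unfold Zv
  rw [dif_pos j.2]

lemma le_fam1 {R : Type*} [CommRing R] (I J K : Ideal R) : I ≤ I + J + K := by
  rw [Ideal.add_eq_sup, Ideal.add_eq_sup]
  exact le_trans le_sup_left le_sup_left

lemma le_fam2 {R : Type*} [CommRing R] (I J K : Ideal R) : J ≤ I + J + K := by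
  rw [Ideal.add_eq_sup, Ideal.add_eq_sup]
  exact le_trans le_sup_right le_sup_left

lemma le_fam3 {R : Type*} [CommRing R] (I J K : Ideal R) : K ≤ I + J + K := by
  rw [Ideal.add_eq_sup, Ideal.add_eq_sup]
  exact le_sup_right

section Dir1

variable (r) (L : List ℕ) (k : ℕ)

lemma LmemJ (hsum : L.sum = r) (j : Fin r) (h : ¬ inReg L k (j : ℕ)) :
    (X j : MvPolynomial (Fin r) ℂ) ∈ famIdeal r (subFam L k) := by
  have hmem : (X j : MvPolynomial (Fin r) ℂ) ∈ Ideal.span { p : MvPolynomial (Fin r) ℂ |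
      ∃ j' : ℕ, j' < r ∧ (∀ q ∈ subFam L k, ¬ (q.1 ≤ j' ∧ j' < q.1 + q.2)) ∧ p = Zv ℂ r j' } := by
    apply Ideal.subset_span
    refine ⟨(j : ℕ), j.2, ?_, (Zv_eq_X j).symm⟩
    intro q hq hc
    have hreg := (region_iff L k (j : ℕ)).1 ⟨q, hq, hc⟩
    exact h ⟨hreg.2.1, hreg.2.2⟩
  exact le_fam1 _ _ _ hmem

lemma BCmemJ (hsum : L.sum = r) (hk : 1 ≤ k) (b c : Fin r)
    (hb : k ≤ lenL L (b : ℕ) ∧ 1 ≤ posL L (b : ℕ) ∧ posL L (b : ℕ) < k)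
    (hc : k ≤ lenL L (c : ℕ) ∧ posL L (c : ℕ) = k - 1) :
    (X b * X c : MvPolynomial (Fin r) ℂ) ∈ famIdeal r (subFam L k) := by
  have hmem : (X b * X c : MvPolynomial (Fin r) ℂ) ∈ Ideal.span { p : MvPolynomial (Fin r) ℂ |
      ∃ b' c' : ℕ, (∃ q ∈ subFam L k, q.1 < b' ∧ b' < q.1 + q.2) ∧
      (∃ q ∈ subFam L k, c' = q.1 + q.2 - 1) ∧ p = Zv ℂ r b' * Zv ℂ r c' } := by
    apply Ideal.subset_span
    refine ⟨(b : ℕ), (c : ℕ), (nonmin_iff L k (b : ℕ)).2 ⟨by omega, hb.1, hb.2.1, hb.2.2⟩,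
      (cmax_iff L k hk (c : ℕ)).2 ⟨by omega, hc.1, hc.2⟩, ?_⟩
    rw [Zv_eq_X, Zv_eq_X]
  exact le_fam2 _ _ _ hmem

lemma BINmemJ (hsum : L.sum = r) (a b a' b' : Fin r) (ha' : (a' : ℕ) = (a : ℕ) + 1)
    (hb' : (b' : ℕ) = (b : ℕ) + 1)
    (ha : k ≤ lenL L (a : ℕ) ∧ posL L (a : ℕ) + 1 < k)
    (hb : k ≤ lenL L (b : ℕ) ∧ posL L (b : ℕ) + 1 < k) :
    (X a * X b' - X b * X a' : MvPolynomial (Fin r) ℂ) ∈ famIdeal r (subFam L k) := by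
  have hmem : (X a * X b' - X b * X a' : MvPolynomial (Fin r) ℂ) ∈
      Ideal.span { p : MvPolynomial (Fin r) ℂ | ∃ a'' b'' : ℕ,
      (∃ q ∈ subFam L k, q.1 ≤ a'' ∧ a'' + 1 < q.1 + q.2) ∧
      (∃ q ∈ subFam L k, q.1 ≤ b'' ∧ b'' + 1 < q.1 + q.2) ∧
      p = Zv ℂ r a'' * Zv ℂ r (b'' + 1) - Zv ℂ r b'' * Zv ℂ r (a'' + 1) } := by
    apply Ideal.subset_span
    refine ⟨(a : ℕ), (b : ℕ), (pairmem_iff L k (a : ℕ)).2 ⟨by omega, ha.1, ha.2⟩,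
      (pairmem_iff L k (b : ℕ)).2 ⟨by omega, hb.1, hb.2⟩, ?_⟩
    have e1 : Zv ℂ r ((b : ℕ) + 1) = X b' := by rw [← hb']; exact Zv_eq_X b'
    have e2 : Zv ℂ r ((a : ℕ) + 1) = X a' := by rw [← ha']; exact Zv_eq_X a'
    rw [Zv_eq_X, Zv_eq_X, e1, e2]
  exact le_fam3 _ _ _ hmem

lemma genInJ (hsum : L.sum = r) (hpos : ∀ x ∈ L, 0 < x) (hk : 1 ≤ k) (i j : Fin r) :
    Ev L r j * X i - Ev L r i * X j ∈ famIdeal r (subFam L k) := by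
  have haux : ∀ x y : Fin r, ¬ (k ≤ lenL L (x : ℕ) ∧ posL L (x : ℕ) + 1 < k) →
      Ev L r y * X x ∈ famIdeal r (subFam L k) ∧
      Ev L r x * X y ∈ famIdeal r (subFam L k) := by
    intro x y hx
    have hpltx := posL_lt_lenL L (x : ℕ) (fin_lt_sum r L hsum x)
    constructor
    · -- Ev y * X x
      by_cases hcx : k ≤ lenL L (x : ℕ)
      · by_cases hpxk : posL L (x : ℕ) < k
        · -- pos x = k - 1 : x is a c-type variable
          have hpx : posL L (x : ℕ) = k - 1 := by omega
          by_cases hy : posL L (y : ℕ) + 1 < lenL L (y : ℕ)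
          · have hyr : (y : ℕ) + 1 < r := by
              have h1 := stL_add_posL L (y : ℕ) (fin_lt_sum r L hsum y)
              have h2 := stL_add_lenL_le L (y : ℕ) (fin_lt_sum r L hsum y)
              omega
            set y' : Fin r := ⟨(y : ℕ) + 1, hyr⟩ with hy'def
            have hEy : Ev L r y = X y' := Ev_eq_X r L hsum y y' rfl hy
            have hsuccy := succ_block L (y : ℕ) (fin_lt_sum r L hsum y) hy
            rw [hEy]
            by_cases hreg : inReg L k ((y' : Fin r) : ℕ)
            · exact BCmemJ r L k hsum hk y' x
                ⟨hreg.1, by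
                  show 1 ≤ posL L ((y : ℕ) + 1)
                  rw [hsuccy.2.2.1]; omega, hreg.2⟩ ⟨hcx, hpx⟩
            · exact Ideal.mul_mem_right _ _ (LmemJ r L k hsum y' hreg)
          · have hEy : Ev L r y = 0 := by unfold Ev; rw [if_neg hy]
            rw [hEy, zero_mul]
            exact zero_mem _
        · -- pos x ≥ k : x outside region
          have hxout : ¬ inReg L k (x : ℕ) := fun hc => hpxk hc.2
          exact Ideal.mul_mem_left _ _ (LmemJ r L k hsum x hxout)
      · have hxout : ¬ inReg L k (x : ℕ) := fun hc => hcx hc.1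
        exact Ideal.mul_mem_left _ _ (LmemJ r L k hsum x hxout)
    · -- Ev x * X y
      by_cases hx2 : posL L (x : ℕ) + 1 < lenL L (x : ℕ)
      · have hxr : (x : ℕ) + 1 < r := by
          have h1 := stL_add_posL L (x : ℕ) (fin_lt_sum r L hsum x)
          have h2 := stL_add_lenL_le L (x : ℕ) (fin_lt_sum r L hsum x)
          omega
        set x' : Fin r := ⟨(x : ℕ) + 1, hxr⟩ with hx'def
        have hEx : Ev L r x = X x' := Ev_eq_X r L hsum x x' rfl hx2
        have hsuccx := succ_block L (x : ℕ) (fin_lt_sum r L hsum x) hx2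
        have hx'out : ¬ inReg L k ((x' : Fin r) : ℕ) := by
          intro hc
          have h1 : k ≤ lenL L ((x : ℕ) + 1) := hc.1
          have h2 : posL L ((x : ℕ) + 1) < k := hc.2
          rw [hsuccx.2.1] at h1
          rw [hsuccx.2.2.1] at h2
          omega
        rw [hEx]
        exact Ideal.mul_mem_right _ _ (LmemJ r L k hsum x' hx'out)
      · have hEx : Ev L r x = 0 := by unfold Ev; rw [if_neg hx2]
        rw [hEx, zero_mul]
        exact zero_mem _
  by_cases hi : k ≤ lenL L (i : ℕ) ∧ posL L (i : ℕ) + 1 < k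
  · by_cases hj : k ≤ lenL L (j : ℕ) ∧ posL L (j : ℕ) + 1 < k
    · -- genuine binomial
      have hplti := posL_lt_lenL L (i : ℕ) (fin_lt_sum r L hsum i)
      have hpltj := posL_lt_lenL L (j : ℕ) (fin_lt_sum r L hsum j)
      have hir : (i : ℕ) + 1 < r := by
        have h1 := stL_add_posL L (i : ℕ) (fin_lt_sum r L hsum i)
        have h2 := stL_add_lenL_le L (i : ℕ) (fin_lt_sum r L hsum i)
        omega
      have hjr : (j : ℕ) + 1 < r := by
        have h1 := stL_add_posL L (j : ℕ) (fin_lt_sum r L hsum j)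
        have h2 := stL_add_lenL_le L (j : ℕ) (fin_lt_sum r L hsum j)
        omega
      set i' : Fin r := ⟨(i : ℕ) + 1, hir⟩ with hi'def
      set j' : Fin r := ⟨(j : ℕ) + 1, hjr⟩ with hj'def
      have hEi : Ev L r i = X i' := Ev_eq_X r L hsum i i' rfl (by omega)
      have hEj : Ev L r j = X j' := Ev_eq_X r L hsum j j' rfl (by omega)
      have heq : Ev L r j * X i - Ev L r i * X j = X i * X j' - X j * X i' := by
        rw [hEi, hEj]
        ring
      rw [heq]
      exact BINmemJ r L k hsum i j i' j' rfl rfl ⟨hi.1, hi.2⟩ ⟨hj.1, hj.2⟩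
    · obtain ⟨h1, h2⟩ := haux j i hj
      exact sub_mem h2 h1
  · obtain ⟨h1, h2⟩ := haux i j hi
    exact sub_mem h1 h2
end Dir1

end Stmt4Aux

namespace Stmt4Aux

variable {r : ℕ}

lemma deg_eq_sum (d : Fin r →₀ ℕ) : deg d = ∑ a ∈ d.support, d a := rfl

lemma deg_zero : deg (0 : Fin r →₀ ℕ) = 0 := Finsupp.sum_zero_index

lemma deg_eq_zero (d : Fin r →₀ ℕ) (h : deg d = 0) : d = 0 := by
  by_contra hc
  obtain ⟨a, ha⟩ := Finsupp.support_nonempty_iff.2 hc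
  have h1 : 1 ≤ d a := Nat.one_le_iff_ne_zero.2 (Finsupp.mem_support_iff.1 ha)
  have h2 : d a ≤ deg d := by
    rw [deg_eq_sum]
    exact Finset.single_le_sum (f := fun b : Fin r => d b) (fun _ _ => Nat.zero_le _) ha
  omega

lemma deg_eq_one (d : Fin r →₀ ℕ) (h : deg d = 1) : ∃ a, d = Finsupp.single a 1 := by
  have hne : d.support.Nonempty := deg_supp_nonempty d (by omega)
  obtain ⟨a, ha⟩ := hne
  have h1 : 1 ≤ d a := Nat.one_le_iff_ne_zero.2 (Finsupp.mem_support_iff.1 ha)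
  have h2 : d a ≤ deg d := by
    rw [deg_eq_sum]
    exact Finset.single_le_sum (f := fun b : Fin r => d b) (fun _ _ => Nat.zero_le _) ha
  refine ⟨a, ?_⟩
  ext b
  rw [Finsupp.single_apply]
  by_cases hba : a = b
  · subst hba
    rw [if_pos rfl]
    omega
  · rw [if_neg hba]
    by_contra hc
    have hb : b ∈ d.support := Finsupp.mem_support_iff.2 hc
    have hsub : ({a, b} : Finset (Fin r)) ⊆ d.support := by
      intro x hx
      rcases Finset.mem_insert.1 hx with rfl | hx
      · exact ha
      · rw [Finset.mem_singleton] at hx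
        subst hx
        exact hb
    have h3 : d a + d b ≤ deg d := by
      rw [deg_eq_sum]
      calc d a + d b = ∑ x ∈ ({a, b} : Finset (Fin r)), d x :=
            (Finset.sum_pair hba).symm
        _ ≤ ∑ x ∈ d.support, d x := Finset.sum_le_sum_of_subset hsub
    omega

lemma wt_zero_of_pos_zero (L : List ℕ) (d : Fin r →₀ ℕ)
    (h : ∀ a ∈ d.support, posL L (a : ℕ) = 0) : wt L d = 0 := by
  rw [wt_eq_sum]
  exact Finset.sum_eq_zero fun a ha => by rw [h a ha, Nat.mul_zero]

lemma flat_supp_start (L : List ℕ) (hsum : L.sum = r) (d : Fin r →₀ ℕ) {b : Fin r}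
    (hb : b ∈ (flat L d).support) :
    stL L (b : ℕ) = (b : ℕ) ∧ posL L (b : ℕ) = 0 := by
  obtain ⟨a, _, rfl⟩ := (mem_flat_support L d b).1 hb
  have hspec := sv_spec r L hsum a
  exact ⟨by rw [hspec.1]; rfl, hspec.2.2⟩

lemma canon_invariants (L : List ℕ) (hsum : L.sum = r) (d : Fin r →₀ ℕ) (h2 : 2 ≤ deg d)
    (hwt : wt L d < minlen L d) :
    deg (canon (flat L d) (wt L d)) = deg d ∧ wt L (canon (flat L d) (wt L d)) = wt L d ∧
    flat L (canon (flat L d) (wt L d)) = flat L d := by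
  have hne : (flat L d).support.Nonempty := deg_supp_nonempty _ (by rw [deg_flat]; omega)
  obtain ⟨a₀, ha₀⟩ := Finset.min_of_nonempty hne
  have ha₀mem := Finset.mem_of_min ha₀
  have hstart := flat_supp_start L hsum d ha₀mem
  have hlen := minlen_le' L d ha₀mem
  have hplt := posL_lt_lenL L ((a₀ : Fin r) : ℕ) (fin_lt_sum r L hsum a₀)
  have hs := hsum
  have hbound : ((a₀ : Fin r) : ℕ) + wt L d < r := by
    have h2' := stL_add_lenL_le L ((a₀ : Fin r) : ℕ) (fin_lt_sum r L hsum a₀)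
    omega
  have hsval : ((shiftV a₀ (wt L d) : Fin r) : ℕ) = ((a₀ : Fin r) : ℕ) + wt L d := by
    unfold shiftV
    rw [dif_pos hbound]
  have hblock := isBlock_of_lt L ((a₀ : Fin r) : ℕ) (fin_lt_sum r L hsum a₀)
  have hdet := isBlock_determines L hblock
    (show stL L ((a₀ : Fin r) : ℕ) ≤ ((shiftV a₀ (wt L d) : Fin r) : ℕ) by omega)
    (show ((shiftV a₀ (wt L d) : Fin r) : ℕ) < stL L ((a₀ : Fin r) : ℕ) + lenL L ((a₀ : Fin r) : ℕ)
      by omega)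
  have hsv_s : sv L (shiftV a₀ (wt L d)) = a₀ :=
    Fin.ext (show stL L ((shiftV a₀ (wt L d) : Fin r) : ℕ) = ((a₀ : Fin r) : ℕ) by omega)
  have hpos_s : posL L ((shiftV a₀ (wt L d) : Fin r) : ℕ) = wt L d := by omega
  have hfa₀ : 1 ≤ flat L d a₀ := Nat.one_le_iff_ne_zero.2 (Finsupp.mem_support_iff.1 ha₀mem)
  have hle : Finsupp.single a₀ 1 ≤ flat L d := by
    rw [Finsupp.le_def]
    intro a
    rw [Finsupp.single_apply]
    by_cases haa : a₀ = a
    · subst haa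
      rw [if_pos rfl]
      omega
    · rw [if_neg haa]
      exact Nat.zero_le _
  have hsplit : flat L d = (flat L d - Finsupp.single a₀ 1) + Finsupp.single a₀ 1 :=
    (tsub_add_cancel_of_le hle).symm
  have hcanon := canon_eq_of_min (flat L d) (wt L d) ha₀
  have hgzero : ∀ a : Fin r, a ∈ (flat L d - Finsupp.single a₀ 1).support →
      posL L (a : ℕ) = 0 :=
    fun a ha => (flat_supp_start L hsum d (Finsupp.support_tsub ha)).2
  refine ⟨?_, ?_, ?_⟩
  · rw [hcanon, deg_add, deg_single]
    have hdegf : deg (flat L d) = deg (flat L d - Finsupp.single a₀ 1) + 1 := by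
      conv_lhs => rw [hsplit]
      rw [deg_add, deg_single]
    have hdf := deg_flat L d
    omega
  · rw [hcanon, wt_add, wt_single, one_mul, hpos_s,
      wt_zero_of_pos_zero L _ hgzero, zero_add]
  · rw [hcanon, flat_add, flat_single, hsv_s,
      flat_eq_self L hsum _ hgzero]
    exact hsplit.symm

lemma NF_shape (L : List ℕ) (hsum : L.sum = r) (d : Fin r →₀ ℕ) :
    NF L d = 0 ∨ ∃ e, NF L d = monomial e 1 ∧ NF L e = monomial e 1 := by
  by_cases h1 : deg d ≤ 1
  · right
    refine ⟨d, ?_, ?_⟩ <;> (unfold NF; rw [if_pos h1])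
  · by_cases h2 : wt L d < minlen L d
    · right
      have hNFd : NF L d = monomial (canon (flat L d) (wt L d)) 1 := by
        unfold NF
        rw [if_neg h1, if_pos h2]
      refine ⟨canon (flat L d) (wt L d), hNFd, ?_⟩
      obtain ⟨hdeg, hwt, hflat⟩ := canon_invariants L hsum d (by omega) h2
      have hml : minlen L (canon (flat L d) (wt L d)) = minlen L d := by
        unfold minlen
        rw [hflat]
      unfold NF
      rw [if_neg (by omega : ¬ deg (canon (flat L d) (wt L d)) ≤ 1),
        if_pos (by rw [hwt, hml]; exact h2), hflat, hwt]
    · left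
      unfold NF
      rw [if_neg h1, if_neg h2]

lemma canon_extract (L : List ℕ) (d : Fin r →₀ ℕ) (hC : NF L d = monomial d 1)
    (h1 : ¬ deg d ≤ 1) : wt L d < minlen L d ∧ canon (flat L d) (wt L d) = d := by
  unfold NF at hC
  rw [if_neg h1] at hC
  by_cases h2 : wt L d < minlen L d
  · rw [if_pos h2] at hC
    rcases (monomial_eq_monomial_iff _ _ _ _).1 hC with ⟨heq, _⟩ | ⟨h0, _⟩
    · exact ⟨h2, heq⟩
    · exact absurd h0 one_ne_zero
  · rw [if_neg h2] at hC
    exact absurd hC.symm (fun h => one_ne_zero (monomial_eq_zero.1 h))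

lemma NFv_shape (L : List ℕ) (k : ℕ) (d : Fin r →₀ ℕ) (hC : NF L d = monomial d 1) :
    NFv L k d = 0 ∨ NFv L k d = monomial d 1 := by
  unfold NFv
  by_cases hreg : ∀ a ∈ d.support, inReg L k (a : ℕ)
  · rw [if_pos hreg]
    by_cases h1 : deg d ≤ 1
    · right
      rw [if_pos h1]
    · rw [if_neg h1]
      by_cases h2 : wt L d < k
      · right
        rw [if_pos h2, (canon_extract L d hC h1).2]
      · left
        rw [if_neg h2]
  · left
    rw [if_neg hreg]

end Stmt4Aux

namespace Stmt4Aux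

variable {r : ℕ}

section Reach2

variable (r) (L : List ℕ) (lam : ℂ)

lemma phi_reach (hsum : L.sum = r) (hpos : ∀ x ∈ L, 0 < x) (p : MvPolynomial (Fin r) ℂ) :
    p - PhiG (NF L) p ∈ higgsIdeal (jordanBlocks ℂ r L lam) := by
  induction p using MvPolynomial.induction_on' with
  | monomial u a =>
    rw [PhiG_monomial]
    have h1 : (monomial u a : MvPolynomial (Fin r) ℂ) - a • NF L u
        = a • (monomial u 1 - NF L u) := by
      rw [smul_sub, smul_monomial, smul_eq_mul, mul_one]
    rw [h1, smul_eq_C_mul]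
    exact Ideal.mul_mem_left _ _ (reach r L lam hsum hpos u)
  | add p q hp hq =>
    have h1 : p + q - PhiG (NF L) (p + q)
        = (p - PhiG (NF L) p) + (q - PhiG (NF L) q) := by
      rw [PhiG_add]
      ring
    rw [h1]
    exact add_mem hp hq

end Reach2

end Stmt4Aux


open Stmt4Aux in
/-- Theorem 3.10: the intersection decomposition `I_φ = ⋂_{v=1}^s I_{V_v}` of the ideal
of the Higgs Grassmannian of a Jordan-type Higgs field with a single eigenvalue. -/
theorem stmt4 (s : ℕ) (hs : 1 ≤ s) (iv m : Fin s → ℕ)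
    (hdec : StrictAnti iv) (hipos : ∀ v, 1 ≤ iv v) (hmpos : ∀ v, 1 ≤ m v)
    (r : ℕ) (hr : r = ∑ v, m v * iv v) (lam : ℂ)
    (L : List ℕ) (hL : L = (List.ofFn fun v => List.replicate (m v) (iv v)).flatten) :
    higgsIdeal (jordanBlocks ℂ r L lam) = ⨅ v : Fin s, famIdeal r (subFam L (iv v)) := by
  have hsum : L.sum = r := by
    rw [hL, List.sum_flatten, List.map_ofFn, List.sum_ofFn, hr]
    apply Finset.sum_congr rfl
    intro v _
    show (List.replicate (m v) (iv v)).sum = m v * iv v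
    rw [List.sum_replicate, smul_eq_mul]
  have hposL : ∀ x ∈ L, 0 < x := by
    intro x hx
    rw [hL, List.mem_flatten] at hx
    obtain ⟨l, hl, hxl⟩ := hx
    rw [List.mem_ofFn] at hl
    obtain ⟨v, rfl⟩ := hl
    rw [List.mem_replicate] at hxl
    rw [hxl.2]
    exact hipos v
  have hentry : ∀ x ∈ L, ∃ v : Fin s, x = iv v := by
    intro x hx
    rw [hL, List.mem_flatten] at hx
    obtain ⟨l, hl, hxl⟩ := hx
    rw [List.mem_ofFn] at hl
    obtain ⟨v, rfl⟩ := hl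
    rw [List.mem_replicate] at hxl
    exact ⟨v, hxl.2⟩
  have hle : higgsIdeal (jordanBlocks ℂ r L lam) ≤ ⨅ v : Fin s, famIdeal r (subFam L (iv v)) := by
    apply le_iInf
    intro v
    apply Ideal.span_le.2
    rintro p ⟨i, j, hij, rfl⟩
    rw [SetLike.mem_coe, genEq r L lam hsum hposL i j]
    exact genInJ r L (iv v) hsum hposL (hipos v) i j
  refine le_antisymm hle ?_
  intro p hp
  have hpq : p - PhiG (NF L) p ∈ higgsIdeal (jordanBlocks ℂ r L lam) :=
    phi_reach r L lam hsum hposL p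
  set q := PhiG (NF L) p with hqdef
  have hqJ : ∀ v : Fin s, q ∈ famIdeal r (subFam L (iv v)) := by
    intro v
    have h1 : p ∈ famIdeal r (subFam L (iv v)) := Ideal.mem_iInf.1 hp v
    have h2 : p - q ∈ famIdeal r (subFam L (iv v)) := Ideal.mem_iInf.1 (hle hpq) v
    have h3 : q = p - (p - q) := by ring
    rw [h3]
    exact sub_mem h1 h2
  have hqz : ∀ v : Fin s, PhiG (NFv L (iv v)) q = 0 := by
    intro v
    have hq' := hqJ v
    unfold famIdeal at hq'
    rw [Ideal.add_eq_sup, Ideal.add_eq_sup, Submodule.mem_sup] at hq'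
    obtain ⟨y, hy, z, hz, heq⟩ := hq'
    rw [Submodule.mem_sup] at hy
    obtain ⟨y1, hy1, y2, hy2, heq2⟩ := hy
    rw [← heq, ← heq2, PhiG_add, PhiG_add]
    rw [phiv_kill1 r L (iv v) hsum y1 hy1, phiv_kill2 r L (iv v) hsum (hipos v) y2 hy2,
      phiv_kill3 r L (iv v) hsum hposL z hz]
    ring
  have hCanon : ∀ e' : Fin r →₀ ℕ, coeff e' q ≠ 0 → NF L e' = monomial e' 1 := by
    intro e' he'
    rw [hqdef, coeff_PhiG, Finsupp.sum] at he'
    obtain ⟨d, _, hne0⟩ := Finset.exists_ne_zero_of_sum_ne_zero he'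
    have hne1 : coeff e' (NF L d) ≠ 0 := fun h => hne0 (by rw [h, mul_zero])
    rcases NF_shape L hsum d with h0 | ⟨e'', h1, h2⟩
    · rw [h0] at hne1
      simp at hne1
    · rw [h1, coeff_monomial] at hne1
      by_cases hee : e'' = e'
      · rw [← hee]
        exact h2
      · rw [if_neg hee] at hne1
        simp at hne1
  have hq0 : q = 0 := by
    apply MvPolynomial.ext
    intro e
    rw [coeff_zero]
    by_contra hc0
    have hCe := hCanon e hc0
    have hex : ∃ v : Fin s, NFv L (iv v) e = monomial e 1 := by
      by_cases hdeg1 : deg e ≤ 1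
      · by_cases hdeg0 : deg e = 0
        · have he0 : e = 0 := deg_eq_zero e hdeg0
          refine ⟨⟨0, hs⟩, ?_⟩
          subst he0
          unfold NFv
          rw [if_pos (by
            intro a ha
            rw [Finsupp.support_zero] at ha
            exact absurd ha (Finset.notMem_empty a)),
            if_pos (by rw [deg_zero]; omega)]
        · have hdeg1' : deg e = 1 := by omega
          obtain ⟨a, rfl⟩ := deg_eq_one e hdeg1'
          obtain ⟨v, hvlen⟩ := hentry (lenL L (a : ℕ))
            (lenL_mem L (a : ℕ) (fin_lt_sum r L hsum a))
          refine ⟨v, ?_⟩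
          unfold NFv
          have hplt := posL_lt_lenL L (a : ℕ) (fin_lt_sum r L hsum a)
          rw [if_pos (by
            intro x hx
            rw [Finsupp.support_single_ne_zero a one_ne_zero, Finset.mem_singleton] at hx
            subst hx
            exact ⟨by omega, by omega⟩),
            if_pos (by rw [deg_single])]
      · have h2 : 2 ≤ deg e := by omega
        obtain ⟨hlive, hcan⟩ := canon_extract L e hCe hdeg1
        obtain ⟨b, hbmem, hblen⟩ := minlen_attained L e h2
        obtain ⟨v, hvlen⟩ := hentry (lenL L (b : ℕ))
          (lenL_mem L (b : ℕ) (fin_lt_sum r L hsum b))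
        refine ⟨v, ?_⟩
        have hk : iv v = minlen L e := by rw [← hvlen, hblen]
        unfold NFv
        rw [if_pos (by
          intro x hx
          constructor
          · rw [hk]
            exact minlen_le L e hsum hx
          · have := pos_le_wt L e hx
            omega),
          if_neg hdeg1, if_pos (by omega), hcan]
    obtain ⟨v, hv⟩ := hex
    have hcoeff : coeff e (PhiG (NFv L (iv v)) q) = coeff e q := by
      rw [coeff_PhiG, Finsupp.sum]
      rw [Finset.sum_eq_single_of_mem e (by rw [Finsupp.mem_support_iff]; exact hc0)]
      · show coeff e q * coeff e (NFv L (iv v) e) = coeff e q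
        rw [hv, coeff_monomial, if_pos rfl, mul_one]
      · intro d hd hde
        have hCd := hCanon d (Finsupp.mem_support_iff.1 hd)
        rcases NFv_shape L (iv v) d hCd with h0 | h1
        · rw [h0, coeff_zero, mul_zero]
        · rw [h1, coeff_monomial, if_neg hde, mul_zero]
    rw [hqz v, coeff_zero] at hcoeff
    exact hc0 hcoeff.symm
  rw [hq0, sub_zero] at hpq
  exact hpq
end

section
/- Let R be a commutative ℂ-algebra and n ≥ 1, r ≥ 2. Let A₁,…,A_s be consecutive intervals partitioning {1,…,r} and let λ₁,…,λ_s ∈ ℂ be pairwise distinct. Let φ^{(1)} ∈ Mat_{r×r}(ℂ) ⊆ Mat_{r×r}(R) be block diagonal with Jordan block J_{|A_v|}(λ_v) along the interval A_v for each v, and let φ^{(2)},…,φ^{(n)} ∈ Mat_{r×r}(R) be matrices each commuting with φ^{(1)} and pairwise commuting. Then in R[z₁,…,z_r] one has ∑_{h=1}^n I_{φ^{(h)}} = I_{φ^{(1)}} = ⋂_{v=1}^s ( (z_a : a ∉ A_v) + H_{A_v} ), where H_{A_v} is the ideal generated by the binomials z_a z_{b+1} − z_b z_{a+1} for a, a+1,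 b, b+1 ∈ A_v together with the monomials z_a z_{max A_v} for a ∈ A_v \ {min A_v}. -/
open MvPolynomial

/-- The index of the block (interval of the partition determined by `L`) containing `a`. -/
def blockIdx (L : List ℕ) (a : ℕ) : ℕ := ((starts L).filter fun t => decide (t ≤ a)).length - 1

/-- The block-diagonal matrix whose diagonal blocks are the Jordan blocks with eigenvalue
`lam v` along the `v`-th consecutive interval of the partition of lengths `L`. -/
noncomputable def jordanMulti (R : Type*) [CommRing R] (r : ℕ) (L : List ℕ) (lam : ℕ → R) :
    Matrix (Fin r) (Fin r) R :=
  Matrix.of fun a b =>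
    if (a : ℕ) = (b : ℕ) then lam (blockIdx L (a : ℕ))
    else if (b : ℕ) = (a : ℕ) + 1 ∧ (b : ℕ) ∉ starts L then 1 else 0

/-- The ideal `H_A` attached to the interval `q = (start, length)`: binomials
`z_a z_{b+1} − z_b z_{a+1}` for `a, a+1, b, b+1 ∈ A`, together with the monomials
`z_a z_{max A}` for `a ∈ A \ {min A}` (0-based indices). -/
noncomputable def Hblock (R : Type*) [CommRing R] (r : ℕ) (q : ℕ × ℕ) :
    Ideal (MvPolynomial (Fin r) R) :=
  Ideal.span ({ p | ∃ a b : ℕ, q.1 ≤ a ∧ a + 1 < q.1 + q.2 ∧ q.1 ≤ b ∧ b + 1 < q.1 + q.2 ∧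
      p = Zv R r a * Zv R r (b + 1) - Zv R r b * Zv R r (a + 1) } ∪
    { p | ∃ a : ℕ, q.1 < a ∧ a < q.1 + q.2 ∧ p = Zv R r a * Zv R r (q.1 + q.2 - 1) })

/-!
Write `Z = z zᵀ`. The generators of `I_M` are the entries of `M Z - Z Mᵀ`, so `I_M ⊆ I`
exactly when `M Z = Z Mᵀ` over `R[z] ⧸ I`. For the Jordan matrix `J`, the equation `J W = W Jᵀ` says
entrywise, the eigenvalue differences being units, that `W` vanishes off the diagonal blocks and
is on each block a Hankel matrix vanishing beyond the last row; for `W = Z` these conditions are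
the vanishing of the mixed monomials `z_a z_b` and of the generators of every `H_A`. Such `W` are
symmetric.

Modulo `P_A = (z_a : a ∉ A) + H_A`, `Z` has this shape; if `N` commutes with `J`, then
`N Z - Z Nᵀ` is antisymmetric and solves `J W = W Jᵀ`, so it vanishes as `2` is invertible:
`I_N ⊆ P_A`. Conversely, modulo `I_J` the mixed monomials and all `H_A` vanish, and a polynomial
in `⋂ P_A` is, modulo mixed monomials, the sum of its restrictions to the blocks, the restriction
to `A` lying in `H_A`.
-/

open Matrix

namespace Higgs

section JordanCommutation

variable {S : Type*} [CommRing S] {r : ℕ}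

/-- Extending by zero lets neighbouring indices `a + 1` be used without wrapping around
`Fin r`. -/
def natEntry (W : Matrix (Fin r) (Fin r) S) (a b : ℕ) : S :=
  if h : a < r ∧ b < r then W ⟨a, h.1⟩ ⟨b, h.2⟩ else 0

@[simp]
lemma natEntry_coe (W : Matrix (Fin r) (Fin r) S) (i j : Fin r) : natEntry W i j = W i j := by
  simp [natEntry]

lemma natEntry_of_le_left (W : Matrix (Fin r) (Fin r) S) {a : ℕ} (ha : r ≤ a) (b : ℕ) :
    natEntry W a b = 0 :=
  dif_neg fun h => by omega

lemma natEntry_of_le_right (W : Matrix (Fin r) (Fin r) S) (a : ℕ) {b : ℕ} (hb : r ≤ b) :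
    natEntry W a b = 0 :=
  dif_neg fun h => by omega

@[simp]
lemma natEntry_transpose (W : Matrix (Fin r) (Fin r) S) (a b : ℕ) :
    natEntry Wᵀ a b = natEntry W b a := by
  simp only [natEntry, and_comm (a := a < r), transpose_apply]

/-- The block-diagonal Jordan matrix whose blocks are the fibres of `β` (intervals when `β` is
monotone), with eigenvalue `μ v` on the block `β ⁻¹' {v}`. -/
def jordanOf (r : ℕ) (μ : ℕ → S) (β : ℕ → ℕ) : Matrix (Fin r) (Fin r) S :=
  Matrix.of fun i j =>
    if (i : ℕ) = j then μ (β i) else if (j : ℕ) = i + 1 ∧ β i = β j then 1 else 0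

variable (μ : ℕ → S) (β : ℕ → ℕ)

lemma jordanOf_mul_apply (W : Matrix (Fin r) (Fin r) S) (i j : Fin r) :
    (jordanOf r μ β * W) i j =
      μ (β i) * W i j + if β i = β (i + 1) then natEntry W (i + 1) j else 0 := by
  have hterm : ∀ k : Fin r, jordanOf r μ β i k * W k j =
      (if i = k then μ (β i) * W i j else 0) +
        if (k : ℕ) = i + 1 then (if β i = β (i + 1) then natEntry W (i + 1) j else 0) else 0 := by
    intro k
    by_cases hik : i = k
    · subst hik; simp [jordanOf]
    · have hik' : (i : ℕ) ≠ k := fun h => hik (Fin.ext h)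
      by_cases hk : (k : ℕ) = i + 1
      · have : natEntry W (i + 1) j = W k j := by rw [← hk, natEntry_coe]
        simp [jordanOf, hik, hk, this, eq_comm]
      · simp [jordanOf, hik, hik', hk]
  rw [mul_apply, Finset.sum_congr rfl fun k _ => hterm k, Finset.sum_add_distrib,
    Finset.sum_ite_eq, if_pos (Finset.mem_univ _),
    Fin.sum_univ_eq_sum_range (fun k => if k = (i : ℕ) + 1 then _ else 0), Finset.sum_ite_eq']
  by_cases hi : (i : ℕ) + 1 < r
  · simp [hi]
  · simp [hi, natEntry_of_le_left W (not_lt.mp hi)]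

lemma mul_transpose_jordanOf_apply (W : Matrix (Fin r) (Fin r) S) (i j : Fin r) :
    (W * (jordanOf r μ β)ᵀ) i j =
      μ (β j) * W i j + if β j = β (j + 1) then natEntry W i (j + 1) else 0 := by
  rw [← transpose_apply (W * _), transpose_mul, transpose_transpose, jordanOf_mul_apply]
  simp only [transpose_apply, natEntry_transpose]

/-- `W` vanishes off the diagonal blocks and, on each block, is a Hankel matrix whose entries
vanish beyond the last row: the entrywise form of `J * W = W * Jᵀ`. -/
def IsBlockHankel (β : ℕ → ℕ) (W : Matrix (Fin r) (Fin r) S) : Prop :=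
  (∀ a b, β a ≠ β b → natEntry W a b = 0) ∧
    ∀ a b, β a = β b →
      (if β a = β (a + 1) then natEntry W (a + 1) b else 0) =
        if β b = β (b + 1) then natEntry W a (b + 1) else 0

variable {μ β}

lemma IsBlockHankel.jordanOf_mul_eq {W : Matrix (Fin r) (Fin r) S} (hW : IsBlockHankel β W) :
    jordanOf r μ β * W = W * (jordanOf r μ β)ᵀ := by
  ext i j
  rw [jordanOf_mul_apply, mul_transpose_jordanOf_apply]
  by_cases hij : β i = β j
  · rw [hW.2 i j hij, hij]
  · have hi : (if β i = β (i + 1) then natEntry W (i + 1) j else 0) = 0 := by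
      split_ifs with h
      · exact hW.1 _ _ (h ▸ hij)
      · rfl
    have hj : (if β j = β (j + 1) then natEntry W i (j + 1) else 0) = 0 := by
      split_ifs with h
      · exact hW.1 _ _ (h ▸ hij)
      · rfl
    rw [hi, hj, ← natEntry_coe W i j, hW.1 _ _ hij, mul_zero, mul_zero]

lemma isBlockHankel_of_jordanOf_mul_eq
    (hμ : ∀ a b, a < r → b < r → β a ≠ β b → IsUnit (μ (β a) - μ (β b)))
    {W : Matrix (Fin r) (Fin r) S} (hW : jordanOf r μ β * W = W * (jordanOf r μ β)ᵀ) :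
    IsBlockHankel β W := by
  have hrel : ∀ a b, a < r → b < r → (μ (β a) - μ (β b)) * natEntry W a b =
      (if β b = β (b + 1) then natEntry W a (b + 1) else 0) -
        if β a = β (a + 1) then natEntry W (a + 1) b else 0 := by
    intro a b ha hb
    have h := congrFun (congrFun hW ⟨a, ha⟩) ⟨b, hb⟩
    rw [jordanOf_mul_apply, mul_transpose_jordanOf_apply] at h
    rw [← natEntry_coe W ⟨a, ha⟩ ⟨b, hb⟩] at h
    linear_combination h
  -- descending induction on `a + b`, dividing by the difference of eigenvalues
  have hcross : ∀ n a b, 2 * r - (a + b) = n → β a ≠ β b → natEntry W a b = 0 := by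
    intro n
    induction n using Nat.strong_induction_on with
    | _ n ih =>
      intro a b hn hab
      rcases lt_or_ge a r with ha | ha
      swap
      · exact natEntry_of_le_left W ha b
      rcases lt_or_ge b r with hb | hb
      swap
      · exact natEntry_of_le_right W a hb
      have hb' : (if β b = β (b + 1) then natEntry W a (b + 1) else 0) = 0 := by
        split_ifs with h
        · exact ih _ (by omega) a (b + 1) rfl (h ▸ hab)
        · rfl
      have ha' : (if β a = β (a + 1) then natEntry W (a + 1) b else 0) = 0 := by
        split_ifs with h
        · exact ih _ (by omega) (a + 1) b rfl (h ▸ hab)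
        · rfl
      have h := hrel a b ha hb
      rw [ha', hb', sub_zero] at h
      exact (hμ a b ha hb hab).mul_right_eq_zero.mp h
  refine ⟨fun a b => hcross _ a b rfl, fun a b hab => ?_⟩
  rcases lt_or_ge a r with ha | ha
  swap
  · simp [natEntry_of_le_left W ha, natEntry_of_le_left W (show r ≤ a + 1 by omega)]
  rcases lt_or_ge b r with hb | hb
  swap
  · simp [natEntry_of_le_right W _ hb, natEntry_of_le_right W _ (show r ≤ b + 1 by omega)]
  have h := hrel a b ha hb
  rw [sub_eq_zero.mpr (congrArg μ hab), zero_mul] at h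
  exact (sub_eq_zero.mp h.symm).symm

lemma IsBlockHankel.transpose_eq (hβ : Monotone β) {W : Matrix (Fin r) (Fin r) S}
    (hW : IsBlockHankel β W) : Wᵀ = W := by
  have hsymm : ∀ d a b, b = a + d → β a = β b → natEntry W a b = natEntry W b a := by
    intro d
    induction d using Nat.strong_induction_on with
    | _ d ih =>
      intro a b hd hab
      rcases Nat.eq_zero_or_pos d with rfl | hd0
      · rw [hd, add_zero]
      have hβa : β (a + 1) = β a := le_antisymm (hab ▸ hβ (by omega)) (hβ (by omega))
      have hβb : β (b - 1) = β b := le_antisymm (hβ (by omega)) (hab ▸ hβ (by omega))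
      have hleft := hW.2 a (b - 1) (by rw [hβb, hab])
      have hright := hW.2 (b - 1) a (by rw [hβb, hab])
      rw [if_pos hβa.symm, if_pos (by rw [Nat.sub_add_cancel (by omega), hβb]),
        Nat.sub_add_cancel (by omega)] at hleft hright
      rcases Nat.lt_or_ge d 2 with hd1 | hd2
      · rw [← hleft, show a + 1 = b by omega, show b - 1 = a by omega]
      · rw [← hleft, hright]
        exact ih (d - 2) (by omega) _ _ (by omega) (by rw [hβa, hβb, hab])
  ext i j
  rw [transpose_apply, ← natEntry_coe W i j, ← natEntry_coe W j i]
  rcases le_total (i : ℕ) j with hij | hij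
  · by_cases hβij : β i = β j
    · exact (hsymm _ _ _ (Nat.add_sub_cancel' hij).symm hβij).symm
    · rw [hW.1 _ _ hβij, hW.1 _ _ (Ne.symm hβij)]
  · by_cases hβij : β j = β i
    · exact hsymm _ _ _ (Nat.add_sub_cancel' hij).symm hβij
    · rw [hW.1 _ _ hβij, hW.1 _ _ (Ne.symm hβij)]

/-- `N * Y - Y * Nᵀ` is antisymmetric and again solves `J * W = W * Jᵀ`, so it is also symmetric,
hence zero. -/
lemma mul_eq_mul_transpose_of_commute (h2 : IsUnit (2 : S)) (hβ : Monotone β)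
    (hμ : ∀ a b, a < r → b < r → β a ≠ β b → IsUnit (μ (β a) - μ (β b)))
    {N Y : Matrix (Fin r) (Fin r) S} (hY : jordanOf r μ β * Y = Y * (jordanOf r μ β)ᵀ)
    (hYt : Yᵀ = Y) (hN : N * jordanOf r μ β = jordanOf r μ β * N) :
    N * Y = Y * Nᵀ := by
  set J := jordanOf r μ β
  set W := N * Y - Y * Nᵀ
  have hJW : J * W = W * Jᵀ := by
    have hNt : Jᵀ * Nᵀ = Nᵀ * Jᵀ := by rw [← transpose_mul, hN, transpose_mul]
    calc J * W = N * (J * Y) - J * Y * Nᵀ := by simp only [W, mul_sub, ← mul_assoc, hN]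
      _ = N * Y * Jᵀ - Y * (Jᵀ * Nᵀ) := by rw [hY, mul_assoc, mul_assoc]
      _ = W * Jᵀ := by rw [hNt, sub_mul, mul_assoc Y]
  have hWt : Wᵀ = W := (isBlockHankel_of_jordanOf_mul_eq hμ hJW).transpose_eq hβ
  have hWneg : Wᵀ = -W := by simp [W, transpose_mul, hYt]
  rw [← sub_eq_zero]
  ext i j
  have h : 2 * W i j = 0 := by
    rw [two_mul]; nth_rewrite 1 [← hWt]
    rw [hWneg, Matrix.neg_apply, neg_add_cancel]
  exact h2.mul_right_eq_zero.mp h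

end JordanCommutation

section Blocks

variable {L : List ℕ}

def blockStart (L : List ℕ) (v : ℕ) : ℕ := (L.take v).sum

lemma blockStart_succ {v : ℕ} (hv : v < L.length) :
    blockStart L (v + 1) = blockStart L v + L[v] := by
  rw [blockStart, blockStart, List.take_add_one, List.sum_append, List.getElem?_eq_getElem hv]
  simp

lemma blockStart_length : blockStart L L.length = L.sum := by
  simp [blockStart]

lemma blockStart_mono : Monotone (blockStart L) := by
  refine monotone_nat_of_le_succ fun v => ?_
  rcases lt_or_ge v L.length with hv | hv
  · rw [blockStart_succ hv]; omega
  · simp [blockStart, List.take_of_length_le hv, List.take_of_length_le (Nat.le_succ_of_le hv)]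

lemma mem_starts {x : ℕ} : x ∈ starts L ↔ ∃ t < L.length, blockStart L t = x := by
  simp [starts, blockStart]

lemma mem_blocksOf {q : ℕ × ℕ} :
    q ∈ blocksOf L ↔ ∃ v, ∃ hv : v < L.length, q = (blockStart L v, L[v]) := by
  have hlen : ((starts L).zip L).length = L.length := by simp [starts]
  rw [blocksOf, List.mem_iff_getElem]
  constructor
  · rintro ⟨v, hv, rfl⟩
    refine ⟨v, hlen ▸ hv, ?_⟩
    simp [starts, blockStart]
  · rintro ⟨v, hv, rfl⟩
    refine ⟨v, hlen ▸ hv, ?_⟩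
    simp [starts, blockStart]

lemma blockIdx_eq {v a : ℕ} (hv : v < L.length) (h₁ : blockStart L v ≤ a)
    (h₂ : a < blockStart L (v + 1)) : blockIdx L a = v := by
  have hfilter : ∀ t ∈ List.range L.length,
      decide (blockStart L t ≤ a) = decide (t < v + 1) := by
    intro t _
    by_cases ht : t < v + 1
    · simpa [ht] using (blockStart_mono (by omega : t ≤ v)).trans h₁
    · simpa [ht] using h₂.trans_le (blockStart_mono (by omega : v + 1 ≤ t))
  unfold blockIdx starts
  rw [List.filter_map, List.length_map]
  change ((List.range L.length).filter fun t => decide (blockStart L t ≤ a)).length - 1 = v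
  rw [List.filter_congr hfilter, ← List.Ico.zero_bot, List.Ico.filter_lt, List.Ico.length]
  omega

lemma exists_blockStart_le_lt {a : ℕ} (ha : a < L.sum) :
    ∃ v < L.length, blockStart L v ≤ a ∧ a < blockStart L (v + 1) := by
  have hlen : 0 < L.length := List.length_pos_iff.mpr (by rintro rfl; simp at ha)
  have hex : ∃ t, a < blockStart L (t + 1) :=
    ⟨L.length - 1, by rwa [Nat.sub_add_cancel hlen, blockStart_length]⟩
  classical
  refine ⟨Nat.find hex, ?_, ?_, Nat.find_spec hex⟩
  · have := Nat.find_min' hex (m := L.length - 1)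
      (by rwa [Nat.sub_add_cancel hlen, blockStart_length])
    omega
  · rcases Nat.eq_zero_or_pos (Nat.find hex) with h | h
    · rw [h]; simp [blockStart]
    · have := Nat.find_min hex (m := Nat.find hex - 1) (by omega)
      rw [Nat.sub_add_cancel h] at this
      omega

lemma blockIdx_eq_iff {v a : ℕ} (hv : v < L.length) (ha : a < L.sum) :
    blockIdx L a = v ↔ blockStart L v ≤ a ∧ a < blockStart L (v + 1) := by
  refine ⟨fun h => ?_, fun h => blockIdx_eq hv h.1 h.2⟩
  obtain ⟨w, hw, h₁, h₂⟩ := exists_blockStart_le_lt ha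
  rw [← h, blockIdx_eq hw h₁ h₂]
  exact ⟨h₁, h₂⟩

lemma blockIdx_lt_length {a : ℕ} (ha : a < L.sum) : blockIdx L a < L.length := by
  obtain ⟨w, hw, h₁, h₂⟩ := exists_blockStart_le_lt ha
  rwa [blockIdx_eq hw h₁ h₂]

lemma blockIdx_mono : Monotone (blockIdx L) := by
  intro a b hab
  unfold blockIdx
  rw [← List.countP_eq_length_filter, ← List.countP_eq_length_filter]
  exact Nat.sub_le_sub_right (List.countP_mono_left fun t _ h => by simp at h ⊢; omega) 1

lemma succ_mem_starts_iff (hpos : ∀ d ∈ L, 1 ≤ d) {a : ℕ} (ha : a + 1 < L.sum) :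
    a + 1 ∈ starts L ↔ blockIdx L a ≠ blockIdx L (a + 1) := by
  obtain ⟨v, hv, h₁, h₂⟩ := exists_blockStart_le_lt ha
  rw [blockIdx_eq hv h₁ h₂, Ne, blockIdx_eq_iff hv (by omega), mem_starts]
  constructor
  · rintro ⟨t, ht, hst⟩ ⟨h₃, -⟩
    have hlt : blockStart L t < blockStart L (t + 1) := by
      rw [blockStart_succ ht]; have := hpos _ (L.getElem_mem ht); omega
    obtain rfl : t = v := (blockIdx_eq ht hst.le (by omega)).symm.trans (blockIdx_eq hv h₁ h₂)
    omega
  · intro h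
    exact ⟨v, hv, by omega⟩

end Blocks

lemma jordanMulti_map_eq_jordanOf {K S : Type*} [CommRing K] [CommRing S] (f : K →+* S)
    {r : ℕ} {L : List ℕ} (hpos : ∀ d ∈ L, 1 ≤ d) (hsum : L.sum = r) (lam : ℕ → K) :
    (jordanMulti K r L lam).map f = jordanOf r (fun v => f (lam v)) (blockIdx L) := by
  ext i j
  simp only [map_apply, jordanMulti, jordanOf, of_apply]
  by_cases hij : (i : ℕ) = j
  · simp [hij]
  · by_cases hj : (j : ℕ) = i + 1
    · have hmem := succ_mem_starts_iff hpos (a := i) (by omega)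
      rw [if_neg hij, if_neg hij, hj]
      simp [hmem]
    · simp [hij, hj]

section HiggsIdeal

variable {R : Type*} [CommRing R] {r : ℕ}

noncomputable def quadMatrix (I : Ideal (MvPolynomial (Fin r) R)) :
    Matrix (Fin r) (Fin r) (MvPolynomial (Fin r) R ⧸ I) :=
  vecMulVec (fun i => Ideal.Quotient.mk I (X i)) fun i => Ideal.Quotient.mk I (X i)

lemma quadMatrix_transpose (I : Ideal (MvPolynomial (Fin r) R)) :
    (quadMatrix I)ᵀ = quadMatrix I :=
  transpose_vecMulVec _ _

lemma natEntry_quadMatrix (I : Ideal (MvPolynomial (Fin r) R)) (a b : ℕ) :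
    natEntry (quadMatrix I) a b = Ideal.Quotient.mk I (Zv R r a * Zv R r b) := by
  unfold natEntry Zv
  split_ifs <;> simp_all [quadMatrix, vecMulVec_apply]

lemma higgsIdeal_le_iff (M : Matrix (Fin r) (Fin r) R) (I : Ideal (MvPolynomial (Fin r) R)) :
    higgsIdeal M ≤ I ↔
      M.map (algebraMap R _) * quadMatrix I = quadMatrix I * (M.map (algebraMap R _))ᵀ := by
  set M' := M.map (algebraMap R (MvPolynomial (Fin r) R ⧸ I))
  have hgen : ∀ i j, Ideal.Quotient.mk I (∑ k, X k * (C (M j k) * X i - C (M i k) * X j)) =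
      (quadMatrix I * M'ᵀ) i j - (M' * quadMatrix I) i j := by
    intro i j
    simp only [map_sum, map_mul, map_sub, mul_apply, quadMatrix, vecMulVec_apply, transpose_apply,
      M', map_apply, ← Finset.sum_sub_distrib, ← Ideal.Quotient.mk_algebraMap,
      MvPolynomial.algebraMap_eq]
    exact Finset.sum_congr rfl fun k _ => by ring
  have hsymm : (M' * quadMatrix I)ᵀ = quadMatrix I * M'ᵀ := by
    rw [transpose_mul, quadMatrix_transpose]
  rw [higgsIdeal, Ideal.span_le]
  constructor
  · intro h
    have hlt : ∀ i j, i < j → (M' * quadMatrix I) i j = (M' * quadMatrix I) j i := by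
      intro i j hij
      have hij := h ⟨i, j, hij, rfl⟩
      rw [SetLike.mem_coe, ← Ideal.Quotient.eq_zero_iff_mem, hgen, sub_eq_zero, ← hsymm] at hij
      exact hij.symm
    rw [← hsymm]
    ext i j
    rcases lt_trichotomy i j with hij | rfl | hij
    · exact hlt i j hij
    · rfl
    · exact (hlt j i hij).symm
  · rintro h _ ⟨i, j, -, rfl⟩
    rw [SetLike.mem_coe, ← Ideal.Quotient.eq_zero_iff_mem, hgen, h, sub_self]

end HiggsIdeal

section BlockIdeals

variable {R : Type*} [CommRing R] {r : ℕ}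

noncomputable def blockIdeal (R : Type*) [CommRing R] (r : ℕ) (q : ℕ × ℕ) :
    Ideal (MvPolynomial (Fin r) R) :=
  Ideal.span { p | ∃ a : ℕ, a < r ∧ ¬ (q.1 ≤ a ∧ a < q.1 + q.2) ∧ p = Zv R r a } + Hblock R r q

lemma Zv_of_le {a : ℕ} (ha : r ≤ a) : Zv R r a = 0 :=
  dif_neg (by omega)

variable {β : ℕ → ℕ} {v : ℕ} {q : ℕ × ℕ}

lemma ite_succ_eq_of_fibre (hβ : ∀ a < r, β a = v ↔ q.1 ≤ a ∧ a < q.1 + q.2)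
    {a : ℕ} (ha : q.1 ≤ a ∧ a < q.1 + q.2) {S : Type*} [Zero S] (x : S)
    (hx : r ≤ a + 1 → x = 0) :
    (if β a = β (a + 1) then x else 0) = if a + 1 < q.1 + q.2 then x else 0 := by
  rcases lt_or_ge (a + 1) r with h | h
  · have hiff : β a = β (a + 1) ↔ a + 1 < q.1 + q.2 := by
      rw [(hβ a (by omega)).mpr ha, eq_comm, hβ (a + 1) h]
      omega
    simp only [hiff]
  · simp [hx h]

lemma isBlockHankel_quadMatrix_blockIdeal (hβ : ∀ a < r, β a = v ↔ q.1 ≤ a ∧ a < q.1 + q.2)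
    (hq : q.1 + q.2 ≤ r) : IsBlockHankel β (quadMatrix (blockIdeal R r q)) := by
  set I := blockIdeal R r q
  set y : ℕ → MvPolynomial (Fin r) R ⧸ I := fun a => Ideal.Quotient.mk I (Zv R r a)
  have hy : ∀ a b, natEntry (quadMatrix I) a b = y a * y b := fun a b => by
    rw [natEntry_quadMatrix, map_mul]
  have hyr : ∀ a, r ≤ a → y a = 0 := fun a ha => by simp [y, Zv_of_le ha]
  have hout : ∀ a, ¬ (q.1 ≤ a ∧ a < q.1 + q.2) → y a = 0 := by
    intro a ha
    rcases lt_or_ge a r with har | har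
    · exact Ideal.Quotient.eq_zero_iff_mem.mpr
        (Ideal.mem_sup_left (Ideal.subset_span ⟨a, har, ha, rfl⟩))
    · exact hyr a har
  have hbin : ∀ a b, q.1 ≤ a → a + 1 < q.1 + q.2 → q.1 ≤ b → b + 1 < q.1 + q.2 →
      y a * y (b + 1) = y b * y (a + 1) := by
    intro a b h₁ h₂ h₃ h₄
    rw [← sub_eq_zero, ← map_mul, ← map_mul, ← map_sub]
    exact Ideal.Quotient.eq_zero_iff_mem.mpr
      (Ideal.mem_sup_right (Ideal.subset_span (Or.inl ⟨a, b, h₁, h₂, h₃, h₄, rfl⟩)))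
  have hmon : ∀ a, q.1 < a → a < q.1 + q.2 → y a * y (q.1 + q.2 - 1) = 0 := by
    intro a h₁ h₂
    rw [← map_mul]
    exact Ideal.Quotient.eq_zero_iff_mem.mpr
      (Ideal.mem_sup_right (Ideal.subset_span (Or.inr ⟨a, h₁, h₂, rfl⟩)))
  have hmem : ∀ a b, β a = β b → q.1 ≤ a ∧ a < q.1 + q.2 → b < r → q.1 ≤ b ∧ b < q.1 + q.2 :=
    fun a b hab ha hb => (hβ b hb).mp (hab.symm.trans ((hβ a (by omega)).mpr ha))
  refine ⟨fun a b hab => ?_, fun a b hab => ?_⟩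
  · rw [hy]
    by_cases ha : q.1 ≤ a ∧ a < q.1 + q.2
    · by_cases hb : q.1 ≤ b ∧ b < q.1 + q.2
      · exact absurd (((hβ a (by omega)).mpr ha).trans ((hβ b (by omega)).mpr hb).symm) hab
      · rw [hout b hb, mul_zero]
    · rw [hout a ha, zero_mul]
  simp only [hy]
  by_cases ha : q.1 ≤ a ∧ a < q.1 + q.2 <;> by_cases hb : q.1 ≤ b ∧ b < q.1 + q.2
  · rw [ite_succ_eq_of_fibre hβ ha _ fun h => by rw [hyr _ h, zero_mul],
      ite_succ_eq_of_fibre hβ hb _ fun h => by rw [hyr _ h, mul_zero]]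
    split_ifs with h₁ h₂ h₂
    · rw [mul_comm]
      exact (hbin a b ha.1 h₁ hb.1 h₂).symm
    · rw [show b = q.1 + q.2 - 1 by omega, hmon (a + 1) (by omega) h₁]
    · rw [show a = q.1 + q.2 - 1 by omega, mul_comm, hmon (b + 1) (by omega) h₂]
    · rfl
  · have hbr : r ≤ b := not_lt.mp fun h => hb (hmem a b hab ha h)
    simp [hyr b hbr, hyr (b + 1) (by omega)]
  · have har : r ≤ a := not_lt.mp fun h => ha (hmem b a hab.symm hb h)
    simp [hyr a har, hyr (a + 1) (by omega)]
  · simp [hout a ha, hout b hb]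

lemma Hblock_le_of_isBlockHankel (hβ : ∀ a < r, β a = v ↔ q.1 ≤ a ∧ a < q.1 + q.2)
    (hq : q.1 + q.2 ≤ r) {I : Ideal (MvPolynomial (Fin r) R)}
    (hI : IsBlockHankel β (quadMatrix I)) : Hblock R r q ≤ I := by
  have hfib : ∀ a, q.1 ≤ a → a < q.1 + q.2 → β a = v := fun a h₁ h₂ =>
    (hβ a (by omega)).mpr ⟨h₁, h₂⟩
  rw [Hblock, Ideal.span_le]
  rintro p (⟨a, b, h₁, h₂, h₃, h₄, rfl⟩ | ⟨a, h₁, h₂, rfl⟩) <;>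
    rw [SetLike.mem_coe, ← Ideal.Quotient.eq_zero_iff_mem]
  · have h := hI.2 a b ((hfib a h₁ (by omega)).trans (hfib b h₃ (by omega)).symm)
    rw [ite_succ_eq_of_fibre hβ ⟨h₁, by omega⟩ _ (natEntry_of_le_left _ · _),
      ite_succ_eq_of_fibre hβ ⟨h₃, by omega⟩ _ (natEntry_of_le_right _ _ ·),
      if_pos h₂, if_pos h₄, natEntry_quadMatrix, natEntry_quadMatrix] at h
    rw [map_sub, ← h, sub_eq_zero, map_mul, map_mul, mul_comm]
  · have h := hI.2 (q.1 + q.2 - 1) (a - 1)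
      ((hfib _ (by omega) (by omega)).trans (hfib (a - 1) (by omega) (by omega)).symm)
    rw [ite_succ_eq_of_fibre hβ ⟨by omega, by omega⟩ _ (natEntry_of_le_left _ · _),
      ite_succ_eq_of_fibre hβ ⟨by omega, by omega⟩ _ (natEntry_of_le_right _ _ ·),
      if_neg (by omega), if_pos (by omega), Nat.sub_add_cancel (by omega),
      natEntry_quadMatrix] at h
    rw [mul_comm, ← h]

lemma span_cross_le_of_isBlockHankel {I : Ideal (MvPolynomial (Fin r) R)}
    (hI : IsBlockHankel β (quadMatrix I)) :
    Ideal.span {p | ∃ a b : Fin r, β a ≠ β b ∧ p = X a * X b} ≤ I := by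
  rw [Ideal.span_le]
  rintro _ ⟨a, b, hab, rfl⟩
  rw [SetLike.mem_coe, ← Ideal.Quotient.eq_zero_iff_mem, map_mul]
  exact (natEntry_coe _ a b).symm.trans (hI.1 a b hab)

end BlockIdeals

section Restriction

variable {σ ι R : Type*} [CommRing R] [DecidableEq ι] (β : σ → ι)

noncomputable def restrictFibre (v : ι) : MvPolynomial σ R →ₐ[R] MvPolynomial σ R :=
  aeval fun k => if β k = v then X k else 0

lemma restrictFibre_X (v : ι) (k : σ) :
    restrictFibre β v (X k : MvPolynomial σ R) = if β k = v then X k else 0 :=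
  aeval_X _ _

lemma restrictFibre_monomial (v : ι) (u : σ →₀ ℕ) (c : R) :
    restrictFibre β v (monomial u c) = if ∀ k ∈ u.support, β k = v then monomial u c else 0 := by
  rw [restrictFibre, aeval_monomial, Finsupp.prod]
  split_ifs with h
  · rw [Finset.prod_congr rfl fun k hk => by rw [if_pos (h k hk)], monomial_eq, Finsupp.prod,
      algebraMap_eq]
  · push Not at h
    obtain ⟨k, hk, hkv⟩ := h
    rw [Finset.prod_eq_zero hk (by rw [if_neg hkv, zero_pow (Finsupp.mem_support_iff.mp hk)]),
      mul_zero]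

lemma X_mul_X_dvd_monomial {k₀ k₁ : σ} {u : σ →₀ ℕ} (hk₀ : k₀ ∈ u.support)
    (hk₁ : k₁ ∈ u.support) (hne : k₀ ≠ k₁) (c : R) :
    X k₀ * X k₁ ∣ (monomial u c : MvPolynomial σ R) := by
  classical
  rw [X, X, monomial_mul, one_mul, monomial_dvd_monomial]
  refine ⟨Or.inr fun k => ?_, one_dvd c⟩
  have h₀ := Finsupp.mem_support_iff.mp hk₀
  have h₁ := Finsupp.mem_support_iff.mp hk₁
  rw [Finsupp.add_apply, Finsupp.single_apply, Finsupp.single_apply]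
  split_ifs <;> subst_vars <;> first | omega | exact absurd rfl hne

lemma sub_sum_restrictFibre_mem (T : Finset ι) (hT : ∀ k, β k ∈ T) (f : MvPolynomial σ R) :
    f - C (constantCoeff f) - ∑ v ∈ T, (restrictFibre β v f - C (constantCoeff f)) ∈
      Ideal.span {p | ∃ a b, β a ≠ β b ∧ p = X a * X b} := by
  classical
  induction f using MvPolynomial.induction_on' with
  | monomial u c =>
    by_cases hu : u = 0
    · subst hu
      simp
    have hcc : constantCoeff (monomial u c : MvPolynomial σ R) = 0 := by
      rw [constantCoeff_monomial, if_neg hu]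
    simp only [hcc, map_zero, sub_zero, restrictFibre_monomial]
    obtain ⟨k₀, hk₀⟩ := Finsupp.support_nonempty_iff.mpr hu
    by_cases hone : ∀ k ∈ u.support, β k = β k₀
    · rw [Finset.sum_eq_single_of_mem (β k₀) (hT k₀)
        fun v _ hv => if_neg fun h => hv (h k₀ hk₀).symm, if_pos hone, sub_self]
      exact zero_mem _
    push Not at hone
    obtain ⟨k₁, hk₁, hne⟩ := hone
    rw [Finset.sum_eq_zero fun v _ => if_neg fun h => hne ((h k₁ hk₁).trans (h k₀ hk₀).symm),
      sub_zero]
    obtain ⟨g, hg⟩ := X_mul_X_dvd_monomial hk₁ hk₀ (fun h => hne (h ▸ rfl)) c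
    rw [hg]
    exact Ideal.mul_mem_right _ _ (Ideal.subset_span ⟨k₁, k₀, hne, rfl⟩)
  | add p q hp hq =>
    convert add_mem hp hq using 1
    simp only [map_add, Finset.sum_sub_distrib, Finset.sum_add_distrib]
    abel

end Restriction

section Assembly

variable {R : Type*} [CommRing R] {r : ℕ} {L : List ℕ}

lemma blockIdx_eq_iff_of_sum_eq (hsum : L.sum = r) {v : ℕ} (hv : v < L.length) (a : ℕ)
    (ha : a < r) : blockIdx L a = v ↔ blockStart L v ≤ a ∧ a < blockStart L v + L[v] := by
  rw [blockIdx_eq_iff hv (hsum ▸ ha), blockStart_succ hv]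

lemma blockStart_add_le (hsum : L.sum = r) {v : ℕ} (hv : v < L.length) :
    blockStart L v + L[v] ≤ r := by
  rw [← blockStart_succ hv, ← hsum, ← blockStart_length]
  exact blockStart_mono hv

lemma isUnit_algebraMap_sub {K S : Type*} [Field K] [CommRing S] [Algebra K S] {x y : K}
    (h : x ≠ y) : IsUnit (algebraMap K S x - algebraMap K S y) := by
  rw [← map_sub]
  exact (sub_ne_zero.mpr h).isUnit.map _

lemma isUnit_sub_of_blockIdx_ne {lam : ℕ → ℂ} (hsum : L.sum = r)
    (hdist : ∀ v < L.length, ∀ w < L.length, v ≠ w → lam v ≠ lam w)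
    (S : Type*) [CommRing S] [Algebra ℂ S] (a b : ℕ) (ha : a < r) (hb : b < r)
    (hab : blockIdx L a ≠ blockIdx L b) :
    IsUnit (algebraMap ℂ S (lam (blockIdx L a)) - algebraMap ℂ S (lam (blockIdx L b))) :=
  isUnit_algebraMap_sub (hdist _ (blockIdx_lt_length (hsum ▸ ha)) _
    (blockIdx_lt_length (hsum ▸ hb)) hab)

lemma constantCoeff_Zv (a : ℕ) : constantCoeff (Zv R r a) = 0 := by
  unfold Zv
  split_ifs <;> simp

lemma constantCoeff_eq_zero_of_mem_blockIdeal {q : ℕ × ℕ} {f : MvPolynomial (Fin r) R}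
    (hf : f ∈ blockIdeal R r q) : constantCoeff f = 0 := by
  suffices blockIdeal R r q ≤ RingHom.ker constantCoeff from this hf
  refine sup_le (Ideal.span_le.mpr ?_) (Ideal.span_le.mpr ?_)
  · rintro _ ⟨a, -, -, rfl⟩
    exact constantCoeff_Zv a
  · rintro _ (⟨a, b, -, -, -, -, rfl⟩ | ⟨a, -, -, rfl⟩) <;>
      simp [RingHom.mem_ker, constantCoeff_Zv]

lemma restrictFibre_mem_Hblock {β : ℕ → ℕ} {v : ℕ} {q : ℕ × ℕ}
    (hβ : ∀ a < r, β a = v ↔ q.1 ≤ a ∧ a < q.1 + q.2) {f : MvPolynomial (Fin r) R}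
    (hf : f ∈ blockIdeal R r q) : restrictFibre (fun k : Fin r => β k) v f ∈ Hblock R r q := by
  have hZ : ∀ a, restrictFibre (fun k : Fin r => β k) v (Zv R r a) =
      if q.1 ≤ a ∧ a < q.1 + q.2 then Zv R r a else 0 := by
    intro a
    rcases lt_or_ge a r with ha | ha
    · rw [Zv, dif_pos ha, restrictFibre_X]
      simp only [hβ a ha]
    · simp [Zv_of_le ha]
  suffices blockIdeal R r q ≤ (Hblock R r q).comap (restrictFibre (fun k : Fin r => β k) v)
    from this hf
  refine sup_le (Ideal.span_le.mpr ?_) (Ideal.span_le.mpr ?_)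
  · rintro _ ⟨a, -, ha, rfl⟩
    simp [hZ, ha]
  · rintro _ (⟨a, b, h₁, h₂, h₃, h₄, rfl⟩ | ⟨a, h₁, h₂, rfl⟩)
    · simp only [SetLike.mem_coe, Ideal.mem_comap, map_sub, map_mul, hZ]
      rw [if_pos (by omega), if_pos (by omega), if_pos (by omega), if_pos (by omega)]
      exact Ideal.subset_span (Or.inl ⟨a, b, h₁, h₂, h₃, h₄, rfl⟩)
    · simp only [SetLike.mem_coe, Ideal.mem_comap, map_mul, hZ]
      rw [if_pos (by omega), if_pos (by omega)]
      exact Ideal.subset_span (Or.inr ⟨a, h₁, h₂, rfl⟩)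

variable [Algebra ℂ R] {lam : ℕ → ℂ}

theorem higgsIdeal_le_blockIdeal (hpos : ∀ d ∈ L, 1 ≤ d) (hsum : L.sum = r)
    (hdist : ∀ v < L.length, ∀ w < L.length, v ≠ w → lam v ≠ lam w)
    {N : Matrix (Fin r) (Fin r) R} (hN : Commute N ((jordanMulti ℂ r L lam).map (algebraMap ℂ R)))
    {q : ℕ × ℕ} (hq : q ∈ blocksOf L) : higgsIdeal N ≤ blockIdeal R r q := by
  obtain ⟨v, hv, rfl⟩ := mem_blocksOf.mp hq
  set S := MvPolynomial (Fin r) R ⧸ blockIdeal R r (blockStart L v, L[v])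
  have hJ : ((jordanMulti ℂ r L lam).map (algebraMap ℂ R)).map (algebraMap R S) =
      jordanOf r (fun v => algebraMap ℂ S (lam v)) (blockIdx L) := by
    rw [Matrix.map_map, ← jordanMulti_map_eq_jordanOf _ hpos hsum]
    congr 1
  have h2 : IsUnit (2 : S) := by
    simpa only [map_ofNat] using (two_ne_zero' ℂ).isUnit.map (algebraMap ℂ S)
  rw [higgsIdeal_le_iff]
  refine mul_eq_mul_transpose_of_commute (μ := fun v => algebraMap ℂ S (lam v)) h2 blockIdx_mono
    (isUnit_sub_of_blockIdx_ne hsum hdist S)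
    (isBlockHankel_quadMatrix_blockIdeal (blockIdx_eq_iff_of_sum_eq hsum hv)
      (blockStart_add_le hsum hv)).jordanOf_mul_eq
    (quadMatrix_transpose _) ?_
  rw [← hJ, ← Matrix.map_mul, ← Matrix.map_mul, hN.eq]

theorem iInf_blockIdeal_le_higgsIdeal (hpos : ∀ d ∈ L, 1 ≤ d) (hsum : L.sum = r) (hr : 0 < r)
    (hdist : ∀ v < L.length, ∀ w < L.length, v ≠ w → lam v ≠ lam w) :
    ⨅ q ∈ blocksOf L, blockIdeal R r q ≤
      higgsIdeal ((jordanMulti ℂ r L lam).map (algebraMap ℂ R)) := by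
  set I := higgsIdeal ((jordanMulti ℂ r L lam).map (algebraMap ℂ R))
  set S := MvPolynomial (Fin r) R ⧸ I
  have hI : IsBlockHankel (blockIdx L) (quadMatrix I) := by
    refine isBlockHankel_of_jordanOf_mul_eq (μ := fun v => algebraMap ℂ S (lam v))
      (isUnit_sub_of_blockIdx_ne hsum hdist S) ?_
    rw [← jordanMulti_map_eq_jordanOf (algebraMap ℂ S) hpos hsum,
      IsScalarTower.algebraMap_eq ℂ R S, RingHom.coe_comp, ← Matrix.map_map]
    exact (higgsIdeal_le_iff _ I).mp le_rfl
  intro f hf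
  have hfv : ∀ v (hv : v < L.length), f ∈ blockIdeal R r (blockStart L v, L[v]) :=
    fun v hv => by
      simp only [Submodule.mem_iInf] at hf
      exact hf _ (mem_blocksOf.mpr ⟨v, hv, rfl⟩)
  have hlen : 0 < L.length := Nat.zero_lt_of_lt (blockIdx_lt_length (a := 0) (by omega))
  have hdec := sub_sum_restrictFibre_mem (R := R) (fun k : Fin r => blockIdx L k)
    (Finset.range L.length) (fun k => Finset.mem_range.mpr (blockIdx_lt_length (hsum ▸ k.isLt))) f
  simp only [constantCoeff_eq_zero_of_mem_blockIdeal (hfv 0 hlen), map_zero, sub_zero] at hdec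
  have hres : ∑ v ∈ Finset.range L.length, restrictFibre (fun k : Fin r => blockIdx L k) v f ∈ I :=
    Ideal.sum_mem _ fun v hv => by
      have hv := Finset.mem_range.mp hv
      have hβ := blockIdx_eq_iff_of_sum_eq hsum hv
      exact Hblock_le_of_isBlockHankel hβ (blockStart_add_le hsum hv) hI
        (restrictFibre_mem_Hblock hβ (hfv v hv))
  simpa using add_mem (span_cross_le_of_isBlockHankel hI hdec) hres

end Assembly

end Higgs

/-- Theorem 4.6 (ideal-theoretic form): if the first of a family of pairwise commuting
matrices over a commutative `ℂ`-algebra `R` is a Jordan matrix with pairwise distinct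
eigenvalues (with complex entries), then `∑ₕ I_{φ⁽ʰ⁾} = I_{φ⁽¹⁾}` and this ideal
decomposes as the intersection over the blocks `A` of `(z_a : a ∉ A) + H_A`. -/
theorem stmt5 (R : Type*) [CommRing R] [Algebra ℂ R] (n r s : ℕ) (hn : 1 ≤ n) (hr : 2 ≤ r)
    (L : List ℕ) (hLlen : L.length = s) (hLpos : ∀ d ∈ L, 1 ≤ d) (hLsum : L.sum = r)
    (lam : ℕ → ℂ) (hdist : ∀ v < s, ∀ w < s, v ≠ w → lam v ≠ lam w)
    (φ : Fin n → Matrix (Fin r) (Fin r) R)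
    (hφ1 : φ ⟨0, hn⟩ = (jordanMulti ℂ r L lam).map (algebraMap ℂ R))
    (hcomm : ∀ h h', Commute (φ h) (φ h')) :
    (∑ h, higgsIdeal (φ h)) = higgsIdeal (φ ⟨0, hn⟩) ∧
    higgsIdeal (φ ⟨0, hn⟩) =
      ⨅ q ∈ blocksOf L,
        (Ideal.span { p | ∃ a : ℕ, a < r ∧ ¬ (q.1 ≤ a ∧ a < q.1 + q.2) ∧ p = Zv R r a } +
          Hblock R r q) := by
  subst hLlen
  have hP : ∀ N, Commute N ((jordanMulti ℂ r L lam).map (algebraMap ℂ R)) →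
      higgsIdeal N ≤ ⨅ q ∈ blocksOf L, Higgs.blockIdeal R r q := fun N hN =>
    le_iInf₂ fun q hq => Higgs.higgsIdeal_le_blockIdeal hLpos hLsum hdist hN hq
  have hle := Higgs.iInf_blockIdeal_le_higgsIdeal (R := R) hLpos hLsum (by omega) hdist
  refine ⟨le_antisymm ?_ ?_, ?_⟩
  · rw [Ideal.sum_eq_sup, Finset.sup_le_iff]
    intro h _
    rw [hφ1]
    exact (hP _ (hφ1 ▸ hcomm h ⟨0, hn⟩)).trans hle
  · rw [Ideal.sum_eq_sup]
    exact Finset.le_sup (f := fun h => higgsIdeal (φ h)) (Finset.mem_univ _)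
  · rw [hφ1]
    exact le_antisymm (hP _ (Commute.refl _)) hle
end

section
/- Let r ≥ 1, λ ∈ ℂ, let J = J_r(λ) ∈ Mat_{r×r}(ℂ) be the Jordan block with eigenvalue λ, let p ∈ ℂ[t], and set T = p(J). If p'(λ) ≠ 0 (where p' is the formal derivative of p), then T is similar to the single Jordan block J_r(p(λ)): there is an invertible matrix P ∈ GL_r(ℂ) with T = P · J_r(p(λ)) · P⁻¹. Equivalently, the matrix T − p(λ)·1 has rank r − 1. -/
/-!
Write `J_r(λ) = λ + N` with `N` the nilpotent shift. Taylor expansion at `λ` gives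
`p(J_r(λ)) - p(λ) = M := N g(N)` with `g(0) = p'(λ)`. Powers of a polynomial in `N` are upper
triangular Toeplitz matrices, so `M^r = 0` and the Krylov vectors `M^(r-1) e, …, M e, e` (with `e`
the last standard basis vector) form an upper triangular matrix `P` with diagonal entries powers of
`p'(λ)`. Hence `P` is invertible, and `M P = P N` because `M` shifts the Krylov vectors exactly as
`N` shifts the standard basis.
-/

open Polynomial Matrix

section JordanBlock

variable {R : Type*} [CommRing R] {r : ℕ}

lemma jordanBlock_zero_apply (i j : Fin r) :
    jordanBlock R r 0 i j = if (j : ℕ) = i + 1 then 1 else 0 := by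
  simp only [jordanBlock, of_apply]
  split_ifs <;> first | rfl | omega

lemma jordanBlock_eq_smul_one_add (lam : R) :
    jordanBlock R r lam = lam • 1 + jordanBlock R r 0 := by
  ext i j
  rw [Matrix.add_apply, Matrix.smul_apply, jordanBlock_zero_apply, one_apply]
  simp only [jordanBlock, of_apply, Fin.ext_iff]
  split_ifs <;> first | omega | simp

lemma jordanBlock_zero_pow_apply (k : ℕ) (i j : Fin r) :
    (jordanBlock R r 0 ^ k) i j = if (j : ℕ) = i + k then 1 else 0 := by
  induction k generalizing j with
  | zero => simp [one_apply, Fin.ext_iff, eq_comm]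
  | succ k ih =>
    simp only [pow_succ, mul_apply, ih, jordanBlock_zero_apply, ite_mul, one_mul, zero_mul]
    rw [Fin.sum_univ_eq_sum_range
      (fun x => if x = i + k then if (j : ℕ) = x + 1 then 1 else 0 else 0), Finset.sum_ite_eq']
    simp only [Finset.mem_range]
    have := j.isLt
    split_ifs <;> first | rfl | omega

lemma aeval_jordanBlock_zero_apply (f : R[X]) (i j : Fin r) :
    aeval (jordanBlock R r 0) f i j = if (i : ℕ) ≤ j then f.coeff (j - i) else 0 := by
  induction f using Polynomial.induction_on' with
  | add f g hf hg =>
    rw [map_add, Matrix.add_apply, hf, hg]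
    split_ifs <;> simp
  | monomial k a =>
    rw [aeval_monomial, Algebra.algebraMap_eq_smul_one, smul_mul_assoc, one_mul, Matrix.smul_apply,
      jordanBlock_zero_pow_apply, coeff_monomial]
    split_ifs <;> first | omega | simp

lemma aeval_jordanBlock (lam : R) (p : R[X]) :
    aeval (jordanBlock R r lam) p = aeval (jordanBlock R r 0) (taylor lam p) := by
  rw [taylor_apply, aeval_comp, map_add, aeval_X, aeval_C, Algebra.algebraMap_eq_smul_one,
    jordanBlock_eq_smul_one_add, add_comm]

lemma aeval_jordanBlock_zero_X_mul_pow_apply (g : R[X]) (k : ℕ) (i j : Fin r) :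
    (aeval (jordanBlock R r 0) (X * g) ^ k) i j
      = if (i : ℕ) + k ≤ j then (g ^ k).coeff (j - i - k) else 0 := by
  rw [← map_pow, mul_pow, aeval_jordanBlock_zero_apply, coeff_X_pow_mul']
  split_ifs <;> first | omega | rfl

section Shift

variable {m : Type*} {n : ℕ} (A : Matrix m (Fin (n + 1)) R) (i : m)

lemma mul_jordanBlock_zero_apply_zero : (A * jordanBlock R (n + 1) 0) i 0 = 0 := by
  simp [mul_apply, jordanBlock_zero_apply]

lemma mul_jordanBlock_zero_apply_succ (k : Fin n) :
    (A * jordanBlock R (n + 1) 0) i k.succ = A i k.castSucc := by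
  rw [mul_apply, Finset.sum_eq_single k.castSucc]
  · simp [jordanBlock_zero_apply]
  · intro l _ hl
    rw [jordanBlock_zero_apply, if_neg (fun h => hl (Fin.ext (by simp at h ⊢; omega))), mul_zero]
  · simp

end Shift

lemma rank_jordanBlock_zero {K : Type*} [Field K] (r : ℕ) : (jordanBlock K r 0).rank = r - 1 := by
  cases r with
  | zero => exact Nat.eq_zero_of_le_zero ((rank_le_card_width _).trans_eq (Fintype.card_fin 0))
  | succ n =>
    have hcol : (jordanBlock K (n + 1) 0).col = Fin.cons 0 fun k => Pi.single k.castSucc 1 := by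
      ext j i
      refine Fin.cases ?_ (fun k => ?_) j
      · simp [jordanBlock_zero_apply]
      · simp [jordanBlock_zero_apply, Pi.single_apply, Fin.ext_iff, eq_comm]
    rw [rank_eq_finrank_span_cols, hcol, Fin.range_cons, Submodule.span_insert_zero,
      finrank_span_eq_card, Fintype.card_fin, Nat.add_sub_cancel]
    exact (Pi.linearIndependent_single_one (Fin (n + 1)) K).comp _ (Fin.castSucc_injective n)

section Krylov

variable {n : ℕ}

def krylovMatrix (M : Matrix (Fin (n + 1)) (Fin (n + 1)) R) :
    Matrix (Fin (n + 1)) (Fin (n + 1)) R :=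
  of fun i j => (M ^ (n - j)) i (Fin.last n)

lemma mul_krylovMatrix {M : Matrix (Fin (n + 1)) (Fin (n + 1)) R} (hM : M ^ (n + 1) = 0) :
    M * krylovMatrix M = krylovMatrix M * jordanBlock R (n + 1) 0 := by
  have hleft (i j : Fin (n + 1)) :
      (M * krylovMatrix M) i j = (M ^ (n - j + 1)) i (Fin.last n) := by
    rw [pow_succ', mul_apply, mul_apply]
    rfl
  ext i j
  refine Fin.cases ?_ (fun k => ?_) j
  · rw [hleft, mul_jordanBlock_zero_apply_zero, Fin.val_zero, Nat.sub_zero, hM, Matrix.zero_apply]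
  · rw [hleft, mul_jordanBlock_zero_apply_succ, krylovMatrix, of_apply, Fin.val_succ,
      Fin.val_castSucc, Nat.sub_add_eq, Nat.sub_add_cancel (by omega)]

variable (g : R[X])

lemma isUpperTriangular_krylovMatrix_aeval :
    (krylovMatrix (aeval (jordanBlock R (n + 1) 0) (X * g))).IsUpperTriangular := by
  intro i j hji
  rw [krylovMatrix, of_apply, aeval_jordanBlock_zero_X_mul_pow_apply, if_neg]
  simp only [id, Fin.lt_def] at hji
  simp only [Fin.val_last]
  omega

lemma krylovMatrix_aeval_apply_self (i : Fin (n + 1)) :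
    krylovMatrix (aeval (jordanBlock R (n + 1) 0) (X * g)) i i = g.coeff 0 ^ (n - i) := by
  rw [krylovMatrix, of_apply, aeval_jordanBlock_zero_X_mul_pow_apply, Fin.val_last,
    if_pos (by omega), Nat.sub_self]
  simp only [coeff_zero_eq_eval_zero, eval_pow]

lemma isUnit_det_krylovMatrix_aeval (hg : IsUnit (g.coeff 0)) :
    IsUnit (krylovMatrix (aeval (jordanBlock R (n + 1) 0) (X * g))).det := by
  rw [det_of_isUpperTriangular (isUpperTriangular_krylovMatrix_aeval g), IsUnit.prod_univ_iff]
  intro i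
  rw [krylovMatrix_aeval_apply_self]
  exact hg.pow _

end Krylov

lemma aeval_jordanBlock_zero_X_mul_pow_self (g : R[X]) :
    aeval (jordanBlock R r 0) (X * g) ^ r = 0 := by
  ext i j
  rw [aeval_jordanBlock_zero_X_mul_pow_apply, if_neg (by omega), Matrix.zero_apply]

theorem exists_aeval_jordanBlock_zero_X_mul_eq_conj (r : ℕ) (g : R[X]) (hg : IsUnit (g.coeff 0)) :
    ∃ P : Matrix (Fin r) (Fin r) R,
      IsUnit P.det ∧ aeval (jordanBlock R r 0) (X * g) = P * jordanBlock R r 0 * P⁻¹ := by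
  cases r with
  | zero => exact ⟨1, by simp, Subsingleton.elim _ _⟩
  | succ n =>
    set P := krylovMatrix (aeval (jordanBlock R (n + 1) 0) (X * g))
    have hP : IsUnit P.det := isUnit_det_krylovMatrix_aeval g hg
    refine ⟨P, hP, ?_⟩
    rw [← mul_krylovMatrix (aeval_jordanBlock_zero_X_mul_pow_self g), mul_assoc,
      mul_nonsing_inv _ hP, mul_one]

theorem exists_aeval_jordanBlock_sub_eq_conj (r : ℕ) (lam : R) (p : R[X])
    (hp : IsUnit (p.derivative.eval lam)) :
    ∃ P : Matrix (Fin r) (Fin r) R, IsUnit P.det ∧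
      aeval (jordanBlock R r lam) p - p.eval lam • 1 = P * jordanBlock R r 0 * P⁻¹ := by
  have hsplit := X_mul_divX_add (taylor lam p)
  rw [taylor_coeff_zero] at hsplit
  obtain ⟨P, hP, hconj⟩ := exists_aeval_jordanBlock_zero_X_mul_eq_conj r (taylor lam p).divX
    (by rwa [coeff_divX, taylor_coeff_one])
  refine ⟨P, hP, ?_⟩
  rw [aeval_jordanBlock, ← hsplit, map_add, aeval_C, Algebra.algebraMap_eq_smul_one,
    add_sub_cancel_right, hconj]

end JordanBlock

theorem stmt7_general (r : ℕ) (lam : ℂ) (p : Polynomial ℂ)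
    (hp : (Polynomial.derivative p).eval lam ≠ 0) :
    (∃ P : Matrix (Fin r) (Fin r) ℂ, IsUnit P.det ∧
      Polynomial.aeval (jordanBlock ℂ r lam) p
        = P * jordanBlock ℂ r (p.eval lam) * P⁻¹) ∧
    (Polynomial.aeval (jordanBlock ℂ r lam) p
        - p.eval lam • (1 : Matrix (Fin r) (Fin r) ℂ)).rank = r - 1 := by
  obtain ⟨P, hP, hconj⟩ :=
    exists_aeval_jordanBlock_sub_eq_conj r lam p (isUnit_iff_ne_zero.mpr hp)
  refine ⟨⟨P, hP, ?_⟩, ?_⟩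
  · rw [eq_add_of_sub_eq hconj, jordanBlock_eq_smul_one_add (p.eval lam), mul_add, add_mul,
      mul_smul_comm, mul_one, smul_mul_assoc, mul_nonsing_inv _ hP, add_comm]
  · rw [hconj, rank_mul_eq_left_of_isUnit_det _ _ (isUnit_nonsing_inv_det P hP),
      rank_mul_eq_right_of_isUnit_det _ _ hP, rank_jordanBlock_zero]

/-- Lemma 4.1, second part: if `p'(λ) ≠ 0` then `p(J_r(λ))` is similar to the single
Jordan block `J_r(p(λ))`; equivalently `p(J_r(λ)) − p(λ)·1` has rank `r − 1`. -/
theorem stmt7 (r : ℕ) (hr : 1 ≤ r) (lam : ℂ) (p : Polynomial ℂ)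
    (hp : (Polynomial.derivative p).eval lam ≠ 0) :
    (∃ P : Matrix (Fin r) (Fin r) ℂ, IsUnit P.det ∧
      Polynomial.aeval (jordanBlock ℂ r lam) p
        = P * jordanBlock ℂ r (p.eval lam) * P⁻¹) ∧
    (Polynomial.aeval (jordanBlock ℂ r lam) p
        - p.eval lam • (1 : Matrix (Fin r) (Fin r) ℂ)).rank = r - 1 :=
  stmt7_general r lam p hp
end
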